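/- arXiv:2111.06386 — 7 statements merged into one kernel-verified Lean document; each statement's English description precedes it below -/
import Mathlib

section
/- For every positive integer n, every nonempty finite set K ⊂ [0,1) with n ≥ |K̃| (so that ℓ = ⌊n/|K̃|⌋ ≥ 1), every γ ∈ (1/2,1), and every positive real r satisfying r ≤ (1/n)·Σ_{k∈K} n_k·| I₂(γ ‖ ℓ/n_k) − 4/(3·n_k) − (2/n_k)·log(n_k·√ℓ) |⁺, where n_k = n − ℓ·|{ j ∈ K : j < k }|, there exists an (r,K,γ)-overlay code f : M → K̃ⁿ. -/
open Real Finset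

/-- Binary KL divergence `D₂(a‖b)` (natural log). -/
noncomputable def D2 (a b : ℝ) : ℝ :=
  a * Real.log (a / b) + (1 - a) * Real.log ((1 - a) / (1 - b))

/-- `I₂(a‖b) = b·D₂(a‖b) + (1−b)·D₂(b(1−a)/(1−b) ‖ b)`. -/
noncomputable def I2 (a b : ℝ) : ℝ :=
  b * D2 a b + (1 - b) * D2 (b * (1 - a) / (1 - b)) b

open scoped Classical in
/-- `f : M → K̃ⁿ` is an `(r,K,γ)`-overlay code (with `K̃ = K ∪ {1}` and
`ℓ = ⌊n / |K̃|⌋`): (0) all outputs lie in `K̃`; (i) `(1/n)·log|M| ≥ r`;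
(ii) each level `k ∈ K` is used in exactly `ℓ` coordinates for every message;
(iii) for distinct messages `m, m'` there is `k ∈ K` such that the coordinates where both
equal `k` number at most `γℓ`, and no coordinate has `f_i(m) = k` while `f_i(m') = j` for
some `j ∈ K` with `j < k`. -/
def IsOverlayCode (n : ℕ) (K : Finset ℝ) (r γ : ℝ) {M : Type} [Fintype M]
    (f : M → Fin n → ℝ) : Prop :=
  (∀ m i, f m i ∈ insert (1 : ℝ) K) ∧
  r ≤ Real.log (Fintype.card M) / n ∧
  (∀ m : M, ∀ k ∈ K,
    (Finset.univ.filter (fun i => f m i = k)).card = n / (insert (1 : ℝ) K).card) ∧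
  (∀ m m' : M, m ≠ m' → ∃ k ∈ K,
    ((Finset.univ.filter (fun i => f m i = k ∧ f m' i = k)).card : ℝ)
      ≤ γ * (n / (insert (1 : ℝ) K).card : ℕ) ∧
    ∀ j ∈ K, j < k →
      (Finset.univ.filter (fun i => f m i = k ∧ f m' i = j)).card = 0)

namespace Overlay

lemma nmul_div (n t : ℕ) (hn : (0:ℝ) < n) : (n:ℝ) * ((t:ℝ)/n) = t := by field_simp

lemma choose_le_exp_binEntropy (n t : ℕ) (h : t ≤ n) :
    (n.choose t : ℝ) ≤ Real.exp (n * Real.binEntropy (t / n)) := by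
  rcases Nat.eq_zero_or_pos n with rfl | hn
  · interval_cases t; simp
  rcases Nat.eq_zero_or_pos t with rfl | ht
  · simp
  rcases eq_or_lt_of_le h with rfl | hlt
  · rw [div_self (by positivity)]; simp
  have hn' : (0:ℝ) < n := by positivity
  set p : ℝ := (t:ℝ)/n with hp
  have hp0 : 0 < p := by positivity
  have hp1 : p < 1 := by rw [hp, div_lt_one hn']; exact_mod_cast hlt
  have hq0 : 0 < 1 - p := by linarith
  have key : (n.choose t : ℝ) * (p^t * (1-p)^(n-t)) ≤ 1 := by
    have hb : ((p + (1-p))^n : ℝ) = ∑ k ∈ Finset.range (n+1), p^k * (1-p)^(n-k) * n.choose k :=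
      add_pow p (1-p) n
    have h1 : ((p + (1-p))^n : ℝ) = 1 := by norm_num
    have hmem : t ∈ Finset.range (n+1) := by simp [Nat.lt_succ_of_le h]
    have hle : p^t * (1-p)^(n-t) * n.choose t ≤ ∑ k ∈ Finset.range (n+1), p^k * (1-p)^(n-k) * n.choose k := by
      apply Finset.single_le_sum (f := fun k => p^k * (1-p)^(n-k) * (n.choose k : ℝ)) _ hmem
      intro k _; positivity
    rw [← hb, h1] at hle
    linarith [hle]
  have hexp : Real.exp ((n:ℝ) * Real.binEntropy p) = (p⁻¹)^t * ((1-p)⁻¹)^(n-t) := by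
    rw [Real.binEntropy]
    have : (n:ℝ) * (p * Real.log p⁻¹ + (1 - p) * Real.log (1 - p)⁻¹)
        = t * Real.log p⁻¹ + (n - t : ℕ) * Real.log (1-p)⁻¹ := by
      have h2 : (n:ℝ) * p = t := nmul_div n t hn'
      have h3 : ((n - t : ℕ) : ℝ) = n - t := by
        rw [Nat.cast_sub h]
      rw [h3]; linear_combination (Real.log p⁻¹ - Real.log (1-p)⁻¹) * h2
    rw [this, Real.exp_add, Real.exp_nat_mul, Real.exp_nat_mul,
      Real.exp_log (by positivity), Real.exp_log (by positivity)]
  rw [hexp]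
  have hpos : (0:ℝ) < p^t * (1-p)^(n-t) := by positivity
  rw [← mul_le_mul_iff_of_pos_right hpos]
  calc (n.choose t : ℝ) * (p^t * (1-p)^(n-t)) ≤ 1 := key
    _ ≤ (p⁻¹)^t * ((1-p)⁻¹)^(n-t) * (p^t * (1-p)^(n-t)) := by
        rw [inv_pow, inv_pow]; field_simp; exact le_rfl


noncomputable def T (n t k : ℕ) : ℝ :=
  (n.choose k : ℝ) * ((t:ℝ)/n)^k * (1 - (t:ℝ)/n)^(n-k)

lemma choose_cast_id (n k : ℕ) (hkn : k ≤ n) :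
    ((n.choose (k+1)) : ℝ) * ((k:ℝ)+1) = (n.choose k : ℝ) * ((n:ℝ) - k) := by
  have h := Nat.choose_succ_right_eq n k
  calc ((n.choose (k+1)) : ℝ) * ((k:ℝ)+1) = ((n.choose (k+1) * (k+1) : ℕ) : ℝ) := by push_cast; ring
    _ = ((n.choose k * (n-k) : ℕ) : ℝ) := by exact_mod_cast h
    _ = (n.choose k : ℝ) * ((n:ℝ) - k) := by push_cast [Nat.cast_sub hkn]; ring

lemma step_up (n t : ℕ) (h0 : 0 < t) (hlt : t < n) (k : ℕ) (hk : t ≤ k) (hkn : k < n) :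
    T n t (k+1) ≤ T n t k := by
  have hn' : (0:ℝ) < n := by exact_mod_cast (show 0 < n by omega)
  have ht0 : (0:ℝ) < t := by exact_mod_cast h0
  set p : ℝ := (t:ℝ)/n with hp
  have hp0 : 0 < p := by positivity
  have hp1 : p < 1 := by rw [hp, div_lt_one hn']; exact_mod_cast hlt
  have hq0 : 0 < 1 - p := by linarith
  have hch := choose_cast_id n k hkn.le
  have hkey : ((n:ℝ) - k) * p ≤ ((k:ℝ)+1) * (1 - p) := by
    have ht' : (t:ℝ) < n := by exact_mod_cast hlt
    have htk : (t:ℝ) ≤ k := by exact_mod_cast hk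
    have hkn' : (k:ℝ) < n := by exact_mod_cast hkn
    have e1 : 1 - p = ((n:ℝ) - t)/n := by rw [hp]; field_simp
    have h : ((n:ℝ) - k) * t ≤ ((k:ℝ)+1) * ((n:ℝ) - t) := by nlinarith
    rw [e1, hp]
    calc ((n:ℝ) - k) * ((t:ℝ)/n) = (((n:ℝ) - k) * t) / n := by ring
      _ ≤ (((k:ℝ)+1) * ((n:ℝ) - t)) / n := by gcongr
      _ = ((k:ℝ)+1) * (((n:ℝ) - t)/n) := by ring
  have h2 : (n.choose (k+1):ℝ) * p ≤ (n.choose k : ℝ) * (1-p) := by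
    have hkpos : (0:ℝ) < (k:ℝ) + 1 := by positivity
    rw [← mul_le_mul_iff_of_pos_right hkpos]
    have hC : (0:ℝ) ≤ (n.choose k : ℝ) := by positivity
    calc (n.choose (k+1):ℝ) * p * ((k:ℝ)+1) = (n.choose (k+1):ℝ) * ((k:ℝ)+1) * p := by ring
      _ = (n.choose k : ℝ) * ((n:ℝ) - k) * p := by rw [hch]
      _ = (n.choose k : ℝ) * (((n:ℝ) - k) * p) := by ring
      _ ≤ (n.choose k : ℝ) * (((k:ℝ)+1) * (1-p)) := mul_le_mul_of_nonneg_left hkey hC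
      _ = (n.choose k : ℝ) * (1-p) * ((k:ℝ)+1) := by ring
  have hqpow : (1-p)^(n-k) = (1-p)^(n-(k+1)) * (1-p) := by
    rw [← pow_succ]; congr 1; omega
  have hppow : p^(k+1) = p^k * p := pow_succ p k
  unfold T
  rw [hqpow, hppow]
  calc (n.choose (k+1):ℝ) * (p^k * p) * (1-p)^(n-(k+1))
      = ((n.choose (k+1):ℝ) * p) * (p^k * (1-p)^(n-(k+1))) := by ring
    _ ≤ ((n.choose k:ℝ) * (1-p)) * (p^k * (1-p)^(n-(k+1))) := by
        apply mul_le_mul_of_nonneg_right h2; positivity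
    _ = (n.choose k:ℝ) * p^k * ((1-p)^(n-(k+1)) * (1-p)) := by ring

lemma step_down (n t : ℕ) (h0 : 0 < t) (hlt : t < n) (k : ℕ) (hk : k < t) :
    T n t k ≤ T n t (k+1) := by
  have hn' : (0:ℝ) < n := by exact_mod_cast (show 0 < n by omega)
  have ht0 : (0:ℝ) < t := by exact_mod_cast h0
  set p : ℝ := (t:ℝ)/n with hp
  have hp0 : 0 < p := by positivity
  have hp1 : p < 1 := by rw [hp, div_lt_one hn']; exact_mod_cast hlt
  have hq0 : 0 < 1 - p := by linarith
  have hkn : k < n := lt_trans hk hlt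
  have hch := choose_cast_id n k hkn.le
  have hkey : ((k:ℝ)+1) * (1 - p) ≤ ((n:ℝ) - k) * p := by
    have ht' : (t:ℝ) < n := by exact_mod_cast hlt
    have hk' : (k:ℝ) + 1 ≤ t := by exact_mod_cast hk
    have hkn' : (k:ℝ) < n := by exact_mod_cast hkn
    have h : ((k:ℝ)+1) * ((n:ℝ) - t) ≤ ((n:ℝ) - k) * t := by nlinarith
    have e1 : 1 - p = ((n:ℝ) - t)/n := by rw [hp]; field_simp
    rw [e1, hp]
    calc ((k:ℝ)+1) * (((n:ℝ) - t)/n) = (((k:ℝ)+1) * ((n:ℝ) - t)) / n := by ring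
      _ ≤ (((n:ℝ) - k) * t) / n := by gcongr
      _ = ((n:ℝ) - k) * ((t:ℝ)/n) := by ring
  have h2 : (n.choose k : ℝ) * (1-p) ≤ (n.choose (k+1):ℝ) * p := by
    have hkpos : (0:ℝ) < (k:ℝ) + 1 := by positivity
    rw [← mul_le_mul_iff_of_pos_right hkpos]
    have hC : (0:ℝ) ≤ (n.choose k : ℝ) := by positivity
    calc (n.choose k:ℝ) * (1-p) * ((k:ℝ)+1) = (n.choose k : ℝ) * (((k:ℝ)+1) * (1-p)) := by ring
      _ ≤ (n.choose k : ℝ) * (((n:ℝ) - k) * p) := mul_le_mul_of_nonneg_left hkey hC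
      _ = (n.choose k : ℝ) * ((n:ℝ) - k) * p := by ring
      _ = (n.choose (k+1):ℝ) * ((k:ℝ)+1) * p := by rw [hch]
      _ = (n.choose (k+1):ℝ) * p * ((k:ℝ)+1) := by ring
  have hqpow : (1-p)^(n-k) = (1-p)^(n-(k+1)) * (1-p) := by
    rw [← pow_succ]; congr 1; omega
  have hppow : p^(k+1) = p^k * p := pow_succ p k
  unfold T
  rw [hqpow, hppow]
  calc (n.choose k:ℝ) * p^k * ((1-p)^(n-(k+1)) * (1-p))
      = ((n.choose k:ℝ) * (1-p)) * (p^k * (1-p)^(n-(k+1))) := by ring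
    _ ≤ ((n.choose (k+1):ℝ) * p) * (p^k * (1-p)^(n-(k+1))) := by
        apply mul_le_mul_of_nonneg_right h2; positivity
    _ = (n.choose (k+1):ℝ) * (p^k * p) * (1-p)^(n-(k+1)) := by ring

lemma T_le_center (n t : ℕ) (h0 : 0 < t) (hlt : t < n) : ∀ k, k ≤ n → T n t k ≤ T n t t := by
  have up : ∀ k, t ≤ k → k ≤ n → T n t k ≤ T n t t := by
    intro k hk
    induction k, hk using Nat.le_induction with
    | base => intro _; exact le_refl _
    | succ k hk ih =>
      intro hk1
      exact le_trans (step_up n t h0 hlt k hk (by omega)) (ih (by omega))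
  have down : ∀ d k, k + d = t → T n t k ≤ T n t t := by
    intro d
    induction d with
    | zero => intro k hk; rw [Nat.add_zero] at hk; subst hk; exact le_refl _
    | succ d ih =>
      intro k hk
      exact le_trans (step_down n t h0 hlt k (by omega)) (ih (k+1) (by omega))
  intro k hk
  rcases le_or_gt t k with h | h
  · exact up k h hk
  · exact down (t - k) k (by omega)

lemma exp_nH (n t : ℕ) (ht : 0 < t) (hlt : t < n) :
    Real.exp (n * Real.binEntropy ((t:ℝ)/n)) = (((t:ℝ)/n)⁻¹)^t * ((1 - (t:ℝ)/n)⁻¹)^(n-t) := by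
  have hn' : (0:ℝ) < n := by exact_mod_cast (show 0 < n by omega)
  set p : ℝ := (t:ℝ)/n with hp
  have ht0 : (0:ℝ) < t := by exact_mod_cast ht
  have hp0 : 0 < p := by positivity
  have hp1 : p < 1 := by rw [hp, div_lt_one hn']; exact_mod_cast hlt
  have hq0 : 0 < 1 - p := by linarith
  rw [Real.binEntropy]
  have h2 : (n:ℝ) * p = t := by rw [hp]; field_simp
  have h3 : ((n - t : ℕ) : ℝ) = (n:ℝ) - t := by rw [Nat.cast_sub hlt.le]
  have key : (n:ℝ) * (p * Real.log p⁻¹ + (1 - p) * Real.log (1 - p)⁻¹)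
      = (t:ℝ) * Real.log p⁻¹ + ((n - t : ℕ):ℝ) * Real.log (1-p)⁻¹ := by
    rw [h3]; linear_combination (Real.log p⁻¹ - Real.log (1-p)⁻¹) * h2
  rw [key, Real.exp_add, Real.exp_nat_mul, Real.exp_nat_mul,
    Real.exp_log (by positivity), Real.exp_log (by positivity)]

lemma exp_le_choose (n t : ℕ) (h : t ≤ n) :
    Real.exp (n * Real.binEntropy ((t:ℝ) / n)) ≤ ((n:ℝ)+1) * n.choose t := by
  rcases Nat.eq_zero_or_pos n with rfl | hn
  · interval_cases t; simp
  rcases Nat.eq_zero_or_pos t with rfl | ht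
  · simp
  rcases eq_or_lt_of_le h with rfl | hlt
  · rw [div_self (by positivity)]
    simp
  have hn' : (0:ℝ) < n := by exact_mod_cast hn
  set p : ℝ := (t:ℝ)/n with hp
  have ht0 : (0:ℝ) < t := by exact_mod_cast ht
  have hp0 : 0 < p := by positivity
  have hp1 : p < 1 := by rw [hp, div_lt_one hn']; exact_mod_cast hlt
  have hq0 : 0 < 1 - p := by linarith
  have hsum : (1:ℝ) = ∑ k ∈ Finset.range (n+1), p^k * (1-p)^(n-k) * (n.choose k : ℝ) := by
    rw [← add_pow]; norm_num
  have hterm : ∀ k ∈ Finset.range (n+1), p^k * (1-p)^(n-k) * (n.choose k : ℝ) ≤ T n t t := by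
    intro k hk
    have : p^k * (1-p)^(n-k) * (n.choose k : ℝ) = T n t k := by unfold T; rw [hp]; ring
    rw [this]
    exact T_le_center n t ht hlt k (by simp at hk; omega)
  have hone : (1:ℝ) ≤ ((n:ℝ)+1) * T n t t := by
    calc (1:ℝ) = ∑ k ∈ Finset.range (n+1), p^k * (1-p)^(n-k) * (n.choose k : ℝ) := hsum
      _ ≤ (Finset.range (n+1)).card • T n t t := Finset.sum_le_card_nsmul _ _ _ hterm
      _ = ((n:ℝ)+1) * T n t t := by rw [Finset.card_range, nsmul_eq_mul]; push_cast; ring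
  have hE := exp_nH n t ht hlt
  rw [hE]
  have hTpos : T n t t = (n.choose t : ℝ) * (p^t * (1-p)^(n-t)) := by unfold T; rw [hp]; ring
  rw [hTpos] at hone
  have hppos : (0:ℝ) < p^t * (1-p)^(n-t) := by positivity
  calc (p⁻¹)^t * ((1-p)⁻¹)^(n-t)
      = ((p⁻¹)^t * ((1-p)⁻¹)^(n-t)) * 1 := by ring
    _ ≤ ((p⁻¹)^t * ((1-p)⁻¹)^(n-t)) * (((n:ℝ)+1) * ((n.choose t : ℝ) * (p^t * (1-p)^(n-t)))) := by
        apply mul_le_mul_of_nonneg_left hone; positivity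
    _ = ((n:ℝ)+1) * (n.choose t : ℝ) * ((p^t * p⁻¹^t) * ((1-p)^(n-t) * (1-p)⁻¹^(n-t))) := by ring
    _ = ((n:ℝ)+1) * n.choose t := by
        rw [← mul_pow, ← mul_pow, mul_inv_cancel₀ (ne_of_gt hp0), mul_inv_cancel₀ (ne_of_gt hq0)]
        simp

lemma I2_eq (γ b : ℝ) (hγ0 : 0 < γ) (hγ1 : γ < 1) (hb0 : 0 < b) (hb2 : b ≤ 1/2) :
    I2 γ b = Real.binEntropy b - b * Real.binEntropy γ
      - (1-b) * Real.binEntropy (b*(1-γ)/(1-b)) := by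
  have hb1 : b < 1 := by linarith
  have h1b : 0 < 1 - b := by linarith
  set c : ℝ := b*(1-γ)/(1-b) with hcdef
  have hc : (1-b) * c = b * (1-γ) := by rw [hcdef]; field_simp
  have hc0 : 0 < c := by
    rw [hcdef]; apply div_pos; nlinarith; linarith
  have hc1 : c < 1 := by
    have : b * (1-γ) < 1 - b := by nlinarith
    rw [hcdef]; rw [div_lt_one h1b]; exact this
  unfold I2 D2
  rw [← hcdef]
  rw [Real.log_div (ne_of_gt hγ0) (ne_of_gt hb0),
      Real.log_div (ne_of_gt (by linarith : (0:ℝ) < 1 - γ)) (ne_of_gt h1b),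
      Real.log_div (ne_of_gt hc0) (ne_of_gt hb0),
      Real.log_div (ne_of_gt (by linarith : (0:ℝ) < 1 - c)) (ne_of_gt h1b)]
  rw [Real.binEntropy, Real.binEntropy, Real.binEntropy, Real.log_inv, Real.log_inv,
      Real.log_inv, Real.log_inv, Real.log_inv, Real.log_inv]
  linear_combination (Real.log (1-b) - Real.log b) * hc

lemma g_mono (γ a b l m' : ℝ) (hγ : 1/2 < γ) (hga : γ ≤ a) (ha1 : a ≤ 1)
    (hb0 : 0 < b) (hb : b ≤ 1/2) (hl : 0 ≤ l) (hm : 0 ≤ m') :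
    l * Real.binEntropy a + m' * Real.binEntropy (b*(1-a)/(1-b))
      ≤ l * Real.binEntropy γ + m' * Real.binEntropy (b*(1-γ)/(1-b)) := by
  have h1b : 0 < 1 - b := by linarith
  have hH1 : Real.binEntropy a ≤ Real.binEntropy γ := by
    rcases eq_or_lt_of_le hga with rfl | h
    · exact le_refl _
    · exact le_of_lt (Real.binEntropy_strictAntiOn
        (by constructor <;> [linarith; linarith])
        (by constructor <;> [linarith; linarith]) h)
  have hca : b*(1-a)/(1-b) ≤ b*(1-γ)/(1-b) := by
    gcongr

  have hcγb : b*(1-γ)/(1-b) ≤ b := by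
    rw [div_le_iff₀ h1b]; nlinarith
  have hca0 : 0 ≤ b*(1-a)/(1-b) := by
    apply div_nonneg; nlinarith; linarith
  have hH2 : Real.binEntropy (b*(1-a)/(1-b)) ≤ Real.binEntropy (b*(1-γ)/(1-b)) := by
    rcases eq_or_lt_of_le hca with h | h
    · rw [h]
    · exact le_of_lt (Real.binEntropy_strictMonoOn
        (by constructor <;> [exact hca0; linarith [hca, hcγb]])
        (by constructor <;> [(apply div_nonneg; nlinarith; linarith); linarith [hcγb]]) h)
  have := mul_le_mul_of_nonneg_left hH1 hl
  have := mul_le_mul_of_nonneg_left hH2 hm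
  linarith



lemma count_inter_card_le {ι : Type*} [DecidableEq ι] (A S : Finset ι) (l u : ℕ)
    (hS : S ⊆ A) (hScard : S.card = l) (hu : u ≤ l) :
    ((A.powersetCard l).filter (fun T => (S ∩ T).card = u)).card
      ≤ l.choose u * (A.card - l).choose (l - u) := by
  have hmain : ((A.powersetCard l).filter (fun T => (S ∩ T).card = u)).card ≤
      ((S.powersetCard u) ×ˢ ((A \ S).powersetCard (l - u))).card := by
    apply Finset.card_le_card_of_injOn (fun T => (S ∩ T, T \ S))
    · intro T hT
      simp only [Finset.mem_coe, Finset.mem_filter, Finset.mem_powersetCard] at hT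
      obtain ⟨⟨hTA, hTcard⟩, hint⟩ := hT
      simp only [Finset.mem_coe, Finset.mem_product, Finset.mem_powersetCard]
      refine ⟨⟨Finset.inter_subset_left, hint⟩, ?_, ?_⟩
      · intro x hx
        simp only [Finset.mem_sdiff] at hx ⊢
        exact ⟨hTA hx.1, hx.2⟩
      · have h1 : (T ∩ S).card + (T \ S).card = T.card := Finset.card_inter_add_card_sdiff T S
        rw [Finset.inter_comm] at h1
        omega
    · intro T1 h1 T2 h2 heq
      simp only [Prod.mk.injEq] at heq
      have r1 : S ∩ T1 ∪ T1 \ S = T1 := by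
        ext x; simp only [Finset.mem_union, Finset.mem_inter, Finset.mem_sdiff]; tauto
      have r2 : S ∩ T2 ∪ T2 \ S = T2 := by
        ext x; simp only [Finset.mem_union, Finset.mem_inter, Finset.mem_sdiff]; tauto
      rw [← r1, ← r2, heq.1, heq.2]
  calc _ ≤ _ := hmain
    _ = l.choose u * (A.card - l).choose (l - u) := by
        rw [Finset.card_product, Finset.card_powersetCard, Finset.card_powersetCard,
          Finset.card_sdiff_of_subset hS, hScard]


section CodeExists
open scoped Classical
set_option maxHeartbeats 1000000

lemma code_exists {ι : Type*} [DecidableEq ι] (A : Finset ι) (m l : ℕ) (hm : A.card = m)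
    (hl : 1 ≤ l) (hml : 2*l ≤ m) (γ : ℝ) (hγ1 : 1/2 < γ) (hγ2 : γ < 1) :
    ∃ C : Finset (Finset ι), C.Nonempty ∧ (∀ S ∈ C, S ⊆ A ∧ S.card = l) ∧
      (∀ S ∈ C, ∀ T ∈ C, S ≠ T → ((S ∩ T).card : ℝ) ≤ γ * l) ∧
      Real.exp ((m:ℝ) * max (I2 γ ((l:ℝ)/m) - 4/(3*(m:ℝ))
        - (2/(m:ℝ)) * Real.log ((m:ℝ) * Real.sqrt l)) 0) ≤ C.card := by
  have hm2 : 2 ≤ m := by omega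
  have hlm : l < m := by omega
  have hm0 : (0:ℝ) < m := by exact_mod_cast (show 0 < m by omega)
  have hl0 : (0:ℝ) < l := by exact_mod_cast hl
  set b : ℝ := (l:ℝ)/m with hbdef
  have hb0 : 0 < b := by positivity
  have hb2 : b ≤ 1/2 := by
    rw [hbdef, div_le_iff₀ hm0]
    have : (2:ℝ)*l ≤ m := by exact_mod_cast hml
    linarith
  have hb1 : b < 1 := by linarith
  have h1b : 0 < 1 - b := by linarith
  -- the set of candidate codewords
  set P : Finset (Finset ι) := A.powersetCard l with hPdef
  have hPcard : P.card = m.choose l := by rw [hPdef, Finset.card_powersetCard, hm]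
  have hPne : P.Nonempty := Finset.powersetCard_nonempty.2 (by omega)
  -- maximal good family
  set Good : Finset (Finset ι) → Prop :=
    fun C => ∀ S ∈ C, ∀ T ∈ C, S ≠ T → ((S ∩ T).card : ℝ) ≤ γ * l with hGood
  set 𝒢 : Finset (Finset (Finset ι)) := P.powerset.filter Good with h𝒢
  have h𝒢ne : 𝒢.Nonempty := by
    refine ⟨∅, ?_⟩
    rw [h𝒢, Finset.mem_filter]
    exact ⟨Finset.empty_mem_powerset P, by intro S hS; simp at hS⟩
  obtain ⟨C, hC𝒢, hCmax⟩ := Finset.exists_max_image 𝒢 Finset.card h𝒢ne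
  rw [h𝒢, Finset.mem_filter, Finset.mem_powerset] at hC𝒢
  obtain ⟨hCsub, hCgood⟩ := hC𝒢
  have hCmem : ∀ S ∈ C, S ⊆ A ∧ S.card = l := by
    intro S hS
    have := hCsub hS
    rw [hPdef, Finset.mem_powersetCard] at this
    exact this
  -- covering property
  have cover : ∀ T ∈ P, ∃ S ∈ C, γ * l < ((S ∩ T).card : ℝ) := by
    intro T hT
    by_contra hcon
    push_neg at hcon
    have hTC : T ∉ C := by
      intro hTC
      have := hcon T hTC
      rw [Finset.inter_self] at this
      have hTcard : T.card = l := by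
        have h := hCsub hTC
        rw [hPdef, Finset.mem_powersetCard] at h
        exact h.2
      rw [hTcard] at this
      nlinarith
    have hC' : insert T C ∈ 𝒢 := by
      rw [h𝒢, Finset.mem_filter, Finset.mem_powerset]
      constructor
      · intro X hX
        rcases Finset.mem_insert.1 hX with rfl | hX
        · exact hT
        · exact hCsub hX
      · intro S hS T' hT' hne
        rcases Finset.mem_insert.1 hS with hS1 | hS2
        · rcases Finset.mem_insert.1 hT' with hT1 | hT2
          · exact absurd (hS1.trans hT1.symm) hne
          · subst hS1
            rw [Finset.inter_comm]
            exact hcon T' hT2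
        · rcases Finset.mem_insert.1 hT' with hT1 | hT2
          · subst hT1
            exact hcon S hS2
          · exact hCgood S hS2 T' hT2 hne
    have := hCmax _ hC'
    rw [Finset.card_insert_of_notMem hTC] at this
    omega
  have hCne : C.Nonempty := by
    obtain ⟨T, hT⟩ := hPne
    obtain ⟨S, hS, _⟩ := cover T hT
    exact ⟨S, hS⟩
  -- counting
  set g : ℝ := (l:ℝ) * Real.binEntropy γ + ((m:ℝ) - l) * Real.binEntropy (b*(1-γ)/(1-b)) with hgdef
  have Bbound : ∀ S ∈ C, ((P.filter (fun T => γ * l < ((S ∩ T).card : ℝ))).card : ℝ)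
      ≤ (l:ℝ) * Real.exp g := by
    intro S hS
    obtain ⟨hSA, hScard⟩ := hCmem S hS
    set u0 : ℕ := Nat.floor (γ * l) + 1 with hu0def
    have hγl0 : 0 ≤ γ * l := by positivity
    have hu0γ : γ * l < u0 := by
      rw [hu0def]; push_cast; exact Nat.lt_floor_add_one _
    have hu0l : u0 ≤ l := by
      rw [hu0def]
      have : Nat.floor (γ * l) < l := by
        rw [Nat.floor_lt hγl0]
        have : γ * l < 1 * l := by apply mul_lt_mul_of_pos_right hγ2 hl0
        simpa using this
      omega
    have hsub : P.filter (fun T => γ * l < ((S ∩ T).card : ℝ)) ⊆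
        (Finset.Icc u0 l).biUnion (fun u => P.filter (fun T => (S ∩ T).card = u)) := by
      intro T hT
      rw [Finset.mem_filter] at hT
      obtain ⟨hTP, hTγ⟩ := hT
      refine Finset.mem_biUnion.2 ⟨(S ∩ T).card, ?_, ?_⟩
      · rw [Finset.mem_Icc]
        constructor
        · rw [hu0def]
          have : Nat.floor (γ * l) < (S ∩ T).card := by
            rw [Nat.floor_lt hγl0]
            exact hTγ
          omega
        · calc (S ∩ T).card ≤ S.card := Finset.card_le_card Finset.inter_subset_left
            _ = l := hScard
      · rw [Finset.mem_filter]; exact ⟨hTP, rfl⟩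
    have hterm : ∀ u ∈ Finset.Icc u0 l,
        ((P.filter (fun T => (S ∩ T).card = u)).card : ℝ) ≤ Real.exp g := by
      intro u hu
      rw [Finset.mem_Icc] at hu
      obtain ⟨huu0, hul⟩ := hu
      have hcount := count_inter_card_le A S l u hSA hScard hul
      rw [hm] at hcount
      have hc1 : ((l.choose u : ℕ) : ℝ) ≤ Real.exp (l * Real.binEntropy ((u:ℝ)/l)) :=
        choose_le_exp_binEntropy l u hul
      have hc2 : (((m-l).choose (l-u) : ℕ) : ℝ)
          ≤ Real.exp ((m-l : ℕ) * Real.binEntropy (((l-u : ℕ):ℝ)/((m-l : ℕ):ℝ))) :=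
        choose_le_exp_binEntropy (m-l) (l-u) (by omega)
      set a : ℝ := (u:ℝ)/l with hadef
      have hγa : γ ≤ a := by
        rw [hadef, le_div_iff₀ hl0]
        have : (u0 : ℝ) ≤ u := by exact_mod_cast huu0
        linarith
      have ha1 : a ≤ 1 := by
        rw [hadef, div_le_one hl0]; exact_mod_cast hul
      have hml' : ((m-l : ℕ):ℝ) = (m:ℝ) - l := by
        rw [Nat.cast_sub hlm.le]
      have hlu' : ((l-u : ℕ):ℝ) = (l:ℝ) - u := by
        rw [Nat.cast_sub hul]
      have hceq : ((l-u : ℕ):ℝ)/((m-l : ℕ):ℝ) = b*(1-a)/(1-b) := by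
        rw [hml', hlu', hadef, hbdef]
        have hml0 : (m:ℝ) - l > 0 := by
          have : (l:ℝ) < m := by exact_mod_cast hlm
          linarith
        field_simp
      calc ((P.filter (fun T => (S ∩ T).card = u)).card : ℝ)
          ≤ ((l.choose u * (m-l).choose (l-u) : ℕ) : ℝ) := by exact_mod_cast hcount
        _ = ((l.choose u : ℕ):ℝ) * (((m-l).choose (l-u) : ℕ):ℝ) := by push_cast; ring
        _ ≤ Real.exp (l * Real.binEntropy a) *
            Real.exp (((m-l:ℕ):ℝ) * Real.binEntropy (b*(1-a)/(1-b))) := by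
            apply mul_le_mul hc1 _ (by positivity) (by positivity)
            rw [← hceq]; exact hc2
        _ = Real.exp ((l:ℝ) * Real.binEntropy a + ((m:ℝ)-l) * Real.binEntropy (b*(1-a)/(1-b))) := by
            rw [← Real.exp_add, hml']
        _ ≤ Real.exp g := by
            rw [hgdef]
            apply Real.exp_le_exp.2
            apply g_mono γ a b (l:ℝ) ((m:ℝ)-l) hγ1 hγa ha1 hb0 hb2 (by positivity)
            have : (l:ℝ) < m := by exact_mod_cast hlm
            linarith
    calc ((P.filter (fun T => γ * l < ((S ∩ T).card : ℝ))).card : ℝ)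
        ≤ (((Finset.Icc u0 l).biUnion (fun u => P.filter (fun T => (S ∩ T).card = u))).card : ℝ) := by
          exact_mod_cast Finset.card_le_card hsub
      _ ≤ ∑ u ∈ Finset.Icc u0 l, ((P.filter (fun T => (S ∩ T).card = u)).card : ℝ) := by
          exact_mod_cast Finset.card_biUnion_le
      _ ≤ ∑ u ∈ Finset.Icc u0 l, Real.exp g := Finset.sum_le_sum hterm
      _ = ((Finset.Icc u0 l).card : ℝ) * Real.exp g := by rw [Finset.sum_const, nsmul_eq_mul]
      _ ≤ (l:ℝ) * Real.exp g := by
          apply mul_le_mul_of_nonneg_right _ (le_of_lt (Real.exp_pos _))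
          rw [Nat.card_Icc]
          have : l + 1 - u0 ≤ l := by omega
          exact_mod_cast this
  -- main chain
  have hchain : (m.choose l : ℝ) ≤ C.card * ((l:ℝ) * Real.exp g) := by
    have hPsub : P ⊆ C.biUnion (fun S => P.filter (fun T => γ * l < ((S ∩ T).card : ℝ))) := by
      intro T hT
      obtain ⟨S, hS, hγS⟩ := cover T hT
      exact Finset.mem_biUnion.2 ⟨S, hS, Finset.mem_filter.2 ⟨hT, hγS⟩⟩
    calc (m.choose l : ℝ) = (P.card : ℝ) := by rw [hPcard]
      _ ≤ ((C.biUnion (fun S => P.filter (fun T => γ * l < ((S ∩ T).card : ℝ)))).card : ℝ) := by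
          exact_mod_cast Finset.card_le_card hPsub
      _ ≤ ∑ S ∈ C, ((P.filter (fun T => γ * l < ((S ∩ T).card : ℝ))).card : ℝ) := by
          exact_mod_cast Finset.card_biUnion_le
      _ ≤ ∑ S ∈ C, (l:ℝ) * Real.exp g := Finset.sum_le_sum Bbound
      _ = C.card * ((l:ℝ) * Real.exp g) := by rw [Finset.sum_const, nsmul_eq_mul]
  have hI2eq : g = (m:ℝ) * Real.binEntropy b - (m:ℝ) * I2 γ b := by
    have := I2_eq γ b (by linarith) hγ2 hb0 hb2
    rw [hgdef, this]
    have h1 : (m:ℝ) * b = l := by rw [hbdef]; field_simp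
    linear_combination (Real.binEntropy (b*(1-γ)/(1-b)) - Real.binEntropy γ) * h1
  have hkey : Real.exp ((m:ℝ) * I2 γ b) ≤ C.card * ((l:ℝ) * ((m:ℝ)+1)) := by
    have hLHS : Real.exp ((m:ℝ) * I2 γ b) * Real.exp g = Real.exp ((m:ℝ) * Real.binEntropy b) := by
      rw [← Real.exp_add, hI2eq]; congr 1; ring
    have hch := exp_le_choose m l hlm.le
    rw [hbdef] at hLHS ⊢
    calc Real.exp ((m:ℝ) * I2 γ ((l:ℝ)/m))
        = Real.exp ((m:ℝ) * Real.binEntropy ((l:ℝ)/m)) / Real.exp g := by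
          rw [← hLHS]; field_simp
      _ ≤ (((m:ℝ)+1) * (m.choose l : ℝ)) / Real.exp g := by
          gcongr
      _ ≤ (((m:ℝ)+1) * (C.card * ((l:ℝ) * Real.exp g))) / Real.exp g := by
          gcongr
      _ = C.card * ((l:ℝ) * ((m:ℝ)+1)) := by
          field_simp
  -- conclude
  refine ⟨C, hCne, hCmem, hCgood, ?_⟩
  rcases le_or_gt (I2 γ b - 4/(3*(m:ℝ)) - (2/(m:ℝ)) * Real.log ((m:ℝ) * Real.sqrt l)) 0 with hneg | hpos
  · rw [hbdef] at hneg
    rw [max_eq_right hneg, mul_zero, Real.exp_zero]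
    exact_mod_cast Finset.card_pos.2 hCne
  · rw [hbdef] at hpos
    rw [max_eq_left hpos.le]
    have hsql : (0:ℝ) < Real.sqrt l := Real.sqrt_pos.2 hl0
    have hmsl : (0:ℝ) < (m:ℝ) * Real.sqrt l := by positivity
    have hexp2log : Real.exp (2 * Real.log ((m:ℝ) * Real.sqrt l)) = (m:ℝ)^2 * l := by
      rw [show (2:ℝ) * Real.log ((m:ℝ) * Real.sqrt l) = Real.log (((m:ℝ) * Real.sqrt l)^2) by
        rw [Real.log_pow]; push_cast; ring]
      rw [Real.exp_log (by positivity)]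
      rw [mul_pow, Real.sq_sqrt hl0.le]
    have harg : (m:ℝ) * (I2 γ ((l:ℝ)/m) - 4/(3*(m:ℝ)) - (2/(m:ℝ)) * Real.log ((m:ℝ) * Real.sqrt l))
        = (m:ℝ) * I2 γ ((l:ℝ)/m) - 4/3 - 2 * Real.log ((m:ℝ) * Real.sqrt l) := by
      field_simp
    rw [harg]
    have hfinal : Real.exp ((m:ℝ) * I2 γ ((l:ℝ)/m) - 4/3 - 2*Real.log ((m:ℝ)*Real.sqrt l))
        * ((l:ℝ) * ((m:ℝ)+1)) ≤ Real.exp ((m:ℝ) * I2 γ ((l:ℝ)/m)) := by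
      rw [Real.exp_sub, Real.exp_sub, hexp2log]
      rw [div_div, div_mul_eq_mul_div, div_le_iff₀ (by positivity)]
      have hm1 : ((m:ℝ)+1) ≤ Real.exp (4/3) * (m:ℝ)^2 := by
        have he : (1:ℝ) ≤ Real.exp (4/3) := by
          rw [show (1:ℝ) = Real.exp 0 by simp]
          apply Real.exp_le_exp.2; norm_num
        have h2m : ((m:ℝ)+1) ≤ (m:ℝ)^2 := by
          have : (2:ℝ) ≤ m := by exact_mod_cast hm2
          nlinarith
        calc ((m:ℝ)+1) ≤ (m:ℝ)^2 := h2m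
          _ ≤ Real.exp (4/3) * (m:ℝ)^2 := le_mul_of_one_le_left (by positivity) he
      calc Real.exp ((m:ℝ) * I2 γ ((l:ℝ)/m)) * ((l:ℝ) * ((m:ℝ)+1))
          ≤ Real.exp ((m:ℝ) * I2 γ ((l:ℝ)/m)) * ((l:ℝ) * (Real.exp (4/3) * (m:ℝ)^2)) := by
            gcongr
        _ = Real.exp ((m:ℝ) * I2 γ ((l:ℝ)/m)) * (Real.exp (4/3) * ((m:ℝ)^2 * l)) := by ring
    have hpos' : (0:ℝ) < (l:ℝ) * ((m:ℝ)+1) := by positivity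
    rw [← mul_le_mul_iff_of_pos_right hpos']
    calc Real.exp ((m:ℝ) * I2 γ ((l:ℝ)/m) - 4/3 - 2*Real.log ((m:ℝ)*Real.sqrt l)) * ((l:ℝ) * ((m:ℝ)+1))
        ≤ Real.exp ((m:ℝ) * I2 γ ((l:ℝ)/m)) := hfinal
      _ ≤ C.card * ((l:ℝ) * ((m:ℝ)+1)) := hkey

end CodeExists

noncomputable def Eterm (m ℓ : ℕ) (γ : ℝ) : ℝ :=
  I2 γ ((ℓ:ℝ)/m) - 4/(3*(m:ℝ)) - (2/(m:ℝ)) * Real.log ((m:ℝ) * Real.sqrt ℓ)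

section Layered
open scoped Classical
set_option maxHeartbeats 1000000

lemma layered_exists (n ℓ s : ℕ) (hℓ : 1 ≤ ℓ) (hn : (s+1)*ℓ ≤ n)
    (γ : ℝ) (hγ1 : 1/2 < γ) (hγ2 : γ < 1) :
    ∃ M : Finset (ℕ → Finset (Fin n)),
      (Real.exp (∑ t ∈ Finset.range s, ((n - t*ℓ : ℕ):ℝ) * max (Eterm (n - t*ℓ) ℓ γ) 0)
          ≤ (M.card : ℝ)) ∧
      (∀ g ∈ M, ∀ t, t < s → (g t).card = ℓ) ∧
      (∀ g ∈ M, ∀ t, s ≤ t → g t = ∅) ∧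
      (∀ g ∈ M, ∀ t, ∀ t', t' < t → t < s → Disjoint (g t) (g t')) ∧
      (∀ g ∈ M, ∀ g' ∈ M, g ≠ g' → ∃ t, t < s ∧ (∀ j, j < t → g j = g' j) ∧
        ((g t ∩ g' t).card : ℝ) ≤ γ * ℓ) := by
  -- choice of per-level codes
  have hex : ∀ A : Finset (Fin n), 2*ℓ ≤ A.card →
      ∃ C : Finset (Finset (Fin n)), C.Nonempty ∧ (∀ S ∈ C, S ⊆ A ∧ S.card = ℓ) ∧
        (∀ S ∈ C, ∀ T ∈ C, S ≠ T → ((S ∩ T).card : ℝ) ≤ γ * ℓ) ∧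
        Real.exp ((A.card:ℝ) * max (I2 γ ((ℓ:ℝ)/A.card) - 4/(3*(A.card:ℝ))
          - (2/(A.card:ℝ)) * Real.log ((A.card:ℝ) * Real.sqrt ℓ)) 0) ≤ (C.card : ℝ) :=
    fun A h => code_exists A A.card ℓ rfl hℓ h γ hγ1 hγ2
  choose! Cf hCne hCmem hCgood hCcard using hex
  -- residual set
  set R : (ℕ → Finset (Fin n)) → ℕ → Finset (Fin n) :=
    fun g t => Finset.univ \ (Finset.range t).biUnion g with hRdef
  -- the layered families
  set Mf : ℕ → Finset (ℕ → Finset (Fin n)) := fun t => Nat.rec {fun _ => (∅ : Finset (Fin n))}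
    (fun t Mt => Mt.biUnion (fun g => (Cf (R g t)).image (fun S => Function.update g t S))) t
    with hMfdef
  have hM0 : Mf 0 = {fun _ => (∅ : Finset (Fin n))} := rfl
  have hMsucc : ∀ t, Mf (t+1)
      = (Mf t).biUnion (fun g => (Cf (R g t)).image (fun S => Function.update g t S)) :=
    fun t => rfl
  have hmem_succ : ∀ t, ∀ g', g' ∈ Mf (t+1) ↔
      ∃ g ∈ Mf t, ∃ S ∈ Cf (R g t), g' = Function.update g t S := by
    intro t g'
    rw [hMsucc, Finset.mem_biUnion]
    constructor
    · rintro ⟨g, hg, hgi⟩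
      rw [Finset.mem_image] at hgi
      obtain ⟨S, hS, hEq⟩ := hgi
      exact ⟨g, hg, S, hS, hEq.symm⟩
    · rintro ⟨g, hg, S, hS, rfl⟩
      exact ⟨g, hg, Finset.mem_image.2 ⟨S, hS, rfl⟩⟩
  -- invariant
  have inv : ∀ t, t ≤ s → ∀ g ∈ Mf t,
      (∀ j, t ≤ j → g j = ∅) ∧ (∀ j, j < t → g j ⊆ R g j ∧ (g j).card = ℓ ∧ g j ∈ Cf (R g j)) := by
    intro t
    induction t with
    | zero =>
      intro _ g hg
      rw [hM0, Finset.mem_singleton] at hg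
      subst hg
      exact ⟨fun j _ => rfl, fun j hj => absurd hj (Nat.not_lt_zero j)⟩
    | succ t ih =>
      intro hts g' hg'
      obtain ⟨g, hg, S, hS, rfl⟩ := (hmem_succ t g').1 hg'
      obtain ⟨h1, h2⟩ := ih (by omega) g hg
      -- card of residual
      have hRcard : (R g t).card = n - t*ℓ := by
        have hd : ∀ i j : ℕ, i < j → j < t → Disjoint (g i) (g j) := by
          intro i j hij hjt
          have hsub := (h2 j hjt).1
          rw [hRdef] at hsub
          apply Finset.disjoint_left.2
          intro x hxi hxj
          have := hsub hxj
          simp only [Finset.mem_sdiff, Finset.mem_biUnion, Finset.mem_univ, true_and,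
            Finset.mem_range] at this
          exact this ⟨i, hij, hxi⟩
        have hdisj : (↑(Finset.range t : Finset ℕ) : Set ℕ).PairwiseDisjoint g := by
          intro i hi j hj hij
          simp only [Finset.coe_range, Set.mem_Iio] at hi hj
          rcases Nat.lt_or_ge i j with h | h
          · exact hd i j h hj
          · exact (hd j i (by omega) hi).symm
        have hbu : ((Finset.range t).biUnion g).card = t*ℓ := by
          rw [Finset.card_biUnion]
          · rw [Finset.sum_congr rfl (fun j hj => (h2 j (Finset.mem_range.1 hj)).2.1)]
            rw [Finset.sum_const, Finset.card_range, smul_eq_mul]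
          · intro i hi j hj hij
            exact hdisj (by simpa using hi) (by simpa using hj) hij
        rw [hRdef]
        simp only []
        rw [Finset.card_sdiff_of_subset (Finset.subset_univ _), Finset.card_univ, Fintype.card_fin, hbu]
      have h2ℓ : 2*ℓ ≤ (R g t).card := by
        rw [hRcard]
        have h1' : (t+2)*ℓ ≤ (s+1)*ℓ := Nat.mul_le_mul_right ℓ (by omega)
        have e1 : (t+2)*ℓ = t*ℓ + 2*ℓ := by ring
        omega
      have hSsub := (hCmem (R g t) h2ℓ S hS).1
      have hScard := (hCmem (R g t) h2ℓ S hS).2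
      constructor
      · intro j hj
        rw [Function.update_of_ne (by omega) _ _]
        exact h1 j (by omega)
      · intro j hj
        have hRsame : ∀ j', j' ≤ t → R (Function.update g t S) j' = R g j' := by
          intro j' hj'
          rw [hRdef]
          simp only []
          congr 1
          apply Finset.biUnion_congr rfl
          intro i hi
          rw [Finset.mem_range] at hi
          rw [Function.update_of_ne (by omega) _ _]
        rcases Nat.lt_or_ge j t with hjt | hjt
        · rw [Function.update_of_ne (by omega) _ _, hRsame j (by omega)]
          exact h2 j hjt
        · have hjeq : j = t := by omega
          subst hjeq
          rw [Function.update_self, hRsame j (le_refl j)]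
          exact ⟨hSsub, hScard, hS⟩
  -- residual cardinality
  have hRcard : ∀ tm, tm ≤ s → ∀ g ∈ Mf tm, ∀ t, t ≤ tm → (R g t).card = n - t*ℓ := by
    intro tm htm g hg t ht
    obtain ⟨h1, h2⟩ := inv tm htm g hg
    have hd : ∀ i j : ℕ, i < j → j < tm → Disjoint (g i) (g j) := by
      intro i j hij hjt
      have hsub := (h2 j hjt).1
      rw [hRdef] at hsub
      apply Finset.disjoint_left.2
      intro x hxi hxj
      have := hsub hxj
      simp only [Finset.mem_sdiff, Finset.mem_biUnion, Finset.mem_univ, true_and,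
        Finset.mem_range] at this
      exact this ⟨i, hij, hxi⟩
    have hbu : ((Finset.range t).biUnion g).card = t*ℓ := by
      rw [Finset.card_biUnion]
      · rw [Finset.sum_congr rfl (fun j hj => (h2 j (by
          have := Finset.mem_range.1 hj; omega)).2.1)]
        rw [Finset.sum_const, Finset.card_range, smul_eq_mul]
      · intro i hi j hj hij
        have hi' := Finset.mem_range.1 hi
        have hj' := Finset.mem_range.1 hj
        rcases Nat.lt_or_ge i j with h | h
        · exact hd i j h (by omega)
        · exact (hd j i (by omega) (by omega)).symm
    rw [hRdef]
    simp only []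
    rw [Finset.card_sdiff_of_subset (Finset.subset_univ _), Finset.card_univ, Fintype.card_fin, hbu]
  -- cardinality lower bound
  have hcard : ∀ t, t ≤ s →
      Real.exp (∑ j ∈ Finset.range t, ((n - j*ℓ : ℕ):ℝ) * max (Eterm (n - j*ℓ) ℓ γ) 0)
        ≤ ((Mf t).card : ℝ) := by
    intro t
    induction t with
    | zero => intro _; rw [hM0]; simp
    | succ t ih =>
      intro hts
      have ht : t ≤ s := by omega
      have hih := ih ht
      have hdisjIm : ∀ g ∈ Mf t, ∀ g' ∈ Mf t, g ≠ g' →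
          Disjoint ((Cf (R g t)).image (fun S => Function.update g t S))
            ((Cf (R g' t)).image (fun S => Function.update g' t S)) := by
        intro g hg g' hg' hne
        apply Finset.disjoint_left.2
        intro x hx hx'
        rw [Finset.mem_image] at hx hx'
        obtain ⟨S, hS, rfl⟩ := hx
        obtain ⟨S', hS', hEq⟩ := hx'
        apply hne
        funext j
        rcases eq_or_ne j t with rfl | hj
        · rw [(inv j ht g hg).1 j (le_refl _), (inv j ht g' hg').1 j (le_refl _)]
        · have h3 := congrFun hEq j
          rw [Function.update_of_ne hj, Function.update_of_ne hj] at h3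
          exact h3.symm
      have hbcard : (Mf (t+1)).card
          = ∑ g ∈ Mf t, ((Cf (R g t)).image (fun S => Function.update g t S)).card := by
        rw [hMsucc]
        exact Finset.card_biUnion (fun g hg g' hg' h => hdisjIm g hg g' hg' h)
      have himcard : ∀ g ∈ Mf t,
          ((Cf (R g t)).image (fun S => Function.update g t S)).card = (Cf (R g t)).card := by
        intro g hg
        apply Finset.card_image_of_injOn
        intro S hS S' hS' h
        have h3 := congrFun h t
        simpa using h3
      have h2ℓ' : 2*ℓ ≤ n - t*ℓ := by
        have h1' : (t+2)*ℓ ≤ (s+1)*ℓ := Nat.mul_le_mul_right ℓ (by omega)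
        have e1 : (t+2)*ℓ = t*ℓ + 2*ℓ := by ring
        omega
      have hlow : ∀ g ∈ Mf t,
          Real.exp (((n - t*ℓ:ℕ):ℝ) * max (Eterm (n - t*ℓ) ℓ γ) 0) ≤ ((Cf (R g t)).card : ℝ) := by
        intro g hg
        have hRtc := hRcard t ht g hg t (le_refl t)
        have hcc := hCcard (R g t) (by rw [hRtc]; exact h2ℓ')
        rw [hRtc] at hcc
        unfold Eterm
        exact hcc
      calc Real.exp (∑ j ∈ Finset.range (t+1), ((n - j*ℓ : ℕ):ℝ) * max (Eterm (n - j*ℓ) ℓ γ) 0)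
          = Real.exp (∑ j ∈ Finset.range t, ((n - j*ℓ : ℕ):ℝ) * max (Eterm (n - j*ℓ) ℓ γ) 0)
            * Real.exp (((n - t*ℓ:ℕ):ℝ) * max (Eterm (n - t*ℓ) ℓ γ) 0) := by
            rw [Finset.sum_range_succ, Real.exp_add]
        _ ≤ ((Mf t).card : ℝ) * Real.exp (((n - t*ℓ:ℕ):ℝ) * max (Eterm (n - t*ℓ) ℓ γ) 0) :=
            mul_le_mul_of_nonneg_right hih (Real.exp_pos _).le
        _ = ∑ _g ∈ Mf t, Real.exp (((n - t*ℓ:ℕ):ℝ) * max (Eterm (n - t*ℓ) ℓ γ) 0) := by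
            rw [Finset.sum_const, nsmul_eq_mul]
        _ ≤ ∑ g ∈ Mf t, ((Cf (R g t)).card : ℝ) := Finset.sum_le_sum hlow
        _ = ((Mf (t+1)).card : ℝ) := by
            rw [hbcard]
            push_cast
            apply Finset.sum_congr rfl
            intro g hg
            rw [himcard g hg]
  -- pairwise property
  have hpair : ∀ g ∈ Mf s, ∀ g' ∈ Mf s, g ≠ g' → ∃ t, t < s ∧ (∀ j, j < t → g j = g' j) ∧
      ((g t ∩ g' t).card : ℝ) ≤ γ * ℓ := by
    intro g hg g' hg' hne
    have hex2 : ∃ t, g t ≠ g' t := by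
      by_contra hcon
      push_neg at hcon
      exact hne (funext hcon)
    set t := Nat.find hex2 with htdef
    have htne : g t ≠ g' t := Nat.find_spec hex2
    have hmin : ∀ j, j < t → g j = g' j := by
      intro j hj
      by_contra hc
      exact Nat.find_min hex2 hj hc
    have hts : t < s := by
      by_contra h
      push_neg at h
      exact htne (((inv s (le_refl s) g hg).1 t h).trans
        (((inv s (le_refl s) g' hg').1 t h)).symm)
    have hReq : R g t = R g' t := by
      rw [hRdef]
      simp only []
      congr 1
      apply Finset.biUnion_congr rfl
      intro j hj
      exact hmin j (Finset.mem_range.1 hj)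
    have hgmem := ((inv s (le_refl s) g hg).2 t hts).2.2
    have hg'mem := ((inv s (le_refl s) g' hg').2 t hts).2.2
    rw [← hReq] at hg'mem
    have h2ℓ'' : 2*ℓ ≤ (R g t).card := by
      rw [hRcard s (le_refl s) g hg t hts.le]
      have h1' : (t+2)*ℓ ≤ (s+1)*ℓ := Nat.mul_le_mul_right ℓ (by omega)
      have e1 : (t+2)*ℓ = t*ℓ + 2*ℓ := by ring
      omega
    exact ⟨t, hts, hmin, hCgood (R g t) h2ℓ'' (g t) hgmem (g' t) hg'mem htne⟩
  refine ⟨Mf s, hcard s (le_refl s), ?_, ?_, ?_, hpair⟩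
  · intro g hg t ht
    exact ((inv s (le_refl s) g hg).2 t ht).2.1
  · intro g hg t ht
    exact (inv s (le_refl s) g hg).1 t ht
  · intro g hg t t' ht' hts
    have hsub := ((inv s (le_refl s) g hg).2 t hts).1
    rw [hRdef] at hsub
    apply Finset.disjoint_left.2
    intro x hxt hxt'
    have := hsub hxt
    simp only [Finset.mem_sdiff, Finset.mem_biUnion, Finset.mem_univ, true_and,
      Finset.mem_range] at this
    exact this ⟨t', ht', hxt'⟩

end Layered

end Overlay

open scoped Classical in
/-- Theorem (existence of overlay codes): if
`r ≤ (1/n) Σ_{k∈K} n_k |I₂(γ‖ℓ/n_k) − 4/(3 n_k) − (2/n_k) log(n_k √ℓ)|⁺`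
with `n_k = n − ℓ·|{j ∈ K : j < k}|`, then an `(r,K,γ)`-overlay code exists. -/
theorem overlay_code_exists
    (n : ℕ) (hn : 0 < n) (K : Finset ℝ) (hKne : K.Nonempty)
    (hK : ∀ k ∈ K, 0 ≤ k ∧ k < 1)
    (hnK : (insert (1 : ℝ) K).card ≤ n)
    (γ : ℝ) (hγ1 : 1 / 2 < γ) (hγ2 : γ < 1)
    (ℓ : ℕ) (hℓ : ℓ = n / (insert (1 : ℝ) K).card)
    (nk : ℝ → ℕ) (hnk : ∀ k, nk k = n - ℓ * (K.filter (fun j => j < k)).card)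
    (r : ℝ) (hr : 0 < r)
    (hrle : r ≤ (1 / n) * ∑ k ∈ K, (nk k : ℝ) *
      max (I2 γ ((ℓ : ℝ) / (nk k)) - 4 / (3 * (nk k)) -
        (2 / (nk k)) * Real.log ((nk k) * Real.sqrt ℓ)) 0) :
    ∃ (M : Type) (_ : Fintype M) (_ : Nonempty M) (f : M → Fin n → ℝ),
      IsOverlayCode n K r γ f := by
  classical
  set s := K.card with hsdef
  have h1K : (1:ℝ) ∉ K := fun h => absurd (hK 1 h).2 (lt_irrefl 1)
  have hcard1 : (insert (1:ℝ) K).card = s + 1 := Finset.card_insert_of_notMem h1K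
  have hs1n : s + 1 ≤ n := by rw [← hcard1]; exact hnK
  have hℓ1 : 1 ≤ ℓ := by
    rw [hℓ, hcard1]
    exact (Nat.one_le_div_iff (by omega)).2 hs1n
  have hsℓ : (s+1)*ℓ ≤ n := by
    rw [hℓ, hcard1, mul_comm]
    exact Nat.div_mul_le_self n (s+1)
  set L := K.sort (· ≤ ·) with hLdef
  have hLlen : L.length = s := Finset.length_sort _
  have hLsort : L.Pairwise (· < ·) := (Finset.sortedLT_sort K).pairwise
  set lev : ℕ → ℝ := fun t => L.getD t 0 with hlevdef
  have hlevget : ∀ t (ht : t < s), lev t = L.get ⟨t, by rw [hLlen]; exact ht⟩ := by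
    intro t ht
    exact List.getD_eq_get L 0 ⟨t, by rw [hLlen]; exact ht⟩
  have hlevmem : ∀ t, t < s → lev t ∈ K := by
    intro t ht
    rw [hlevget t ht]
    exact (Finset.mem_sort (α := ℝ) (· ≤ ·)).1 (List.get_mem L _)
  have hlevmono : ∀ i j, i < j → j < s → lev i < lev j := by
    intro i j hij hj
    rw [hlevget i (by omega), hlevget j hj]
    exact hLsort.rel_get_of_lt (by simpa using hij)
  have hlevsurj : ∀ k ∈ K, ∃ t, t < s ∧ lev t = k := by
    intro k hk
    have hkL : k ∈ L := (Finset.mem_sort _).2 hk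
    obtain ⟨⟨t, ht⟩, hEq⟩ := List.mem_iff_get.1 hkL
    refine ⟨t, by omega, ?_⟩
    rw [hlevget t (by omega)]
    exact hEq
  have hlev1 : ∀ t, t < s → lev t < 1 := fun t ht => (hK _ (hlevmem t ht)).2
  have hfilter : ∀ t, t < s → (K.filter (fun j => j < lev t)).card = t := by
    intro t ht
    have hbij : (Finset.range t).card = (K.filter (fun j => j < lev t)).card := by
      apply Finset.card_bij (fun a _ => lev a)
      · intro a ha
        have ha' := Finset.mem_range.1 ha
        exact Finset.mem_filter.2 ⟨hlevmem a (by omega), hlevmono a t ha' ht⟩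
      · intro a ha b hb hab
        have ha' := Finset.mem_range.1 ha
        have hb' := Finset.mem_range.1 hb
        by_contra hne
        rcases Nat.lt_or_ge a b with h | h
        · exact absurd hab (ne_of_lt (hlevmono a b h (by omega)))
        · exact absurd hab.symm (ne_of_lt (hlevmono b a (by omega) (by omega)))
      · intro k hk
        rw [Finset.mem_filter] at hk
        obtain ⟨hkK, hklt⟩ := hk
        obtain ⟨u, hu, hEq⟩ := hlevsurj k hkK
        refine ⟨u, Finset.mem_range.2 ?_, hEq⟩
        by_contra hc
        push_neg at hc
        rcases Nat.eq_or_lt_of_le hc with heq | h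
        · rw [heq, hEq] at hklt; exact lt_irrefl _ hklt
        · have h2 := hlevmono t u h hu
          rw [hEq] at h2
          exact absurd hklt (not_lt.2 h2.le)
    rw [← hbij, Finset.card_range]
  -- rewrite the rate hypothesis
  have hsum : ∑ k ∈ K, (nk k : ℝ) *
      max (I2 γ ((ℓ : ℝ) / (nk k)) - 4 / (3 * (nk k)) -
        (2 / (nk k)) * Real.log ((nk k) * Real.sqrt ℓ)) 0
      = ∑ t ∈ Finset.range s, ((n - t*ℓ : ℕ):ℝ) * max (Overlay.Eterm (n - t*ℓ) ℓ γ) 0 := by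
    symm
    apply Finset.sum_bij (fun t (_ : t ∈ Finset.range s) => lev t)
    · intro a ha
      exact hlevmem a (Finset.mem_range.1 ha)
    · intro a ha b hb hab
      have ha' := Finset.mem_range.1 ha
      have hb' := Finset.mem_range.1 hb
      by_contra hne
      rcases Nat.lt_or_ge a b with h | h
      · exact absurd hab (ne_of_lt (hlevmono a b h hb'))
      · exact absurd hab.symm (ne_of_lt (hlevmono b a (by omega) ha'))
    · intro k hk
      obtain ⟨u, hu, hEq⟩ := hlevsurj k hk
      exact ⟨u, Finset.mem_range.2 hu, hEq⟩
    · intro t ht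
      have ht' := Finset.mem_range.1 ht
      have hnkt : nk (lev t) = n - t*ℓ := by
        rw [hnk, hfilter t ht', mul_comm]
      rw [hnkt]
      rfl
  obtain ⟨M, hMcard, hblk, hempty, hdisj, hpair⟩ :=
    Overlay.layered_exists n ℓ s hℓ1 hsℓ γ hγ1 hγ2
  have hMpos : 0 < M.card := by
    rcases Nat.eq_zero_or_pos M.card with h | h
    · rw [h] at hMcard
      norm_num at hMcard
      exact absurd hMcard (not_le.2 (Real.exp_pos _))
    · exact h
  -- the encoding function
  set F : (ℕ → Finset (Fin n)) → Fin n → ℝ :=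
    fun g i => if h : ∃ t, t < s ∧ i ∈ g t then lev (Nat.find h) else 1 with hFdef
  have hmem_val : ∀ g, g ∈ M → ∀ (i : Fin n) t, t < s → i ∈ g t → F g i = lev t := by
    intro g hg i t ht hi
    have hex : ∃ t', t' < s ∧ i ∈ g t' := ⟨t, ht, hi⟩
    rw [hFdef]
    simp only [dif_pos hex]
    obtain ⟨ht0, hi0⟩ := Nat.find_spec hex
    congr 1
    by_contra hne
    rcases Nat.lt_or_ge (Nat.find hex) t with h | h
    · exact Finset.disjoint_left.1 (hdisj g hg t (Nat.find hex) h ht) hi hi0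
    · have h' : t < Nat.find hex := by omega
      exact Finset.disjoint_left.1 (hdisj g hg (Nat.find hex) t h' ht0) hi0 hi
  have hchar : ∀ g, g ∈ M → ∀ (i : Fin n) t, t < s → (F g i = lev t ↔ i ∈ g t) := by
    intro g hg i t ht
    constructor
    · intro hF
      by_cases hex : ∃ t', t' < s ∧ i ∈ g t'
      · obtain ⟨t', ht', hi'⟩ := hex
        have := hmem_val g hg i t' ht' hi'
        rw [this] at hF
        have htt : t' = t := by
          by_contra hne
          rcases Nat.lt_or_ge t' t with h | h
          · exact absurd hF (ne_of_lt (hlevmono t' t h ht))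
          · exact absurd hF.symm (ne_of_lt (hlevmono t t' (by omega) ht'))
        rw [← htt]; exact hi'
      · rw [hFdef] at hF
        simp only [dif_neg hex] at hF
        exact absurd hF.symm (ne_of_lt (hlev1 t ht))
    · exact hmem_val g hg i t ht
  have hℓeq : n / (insert (1:ℝ) K).card = ℓ := by rw [← hℓ]
  refine ⟨{g // g ∈ M}, FinsetCoe.fintype M, ?_, fun m i => F m.1 i, ?_, ?_, ?_, ?_⟩
  · obtain ⟨g, hg⟩ := Finset.card_pos.1 hMpos
    exact ⟨⟨g, hg⟩⟩
  -- (0) values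
  · intro m i
    rw [hFdef]
    by_cases hex : ∃ t', t' < s ∧ i ∈ m.1 t'
    · simp only [dif_pos hex]
      obtain ⟨ht0, _⟩ := Nat.find_spec hex
      exact Finset.mem_insert.2 (Or.inr (hlevmem _ ht0))
    · simp only [dif_neg hex]
      exact Finset.mem_insert_self _ _
  -- (i) rate
  · have hcardM : (Fintype.card {g // g ∈ M}) = M.card := Fintype.card_coe M
    have hn' : (0:ℝ) < n := by exact_mod_cast hn
    have hrn : r * n ≤ ∑ t ∈ Finset.range s, ((n - t*ℓ : ℕ):ℝ) * max (Overlay.Eterm (n - t*ℓ) ℓ γ) 0 := by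
      rw [← hsum]
      calc r * n ≤ ((1 / n) * ∑ k ∈ K, (nk k : ℝ) *
          max (I2 γ ((ℓ : ℝ) / (nk k)) - 4 / (3 * (nk k)) -
            (2 / (nk k)) * Real.log ((nk k) * Real.sqrt ℓ)) 0) * n := by
            exact mul_le_mul_of_nonneg_right hrle hn'.le
        _ = _ := by rw [mul_comm _ (n:ℝ), ← mul_assoc, mul_one_div_cancel hn'.ne', one_mul]
    have hexp : Real.exp (r * n) ≤ (M.card : ℝ) :=
      le_trans (Real.exp_le_exp.2 hrn) hMcard
    have hlog : r * n ≤ Real.log (M.card : ℝ) := by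
      rw [← Real.log_exp (r * n)]
      apply Real.log_le_log (Real.exp_pos _) hexp
    rw [hcardM]
    rw [le_div_iff₀ hn']
    exact hlog
  -- (ii) counts
  · intro m k hk
    obtain ⟨t, ht, rfl⟩ := hlevsurj k hk
    have : (Finset.univ.filter (fun i => F m.1 i = lev t)) = m.1 t := by
      ext i
      rw [Finset.mem_filter]
      constructor
      · intro ⟨_, h⟩
        exact (hchar m.1 m.2 i t ht).1 h
      · intro h
        exact ⟨Finset.mem_univ i, (hchar m.1 m.2 i t ht).2 h⟩
    rw [this, hℓeq]
    exact hblk m.1 m.2 t ht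
  -- (iii) pairs
  · intro m m' hne
    have hgne : m.1 ≠ m'.1 := fun h => hne (Subtype.ext h)
    obtain ⟨t, hts, hprefix, hinter⟩ := hpair m.1 m.2 m'.1 m'.2 hgne
    refine ⟨lev t, hlevmem t hts, ?_, ?_⟩
    · have : (Finset.univ.filter (fun i => F m.1 i = lev t ∧ F m'.1 i = lev t))
          = m.1 t ∩ m'.1 t := by
        ext i
        rw [Finset.mem_filter, Finset.mem_inter]
        constructor
        · intro ⟨_, h1, h2⟩
          exact ⟨(hchar m.1 m.2 i t hts).1 h1, (hchar m'.1 m'.2 i t hts).1 h2⟩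
        · intro ⟨h1, h2⟩
          exact ⟨Finset.mem_univ i, (hchar m.1 m.2 i t hts).2 h1,
            (hchar m'.1 m'.2 i t hts).2 h2⟩
      rw [this, hℓeq]
      exact hinter
    · intro j hj hjlt
      obtain ⟨t', ht', rfl⟩ := hlevsurj j hj
      have htt' : t' < t := by
        by_contra hc
        push_neg at hc
        rcases Nat.eq_or_lt_of_le hc with rfl | h
        · exact lt_irrefl _ hjlt
        · exact absurd hjlt (not_lt.2 (hlevmono t t' h ht').le)
      rw [Finset.card_eq_zero]
      rw [Finset.filter_eq_empty_iff]
      intro i _ hp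
      obtain ⟨h1, h2⟩ := hp
      have hi1 : i ∈ m.1 t := (hchar m.1 m.2 i t hts).1 h1
      have hi2 : i ∈ m'.1 t' := (hchar m'.1 m'.2 i t' (by omega)).1 h2
      rw [← hprefix t' htt'] at hi2
      exact Finset.disjoint_left.1 (hdisj m.1 m.2 t t' htt' hts) hi1 hi2
end

section
/- For every γ ∈ (1/2,1), every nonempty finite set K ⊂ [0,1), and every positive real r with r < γ·log(|K̃|) − γ − H₂(γ), there exists N₀ such that for all integers n ≥ N₀ there exists an (r,K,γ)-overlay code of block length n. -/
open Real Finset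

/-- Binary entropy (natural log). -/
noncomputable def H2 (a : ℝ) : ℝ := -a * Real.log a - (1 - a) * Real.log (1 - a)

variable {α : Type*} [LinearOrder α]

def rankIn (G : Finset α) (x : α) : ℕ := (G.filter (fun y => y < x)).card

def posAt (G : Finset α) (A : Finset ℕ) : Finset α := G.filter (fun x => rankIn G x ∈ A)

lemma posAt_subset (G : Finset α) (A : Finset ℕ) : posAt G A ⊆ G := Finset.filter_subset _ _

lemma rankIn_strictMonoOn (G : Finset α) : ∀ x ∈ G, ∀ y ∈ G, x < y → rankIn G x < rankIn G y := by
  intro x hx y hy hxy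
  apply Finset.card_lt_card
  rw [Finset.ssubset_iff_of_subset]
  · exact ⟨x, Finset.mem_filter.2 ⟨hx, hxy⟩, fun hmem => lt_irrefl x (Finset.mem_filter.1 hmem).2⟩
  · intro z hz
    rw [Finset.mem_filter] at hz ⊢
    exact ⟨hz.1, hz.2.trans hxy⟩

lemma rankIn_injOn (G : Finset α) : Set.InjOn (rankIn G) ↑G := by
  intro x hx y hy hxy
  rcases lt_trichotomy x y with h | h | h
  · exact absurd hxy (ne_of_lt (rankIn_strictMonoOn G x hx y hy h))
  · exact h
  · exact absurd hxy.symm (ne_of_lt (rankIn_strictMonoOn G y hy x hx h))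

lemma rankIn_lt_card (G : Finset α) {x : α} (hx : x ∈ G) : rankIn G x < G.card := by
  have hsub : G.filter (fun y => y < x) ⊆ G.erase x := by
    intro y hy
    rw [Finset.mem_filter] at hy
    exact Finset.mem_erase.2 ⟨ne_of_lt hy.2, hy.1⟩
  have := Finset.card_le_card hsub
  rw [Finset.card_erase_of_mem hx] at this
  have hpos : 0 < G.card := Finset.card_pos.2 ⟨x, hx⟩
  unfold rankIn
  omega

lemma image_rankIn (G : Finset α) : G.image (rankIn G) = Finset.range G.card := by
  apply Finset.eq_of_subset_of_card_le
  · intro j hj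
    rw [Finset.mem_image] at hj
    obtain ⟨x, hx, rfl⟩ := hj
    exact Finset.mem_range.2 (rankIn_lt_card G hx)
  · rw [Finset.card_range, Finset.card_image_of_injOn (rankIn_injOn G)]

lemma image_rankIn_posAt (G : Finset α) (A : Finset ℕ) (hA : A ⊆ Finset.range G.card) :
    (posAt G A).image (rankIn G) = A := by
  apply Finset.Subset.antisymm
  · intro j hj
    rw [Finset.mem_image] at hj
    obtain ⟨x, hx, rfl⟩ := hj
    exact (Finset.mem_filter.1 hx).2
  · intro a ha
    have : a ∈ G.image (rankIn G) := by rw [image_rankIn]; exact hA ha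
    rw [Finset.mem_image] at this
    obtain ⟨x, hx, rfl⟩ := this
    exact Finset.mem_image.2 ⟨x, Finset.mem_filter.2 ⟨hx, ha⟩, rfl⟩

lemma card_posAt (G : Finset α) (A : Finset ℕ) (hA : A ⊆ Finset.range G.card) :
    (posAt G A).card = A.card := by
  have h := Finset.card_image_of_injOn ((rankIn_injOn G).mono
    (Finset.coe_subset.2 (posAt_subset G A)))
  rw [image_rankIn_posAt G A hA] at h
  exact h.symm

lemma posAt_inter (G : Finset α) (A B : Finset ℕ) :
    posAt G A ∩ posAt G B = posAt G (A ∩ B) := by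
  ext x
  simp only [posAt, Finset.mem_inter, Finset.mem_filter]
  tauto

def availF (G₀ : Finset α) (a : ℕ → Finset ℕ) : ℕ → Finset α
  | 0 => G₀
  | t+1 => (availF G₀ a t) \ posAt (availF G₀ a t) (a t)

def posF (G₀ : Finset α) (a : ℕ → Finset ℕ) (t : ℕ) : Finset α :=
  posAt (availF G₀ a t) (a t)

lemma availF_succ (G₀ : Finset α) (a : ℕ → Finset ℕ) (t : ℕ) :
    availF G₀ a (t+1) = availF G₀ a t \ posF G₀ a t := rfl

lemma posF_subset (G₀ : Finset α) (a : ℕ → Finset ℕ) (t : ℕ) :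
    posF G₀ a t ⊆ availF G₀ a t := posAt_subset _ _

lemma availF_anti (G₀ : Finset α) (a : ℕ → Finset ℕ) {t t' : ℕ} (h : t ≤ t') :
    availF G₀ a t' ⊆ availF G₀ a t := by
  induction t' with
  | zero => rw [Nat.le_zero.1 h]
  | succ v ih =>
    rcases Nat.eq_or_lt_of_le h with rfl | h'
    · rfl
    · exact (Finset.sdiff_subset).trans (ih (by omega))

lemma posF_disjoint (G₀ : Finset α) (a : ℕ → Finset ℕ) {t t' : ℕ} (h : t < t') :
    Disjoint (posF G₀ a t) (posF G₀ a t') := by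
  have h1 : posF G₀ a t' ⊆ availF G₀ a t' := posF_subset _ _ _
  have h2 : availF G₀ a t' ⊆ availF G₀ a (t+1) := availF_anti _ _ h
  rw [availF_succ] at h2
  exact Finset.disjoint_left.2 fun x hx hx' =>
    (Finset.mem_sdiff.1 (h2 (h1 hx'))).2 hx

lemma availF_congr (G₀ : Finset α) (a a' : ℕ → Finset ℕ) (t : ℕ)
    (h : ∀ j < t, a j = a' j) : availF G₀ a t = availF G₀ a' t := by
  induction t with
  | zero => rfl
  | succ v ih =>
    have hv := ih (fun j hj => h j (by omega))
    rw [availF_succ, availF_succ, posF, posF, hv, h v (by omega)]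

lemma card_availF (G₀ : Finset α) (a : ℕ → Finset ℕ) (ℓ : ℕ) :
    ∀ t, (∀ j < t, a j ⊆ Finset.range (G₀.card - j * ℓ) ∧ (a j).card = ℓ) →
    t * ℓ ≤ G₀.card → (availF G₀ a t).card = G₀.card - t * ℓ := by
  intro t
  induction t with
  | zero => simp [availF]
  | succ v ih =>
    intro hj hle
    have hvle : v * ℓ ≤ G₀.card := by
      have : v * ℓ + ℓ = (v+1) * ℓ := by ring
      omega
    have hcard := ih (fun j hjv => hj j (by omega)) hvle
    have hsubA : a v ⊆ Finset.range ((availF G₀ a v).card) := by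
      rw [hcard]; exact (hj v (by omega)).1
    have hposcard : (posF G₀ a v).card = ℓ := by
      rw [posF, card_posAt _ _ hsubA, (hj v (by omega)).2]
    rw [availF_succ, Finset.card_sdiff_of_subset (posF_subset _ _ _), hposcard, hcard]
    have : (v+1) * ℓ = v * ℓ + ℓ := by ring
    omega

lemma card_posF (G₀ : Finset α) (a : ℕ → Finset ℕ) (ℓ : ℕ) (t : ℕ)
    (hj : ∀ j ≤ t, a j ⊆ Finset.range (G₀.card - j * ℓ) ∧ (a j).card = ℓ)
    (hle : (t+1) * ℓ ≤ G₀.card) : (posF G₀ a t).card = ℓ := by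
  have hvle : t * ℓ ≤ G₀.card := by
    have : t * ℓ + ℓ = (t+1) * ℓ := by ring
    omega
  have hcard := card_availF G₀ a ℓ t (fun j hjv => hj j (by omega)) hvle
  rw [posF, card_posAt _ _ (by rw [hcard]; exact (hj t (le_refl t)).1), (hj t (le_refl t)).2]


lemma posF_def {α : Type*} [LinearOrder α] (G₀ : Finset α) (a : ℕ → Finset ℕ) (t : ℕ) :
    posF G₀ a t = posAt (availF G₀ a t) (a t) := rfl




lemma H2_nonneg {a : ℝ} (h0 : 0 ≤ a) (h1 : a ≤ 1) : 0 ≤ H2 a := by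
  unfold H2
  have h1' : Real.log a ≤ 0 := Real.log_nonpos h0 h1
  have h2' : Real.log (1 - a) ≤ 0 := Real.log_nonpos (by linarith) (by linarith)
  nlinarith [mul_nonneg h0 (neg_nonneg.2 h1'), mul_nonneg (by linarith : (0:ℝ) ≤ 1 - a) (neg_nonneg.2 h2')]

lemma H2_continuousAt {a : ℝ} (h0 : 0 < a) (h1 : a < 1) : ContinuousAt H2 a := by
  unfold H2
  fun_prop (disch := (norm_num; linarith))

lemma choose_le_exp_entropy (m k : ℕ) (hk : k ≤ m) :
    (m.choose k : ℝ) ≤ Real.exp (m * H2 (k / m)) := by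
  rcases Nat.eq_zero_or_pos m with hm | hm
  · subst hm
    interval_cases k
    simp [H2]
  rcases Nat.eq_zero_or_pos k with hk0 | hk0
  · subst hk0
    simp [H2]
  rcases eq_or_lt_of_le hk with hkm | hkm
  · subst hkm
    have : (k:ℝ)/(k:ℝ) = 1 := div_self (by positivity)
    simp [H2, this]
  set p : ℝ := k / m with hp
  have hmp : (0:ℝ) < m := by positivity
  have hp0 : 0 < p := by positivity
  have hp1 : p < 1 := by
    rw [hp, div_lt_one hmp]; exact_mod_cast hkm
  have h1p : (0:ℝ) < 1 - p := by linarith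
  have hchoose : (0:ℝ) < (m.choose k : ℝ) := by exact_mod_cast Nat.choose_pos hk
  have key : (m.choose k : ℝ) * (p ^ k * (1 - p) ^ (m - k)) ≤ 1 := by
    have h := add_pow p (1 - p) m
    have hsum : ∑ i ∈ Finset.range (m + 1), p ^ i * (1 - p) ^ (m - i) * (m.choose i : ℝ) = 1 := by
      rw [← h]; norm_num
    calc (m.choose k : ℝ) * (p ^ k * (1 - p) ^ (m - k))
        = p ^ k * (1 - p) ^ (m - k) * (m.choose k : ℝ) := by ring
      _ ≤ ∑ i ∈ Finset.range (m + 1), p ^ i * (1 - p) ^ (m - i) * (m.choose i : ℝ) :=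
          Finset.single_le_sum
            (f := fun i => p ^ i * (1 - p) ^ (m - i) * (m.choose i : ℝ))
            (fun i _ => mul_nonneg (mul_nonneg (pow_nonneg hp0.le _) (pow_nonneg h1p.le _))
              (Nat.cast_nonneg _))
            (Finset.mem_range.2 (by omega))
      _ = 1 := hsum
  have hpos : (0:ℝ) < p ^ k * (1 - p) ^ (m - k) :=
    mul_pos (pow_pos hp0 _) (pow_pos h1p _)
  have hcle : (m.choose k : ℝ) ≤ (p ^ k * (1 - p) ^ (m - k))⁻¹ := by
    have h2 := mul_le_mul_of_nonneg_right key (le_of_lt (inv_pos.2 hpos))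
    rwa [one_mul, mul_assoc, mul_inv_cancel₀ hpos.ne', mul_one] at h2
  have e1 : (p ^ k)⁻¹ = Real.exp (-((k:ℝ) * Real.log p)) := by
    rw [Real.exp_neg, ← Real.log_pow, Real.exp_log (pow_pos hp0 k)]
  have e2 : ((1 - p) ^ (m - k))⁻¹ = Real.exp (-(((m:ℝ) - k) * Real.log (1 - p))) := by
    rw [Real.exp_neg, ← Nat.cast_sub hk, ← Real.log_pow, Real.exp_log (pow_pos h1p _)]
  have hH : (m:ℝ) * H2 p = -((k:ℝ) * Real.log p) + -(((m:ℝ) - k) * Real.log (1 - p)) := by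
    unfold H2
    rw [hp]
    field_simp
    ring
  calc (m.choose k : ℝ) ≤ (p ^ k * (1 - p) ^ (m - k))⁻¹ := hcle
    _ = (p ^ k)⁻¹ * ((1 - p) ^ (m - k))⁻¹ := by rw [mul_inv]
    _ = Real.exp ((m:ℝ) * H2 p) := by rw [e1, e2, ← Real.exp_add, hH]



lemma log_factorial_ge (s : ℕ) (hs : 1 ≤ s) :
    (s:ℝ) * Real.log s - s + 1 ≤ Real.log (s.factorial) := by
  induction s with
  | zero => omega
  | succ t ih =>
    rcases Nat.eq_zero_or_pos t with ht | ht
    · subst ht; simp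
    have ih' := ih ht
    have htp : (0:ℝ) < t := by positivity
    have hlog : Real.log ((t:ℝ)+1) - Real.log t ≤ 1 / t := by
      rw [← Real.log_div (by positivity) (by positivity)]
      have := Real.log_le_sub_one_of_pos (x := ((t:ℝ)+1)/t) (by positivity)
      calc Real.log (((t:ℝ)+1)/t) ≤ ((t:ℝ)+1)/t - 1 := this
        _ = 1/t := by field_simp; ring
    have hfac : Real.log ((t+1).factorial) = Real.log ((t:ℝ)+1) + Real.log (t.factorial) := by
      rw [Nat.factorial_succ]
      push_cast
      rw [Real.log_mul (by positivity) (by exact_mod_cast (Nat.factorial_pos t).ne')]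
    rw [hfac]
    push_cast
    have h1 : (t:ℝ) * Real.log ((t:ℝ)+1) - t * Real.log t ≤ 1 := by
      have := mul_le_mul_of_nonneg_left hlog htp.le
      rw [mul_sub] at this
      calc (t:ℝ) * Real.log ((t:ℝ)+1) - t * Real.log t ≤ (t:ℝ) * (1/t) := this
        _ = 1 := by field_simp
    linarith

lemma pow_mul_choose_le (c N ℓ : ℕ) (hc : 1 ≤ c) (h : c * ℓ ≤ N) :
    ∀ u, u ≤ ℓ → c ^ u * (N - u).choose (ℓ - u) ≤ N.choose ℓ := by
  intro u
  induction u with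
  | zero => simp
  | succ v ih =>
    intro hv
    have hvℓ : v < ℓ := by omega
    have hN : ℓ ≤ N := le_trans (by nlinarith) h
    have hvN : v < N := by omega
    have eX : (N - (v+1)).choose (ℓ - (v+1)) = (N - v - 1).choose (ℓ - v - 1) := by
      congr 1 <;> omega
    have step : c * (N - (v+1)).choose (ℓ - (v+1)) ≤ (N - v).choose (ℓ - v) := by
      have hkey : (N - v) * (N - v - 1).choose (ℓ - v - 1) = (N - v).choose (ℓ - v) * (ℓ - v) := by
        have h2 := Nat.add_one_mul_choose_eq (N - v - 1) (ℓ - v - 1)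
        have e1 : N - v - 1 + 1 = N - v := by omega
        have e2 : ℓ - v - 1 + 1 = ℓ - v := by omega
        rw [e1, e2] at h2
        exact h2
      have hcle : c * (ℓ - v) ≤ N - v := by
        have h3 : c * (ℓ - v) + c * v = c * ℓ := by rw [← Nat.mul_add]; congr 1; omega
        have hcv : v ≤ c * v := Nat.le_mul_of_pos_left v hc
        omega
      have h4 : (c * (N - (v+1)).choose (ℓ - (v+1))) * (ℓ - v) ≤ (N - v).choose (ℓ - v) * (ℓ - v) := by
        rw [eX]
        calc (c * (N - v - 1).choose (ℓ - v - 1)) * (ℓ - v)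
            = (c * (ℓ - v)) * ((N - v - 1).choose (ℓ - v - 1)) := by ring
          _ ≤ (N - v) * ((N - v - 1).choose (ℓ - v - 1)) :=
              Nat.mul_le_mul_right _ hcle
          _ = (N - v).choose (ℓ - v) * (ℓ - v) := hkey
      exact Nat.le_of_mul_le_mul_right h4 (by omega)
    calc c ^ (v+1) * (N - (v+1)).choose (ℓ - (v+1))
        = c ^ v * (c * (N - (v+1)).choose (ℓ - (v+1))) := by ring
      _ ≤ c ^ v * (N - v).choose (ℓ - v) := Nat.mul_le_mul_left _ step
      _ ≤ N.choose ℓ := ih (by omega)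

lemma prod_shift_two (q : ℕ) : ∏ j ∈ Finset.range q, (j + 2) = (q + 1).factorial := by
  induction q with
  | zero => simp
  | succ v ih =>
    rw [Finset.prod_range_succ, ih, Nat.factorial_succ (v+1)]
    ring

lemma prod_desc_eq_factorial (q : ℕ) :
    ∏ t ∈ Finset.range q, (q + 1 - t) = (q + 1).factorial := by
  rw [← Finset.prod_range_reflect (fun t => q + 1 - t) q, ← prod_shift_two q]
  apply Finset.prod_congr rfl
  intro j hj
  rw [Finset.mem_range] at hj
  omega



lemma subset_count (N u ℓ : ℕ) (S : Finset ℕ) (hS : S ⊆ Finset.range N) (hScard : S.card = u)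
    (hu : u ≤ ℓ) :
    (((Finset.range N).powersetCard ℓ).filter (fun B => S ⊆ B)).card ≤ (N - u).choose (ℓ - u) := by
  classical
  have : (((Finset.range N) \ S).powersetCard (ℓ - u)).card = (N - u).choose (ℓ - u) := by
    rw [Finset.card_powersetCard, Finset.card_sdiff_of_subset hS, Finset.card_range, hScard]
  rw [← this]
  apply Finset.card_le_card_of_injOn (fun B => B \ S)
  · intro B hB
    simp only [Finset.mem_coe] at hB ⊢
    rw [Finset.mem_filter, Finset.mem_powersetCard] at hB
    rw [Finset.mem_powersetCard]
    constructor
    · exact Finset.sdiff_subset_sdiff hB.1.1 (le_refl S)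
    · rw [Finset.card_sdiff_of_subset hB.2, hB.1.2, hScard]
  · intro B hB B' hB' hEq
    simp only [Finset.coe_filter, Set.mem_setOf_eq] at hB hB'
    have h1 : B = B \ S ∪ S := by rw [Finset.sdiff_union_of_subset hB.2]
    have h2 : B' = B' \ S ∪ S := by rw [Finset.sdiff_union_of_subset hB'.2]
    simp only [] at hEq
    rw [h1, h2, hEq]

lemma bad_count (N u ℓ : ℕ) (A : Finset ℕ) (hA : A ∈ (Finset.range N).powersetCard ℓ)
    (hu : u ≤ ℓ) :
    (((Finset.range N).powersetCard ℓ).filter (fun B => u ≤ (A ∩ B).card)).card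
      ≤ ℓ.choose u * (N - u).choose (ℓ - u) := by
  classical
  rw [Finset.mem_powersetCard] at hA
  have hsub : ((Finset.range N).powersetCard ℓ).filter (fun B => u ≤ (A ∩ B).card)
      ⊆ (A.powersetCard u).biUnion
        (fun S => ((Finset.range N).powersetCard ℓ).filter (fun B => S ⊆ B)) := by
    intro B hB
    rw [Finset.mem_filter] at hB
    obtain ⟨S, hS1, hS2⟩ := Finset.exists_subset_card_eq hB.2
    rw [Finset.mem_biUnion]
    refine ⟨S, ?_, ?_⟩
    · rw [Finset.mem_powersetCard]
      exact ⟨hS1.trans Finset.inter_subset_left, hS2⟩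
    · rw [Finset.mem_filter]
      exact ⟨hB.1, hS1.trans Finset.inter_subset_right⟩
  calc (((Finset.range N).powersetCard ℓ).filter (fun B => u ≤ (A ∩ B).card)).card
      ≤ ((A.powersetCard u).biUnion
        (fun S => ((Finset.range N).powersetCard ℓ).filter (fun B => S ⊆ B))).card :=
        Finset.card_le_card hsub
    _ ≤ ∑ S ∈ A.powersetCard u,
        (((Finset.range N).powersetCard ℓ).filter (fun B => S ⊆ B)).card :=
        Finset.card_biUnion_le
    _ ≤ ∑ S ∈ A.powersetCard u, (N - u).choose (ℓ - u) := by
        apply Finset.sum_le_sum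
        intro S hS
        rw [Finset.mem_powersetCard] at hS
        exact subset_count N u ℓ S (hS.1.trans hA.1) hS.2 hu
    _ = (A.powersetCard u).card * (N - u).choose (ℓ - u) := by
        rw [Finset.sum_const, smul_eq_mul]
    _ = ℓ.choose u * (N - u).choose (ℓ - u) := by
        rw [Finset.card_powersetCard, hA.2]

lemma greedy_code (N ℓ u : ℕ) (hu : 1 ≤ u) (huℓ : u ≤ ℓ) (hℓN : ℓ ≤ N) :
    ∃ F : Finset (Finset ℕ),
      (∀ A ∈ F, A ⊆ Finset.range N ∧ A.card = ℓ) ∧ F.Nonempty ∧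
      (∀ A ∈ F, ∀ B ∈ F, A ≠ B → (A ∩ B).card < u) ∧
      N.choose ℓ ≤ F.card * (ℓ.choose u * (N - u).choose (ℓ - u)) := by
  classical
  set P := (Finset.range N).powersetCard ℓ with hP
  set 𝒮 := P.powerset.filter (fun F => ∀ A ∈ F, ∀ B ∈ F, A ≠ B → (A ∩ B).card < u) with h𝒮
  have h𝒮ne : 𝒮.Nonempty := ⟨∅, by simp [h𝒮]⟩
  obtain ⟨F, hF𝒮, hFmax⟩ := Finset.exists_max_image 𝒮 Finset.card h𝒮ne
  rw [h𝒮, Finset.mem_filter, Finset.mem_powerset] at hF𝒮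
  obtain ⟨hFP, hFpair⟩ := hF𝒮
  -- nonempty
  obtain ⟨A₀, hA₀sub, hA₀card⟩ := Finset.exists_subset_card_eq (by rw [Finset.card_range]; exact hℓN :
    ℓ ≤ (Finset.range N).card)
  have hA₀P : A₀ ∈ P := by rw [hP, Finset.mem_powersetCard]; exact ⟨hA₀sub, hA₀card⟩
  have hFne : F.Nonempty := by
    by_contra hemp
    rw [Finset.not_nonempty_iff_eq_empty] at hemp
    have : ({A₀} : Finset (Finset ℕ)) ∈ 𝒮 := by
      rw [h𝒮, Finset.mem_filter, Finset.mem_powerset]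
      constructor
      · simp [hA₀P]
      · intro A hA B hB hAB
        simp only [Finset.mem_singleton] at hA hB
        exact absurd (hA.trans hB.symm) hAB
    have := hFmax _ this
    simp [hemp] at this
  -- covering
  have hcover : ∀ B ∈ P, ∃ A ∈ F, u ≤ (A ∩ B).card := by
    intro B hBP
    by_contra hnot
    push_neg at hnot
    have hBF : B ∉ F := by
      intro hBF
      have := hnot B hBF
      rw [Finset.inter_self] at this
      rw [hP, Finset.mem_powersetCard] at hBP
      omega
    have hins : insert B F ∈ 𝒮 := by
      rw [h𝒮, Finset.mem_filter, Finset.mem_powerset]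
      constructor
      · exact Finset.insert_subset hBP hFP
      · intro A hA A' hA' hAA'
        rw [Finset.mem_insert] at hA hA'
        rcases hA with rfl | hA
        · rcases hA' with rfl | hA'
          · exact absurd rfl hAA'
          · have := hnot A' hA'
            rwa [Finset.inter_comm]
        · rcases hA' with rfl | hA'
          · exact hnot A hA
          · exact hFpair A hA A' hA' hAA'
    have := hFmax _ hins
    rw [Finset.card_insert_of_notMem hBF] at this
    omega
  refine ⟨F, ?_, hFne, hFpair, ?_⟩
  · intro A hA
    have := hFP hA
    rw [hP, Finset.mem_powersetCard] at this
    exact this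
  · have hPsub : P ⊆ F.biUnion (fun A => P.filter (fun B => u ≤ (A ∩ B).card)) := by
      intro B hB
      obtain ⟨A, hA, hAB⟩ := hcover B hB
      rw [Finset.mem_biUnion]
      exact ⟨A, hA, Finset.mem_filter.2 ⟨hB, hAB⟩⟩
    calc N.choose ℓ = P.card := by rw [hP, Finset.card_powersetCard, Finset.card_range]
      _ ≤ (F.biUnion (fun A => P.filter (fun B => u ≤ (A ∩ B).card))).card :=
          Finset.card_le_card hPsub
      _ ≤ ∑ A ∈ F, (P.filter (fun B => u ≤ (A ∩ B).card)).card := Finset.card_biUnion_le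
      _ ≤ ∑ A ∈ F, ℓ.choose u * (N - u).choose (ℓ - u) := by
          apply Finset.sum_le_sum
          intro A hA
          exact bad_count N u ℓ A (hFP hA) huℓ
      _ = F.card * (ℓ.choose u * (N - u).choose (ℓ - u)) := by
          rw [Finset.sum_const, smul_eq_mul]

lemma exists_code (n : ℕ) (K : Finset ℝ) (hK : ∀ k ∈ K, 0 ≤ k ∧ k < 1) (hKq : 1 ≤ K.card)
    (ℓ u : ℕ) (hu1 : 1 ≤ u) (huℓ : u ≤ ℓ) (hn : (K.card + 1) * ℓ ≤ n) :
    ∃ (M : Type) (_ : Fintype M) (_ : Nonempty M) (f : M → Fin n → ℝ),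
      (∀ m i, f m i ∈ insert (1:ℝ) K) ∧
      (∀ m : M, ∀ k ∈ K, (Finset.univ.filter (fun i => f m i = k)).card = ℓ) ∧
      (∀ m m' : M, m ≠ m' → ∃ k ∈ K,
        ((Finset.univ.filter (fun i => f m i = k ∧ f m' i = k)).card : ℕ) < u ∧
        ∀ j ∈ K, j < k → (Finset.univ.filter (fun i => f m i = k ∧ f m' i = j)).card = 0) ∧
      ((K.card + 1).factorial : ℕ) ^ u ≤ Fintype.card M * (ℓ.choose u) ^ K.card := by
  classical
  set q := K.card with hq
  have κ : Fin q ≃o {x // x ∈ K} := K.orderIsoOfFin rfl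
  -- greedy codes at each level
  have hgr : ∀ t : Fin q, ∃ F : Finset (Finset ℕ),
      (∀ A ∈ F, A ⊆ Finset.range (n - (t:ℕ) * ℓ) ∧ A.card = ℓ) ∧ F.Nonempty ∧
      (∀ A ∈ F, ∀ B ∈ F, A ≠ B → (A ∩ B).card < u) ∧
      (n - (t:ℕ)*ℓ).choose ℓ ≤ F.card * (ℓ.choose u * ((n - (t:ℕ)*ℓ) - u).choose (ℓ - u)) := by
    intro t
    apply greedy_code _ _ _ hu1 huℓ
    have h1 : ((t:ℕ)+1) * ℓ ≤ (q+1) * ℓ := Nat.mul_le_mul_right ℓ (by omega)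
    have h2 : ((t:ℕ)+1) * ℓ = (t:ℕ)*ℓ + ℓ := by ring
    omega
  choose F hF1 hF2 hF3 hF4 using hgr
  set M := (∀ t : Fin q, {A // A ∈ F t}) with hM
  have hMne : Nonempty M := ⟨fun t => ⟨(hF2 t).choose, (hF2 t).choose_spec⟩⟩
  -- the underlying subset-valued function
  set aM : M → ℕ → Finset ℕ := fun m t => if h : t < q then ((m ⟨t, h⟩ : Finset ℕ)) else ∅
    with haM
  have haMt : ∀ (m : M) (t : Fin q), aM m (t:ℕ) = ↑(m t) := by
    intro m t
    simp only [haM, dif_pos t.isLt, Fin.eta]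
  have hprop : ∀ (m : M) (j : ℕ), j < q →
      aM m j ⊆ Finset.range (n - j * ℓ) ∧ (aM m j).card = ℓ := by
    intro m j hj
    have := hF1 ⟨j, hj⟩ _ (m ⟨j, hj⟩).2
    simpa only [haM, dif_pos hj] using this
  have hG₀ : (Finset.univ : Finset (Fin n)).card = n := by
    rw [Finset.card_univ, Fintype.card_fin]
  have hmul : ∀ t : ℕ, t < q → ((t:ℕ)+1) * ℓ ≤ n := by
    intro t ht
    exact le_trans (Nat.mul_le_mul_right ℓ (by omega)) hn
  have hposcard : ∀ (m : M) (t : Fin q), (posF (Finset.univ : Finset (Fin n)) (aM m) (t:ℕ)).card = ℓ := by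
    intro m t
    refine card_posF (Finset.univ : Finset (Fin n)) (aM m) ℓ (t:ℕ) ?_
      (by rw [hG₀]; exact hmul _ t.isLt)
    intro j hj
    rw [hG₀]
    exact hprop m j (lt_of_le_of_lt hj t.isLt)
  have havailcard : ∀ (m : M) (t : Fin q),
      (availF (Finset.univ : Finset (Fin n)) (aM m) (t:ℕ)).card = n - (t:ℕ) * ℓ := by
    intro m t
    have := card_availF (Finset.univ : Finset (Fin n)) (aM m) ℓ (t:ℕ)
      (fun j hj => by rw [hG₀]; exact hprop m j (lt_trans hj t.isLt))
      (by
        rw [hG₀]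
        have h1 := hmul (t:ℕ) t.isLt
        have h2 : ((t:ℕ)+1)*ℓ = (t:ℕ)*ℓ + ℓ := by ring
        omega)
    rwa [hG₀] at this
  -- the code
  obtain ⟨f, hf⟩ : ∃ f : M → Fin n → ℝ, ∀ m i, f m i =
      if h : ∃ t : Fin q, i ∈ posF (Finset.univ : Finset (Fin n)) (aM m) (t:ℕ)
      then ((κ h.choose : {x // x ∈ K}) : ℝ) else 1 := ⟨_, fun _ _ => rfl⟩
  have hdisj : ∀ (m : M) (t t' : Fin q), t ≠ t' →
      Disjoint (posF (Finset.univ : Finset (Fin n)) (aM m) (t:ℕ)) (posF (Finset.univ : Finset (Fin n)) (aM m) (t':ℕ)) := by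
    intro m t t' htt'
    rcases lt_or_gt_of_ne (fun h => htt' (Fin.ext h) : (t:ℕ) ≠ (t':ℕ)) with h | h
    · exact posF_disjoint _ _ h
    · exact (posF_disjoint _ _ h).symm
  have hmem_of : ∀ (m : M) (i : Fin n) (t : Fin q),
      i ∈ posF (Finset.univ : Finset (Fin n)) (aM m) (t:ℕ) → f m i = ((κ t : {x // x ∈ K}) : ℝ) := by
    intro m i t hi
    have hex : ∃ t' : Fin q, i ∈ posF (Finset.univ : Finset (Fin n)) (aM m) ((t':Fin q):ℕ) := ⟨t, hi⟩
    rw [hf, dif_pos hex]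
    congr 2
    by_contra hne
    exact Finset.disjoint_left.1 (hdisj m _ _ hne) hex.choose_spec hi
  have hval_iff : ∀ (m : M) (i : Fin n) (t : Fin q),
      f m i = ((κ t : {x // x ∈ K}) : ℝ) ↔ i ∈ posF (Finset.univ : Finset (Fin n)) (aM m) (t:ℕ) := by
    intro m i t
    constructor
    · intro h
      rw [hf] at h
      split_ifs at h with hex
      · have h2 : κ hex.choose = κ t := Subtype.coe_injective h
        have h3 : hex.choose = t := κ.injective h2
        rw [← h3]
        exact hex.choose_spec
      · exfalso
        have := (hK _ (κ t).2).2
        rw [← h] at this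
        exact lt_irrefl _ this
    · exact hmem_of m i t
  refine ⟨M, inferInstance, hMne, f, ?_, ?_, ?_, ?_⟩
  · -- membership
    intro m i
    rw [hf]
    split_ifs with hex
    · exact Finset.mem_insert_of_mem (κ hex.choose).2
    · exact Finset.mem_insert_self _ _
  · -- counts
    intro m k hk
    set t : Fin q := κ.symm ⟨k, hk⟩ with ht
    have hkt : ((κ t : {x // x ∈ K}) : ℝ) = k := by rw [ht, OrderIso.apply_symm_apply]
    have : Finset.univ.filter (fun i => f m i = k) = posF (Finset.univ : Finset (Fin n)) (aM m) (t:ℕ) := by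
      ext i
      rw [Finset.mem_filter]
      rw [← hkt]
      constructor
      · intro h; exact (hval_iff m i t).1 h.2
      · intro h; exact ⟨Finset.mem_univ i, (hval_iff m i t).2 h⟩
    rw [this, hposcard]
  · -- pairwise condition
    intro m m' hmm'
    have hTne : (Finset.univ.filter (fun t : Fin q => m t ≠ m' t)).Nonempty := by
      obtain ⟨t, ht⟩ := Function.ne_iff.1 hmm'
      exact ⟨t, Finset.mem_filter.2 ⟨Finset.mem_univ t, ht⟩⟩
    set t₀ : Fin q := (Finset.univ.filter (fun t : Fin q => m t ≠ m' t)).min' hTne with ht₀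
    have ht₀mem : m t₀ ≠ m' t₀ := by
      have := Finset.min'_mem _ hTne
      rw [Finset.mem_filter] at this
      exact this.2
    have hpref0 : ∀ jf : Fin q, jf < t₀ → m jf = m' jf := by
      intro jf hjf
      by_contra hne
      have : t₀ ≤ jf := Finset.min'_le (Finset.univ.filter (fun t : Fin q => m t ≠ m' t)) jf
        (Finset.mem_filter.2 ⟨Finset.mem_univ jf, hne⟩)
      exact absurd hjf (not_lt.2 this)
    have hprefix : ∀ j : ℕ, j < (t₀:ℕ) → aM m j = aM m' j := by
      intro j hj
      have hjq : j < q := lt_trans hj t₀.isLt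
      have : m ⟨j, hjq⟩ = m' ⟨j, hjq⟩ := hpref0 ⟨j, hjq⟩ hj
      simp only [haM, dif_pos hjq, this]
    have havail : availF (Finset.univ : Finset (Fin n)) (aM m') (t₀:ℕ)
        = availF (Finset.univ : Finset (Fin n)) (aM m) (t₀:ℕ) :=
      availF_congr _ _ _ _ (fun j hj => (hprefix j hj).symm)
    refine ⟨((κ t₀ : {x // x ∈ K}) : ℝ), (κ t₀).2, ?_, ?_⟩
    · -- overlap bound
      have heq : Finset.univ.filter (fun i => f m i = ((κ t₀ : {x // x ∈ K}) : ℝ)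
            ∧ f m' i = ((κ t₀ : {x // x ∈ K}) : ℝ))
          = posF (Finset.univ : Finset (Fin n)) (aM m) (t₀:ℕ) ∩ posF (Finset.univ : Finset (Fin n)) (aM m') (t₀:ℕ) := by
        ext i
        rw [Finset.mem_filter, Finset.mem_inter]
        constructor
        · intro h; exact ⟨(hval_iff m i t₀).1 h.2.1, (hval_iff m' i t₀).1 h.2.2⟩
        · intro h; exact ⟨Finset.mem_univ i, (hval_iff m i t₀).2 h.1, (hval_iff m' i t₀).2 h.2⟩
      rw [heq]
      have h2 : posF (Finset.univ : Finset (Fin n)) (aM m') (t₀:ℕ)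
          = posAt (availF (Finset.univ : Finset (Fin n)) (aM m) (t₀:ℕ)) (aM m' (t₀:ℕ)) := by
        rw [posF_def, havail]
      rw [posF_def, h2]
      have hpa : posAt (availF (Finset.univ : Finset (Fin n)) (aM m) (t₀:ℕ)) (aM m (t₀:ℕ))
          ∩ posAt (availF (Finset.univ : Finset (Fin n)) (aM m) (t₀:ℕ)) (aM m' (t₀:ℕ))
          = posAt (availF (Finset.univ : Finset (Fin n)) (aM m) (t₀:ℕ))
            (aM m (t₀:ℕ) ∩ aM m' (t₀:ℕ)) := by
        ext x
        simp only [Finset.mem_inter, posAt, Finset.mem_filter]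
        tauto
      rw [hpa]
      have hsub : aM m (t₀:ℕ) ∩ aM m' (t₀:ℕ)
          ⊆ Finset.range ((availF (Finset.univ : Finset (Fin n)) (aM m) (t₀:ℕ)).card) := by
        rw [havailcard m t₀]
        exact (Finset.inter_subset_left).trans (hprop m (t₀:ℕ) t₀.isLt).1
      rw [card_posAt _ _ hsub]
      have hne : (↑(m t₀) : Finset ℕ) ≠ ↑(m' t₀) := fun h => ht₀mem (Subtype.ext h)
      have := hF3 t₀ _ (m t₀).2 _ (m' t₀).2 hne
      rw [haMt, haMt]
      exact this
    · -- no inversions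
      intro j hj hjlt
      set t₁ : Fin q := κ.symm ⟨j, hj⟩ with ht₁
      have hjt : ((κ t₁ : {x // x ∈ K}) : ℝ) = j := by rw [ht₁, OrderIso.apply_symm_apply]
      have ht₁lt : t₁ < t₀ := by
        rw [← κ.lt_iff_lt, ht₁, OrderIso.apply_symm_apply]
        exact Subtype.mk_lt_mk.2 hjlt
      have heq : Finset.univ.filter (fun i => f m i = ((κ t₀ : {x // x ∈ K}) : ℝ) ∧ f m' i = j)
          = posF (Finset.univ : Finset (Fin n)) (aM m) (t₀:ℕ) ∩ posF (Finset.univ : Finset (Fin n)) (aM m') (t₁:ℕ) := by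
        ext i
        rw [Finset.mem_filter, Finset.mem_inter, ← hjt]
        constructor
        · intro h; exact ⟨(hval_iff m i t₀).1 h.2.1, (hval_iff m' i t₁).1 h.2.2⟩
        · intro h; exact ⟨Finset.mem_univ i, (hval_iff m i t₀).2 h.1, (hval_iff m' i t₁).2 h.2⟩
      rw [heq]
      have h2 : posF (Finset.univ : Finset (Fin n)) (aM m') (t₁:ℕ)
          = posF (Finset.univ : Finset (Fin n)) (aM m) (t₁:ℕ) := by
        have hlt : (t₁:ℕ) < (t₀:ℕ) := ht₁lt
        rw [posF_def, posF_def, availF_congr (Finset.univ : Finset (Fin n)) (aM m') (aM m) (t₁:ℕ)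
          (fun j' hj' => (hprefix j' (lt_trans hj' hlt)).symm),
          hprefix (t₁:ℕ) hlt]
      rw [h2, Finset.card_eq_zero, ← Finset.disjoint_iff_inter_eq_empty]
      exact (posF_disjoint _ _ (ht₁lt : (t₁:ℕ) < (t₀:ℕ))).symm
  · -- cardinality bound
    have key : ∀ t : Fin q, (q + 1 - (t:ℕ)) ^ u ≤ (F t).card * ℓ.choose u := by
      intro t
      set Nt := n - (t:ℕ) * ℓ with hNt
      have hc1 : 1 ≤ q + 1 - (t:ℕ) := by have := t.isLt; omega
      have hc2 : (q + 1 - (t:ℕ)) * ℓ ≤ Nt := by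
        have e1 : (q + 1 - (t:ℕ)) * ℓ + (t:ℕ) * ℓ = (q+1) * ℓ := by
          rw [← Nat.add_mul]
          congr 1
          have := t.isLt
          omega
        omega
      have h2 := pow_mul_choose_le _ _ _ hc1 hc2 u huℓ
      have h3 := hF4 t
      have hℓNt : ℓ ≤ Nt := by
        have := hmul (t:ℕ) t.isLt
        have h4 : ((t:ℕ)+1)*ℓ = (t:ℕ)*ℓ + ℓ := by ring
        omega
      have hpos : 0 < (Nt - u).choose (ℓ - u) := Nat.choose_pos (by omega)
      have h5 : (q + 1 - (t:ℕ)) ^ u * ((Nt - u).choose (ℓ - u))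
          ≤ ((F t).card * ℓ.choose u) * ((Nt - u).choose (ℓ - u)) := by
        calc (q + 1 - (t:ℕ)) ^ u * ((Nt - u).choose (ℓ - u)) ≤ Nt.choose ℓ := h2
          _ ≤ (F t).card * (ℓ.choose u * (Nt - u).choose (ℓ - u)) := h3
          _ = ((F t).card * ℓ.choose u) * ((Nt - u).choose (ℓ - u)) := by ring
      exact Nat.le_of_mul_le_mul_right h5 hpos
    have hcardM : Fintype.card M = ∏ t : Fin q, (F t).card := by
      have h1 : Fintype.card M = ∏ t : Fin q, Fintype.card {A // A ∈ F t} := Fintype.card_pi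
      rw [h1]
      exact Finset.prod_congr rfl (fun t _ => Fintype.card_coe _)
    calc ((q + 1).factorial) ^ u = (∏ t ∈ Finset.range q, (q + 1 - t)) ^ u := by
          rw [prod_desc_eq_factorial]
      _ = ∏ t ∈ Finset.range q, (q + 1 - t) ^ u := by rw [← Finset.prod_pow]
      _ = ∏ t : Fin q, (q + 1 - (t:ℕ)) ^ u := (Fin.prod_univ_eq_prod_range _ _).symm
      _ ≤ ∏ t : Fin q, ((F t).card * ℓ.choose u) := Finset.prod_le_prod' (fun t _ => key t)
      _ = (∏ t : Fin q, (F t).card) * ∏ t : Fin q, ℓ.choose u := by rw [Finset.prod_mul_distrib]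
      _ = Fintype.card M * (ℓ.choose u) ^ q := by
          rw [hcardM, Finset.prod_const, Finset.card_univ, Fintype.card_fin]


set_option maxHeartbeats 1000000 in
/-- For every `γ ∈ (1/2,1)`, nonempty finite `K ⊂ [0,1)`, and positive
`r < γ·log|K̃| − γ − H₂(γ)`, overlay codes exist for all large enough block lengths. -/
theorem overlay_code_exists_asymptotic
    (γ : ℝ) (hγ1 : 1 / 2 < γ) (hγ2 : γ < 1)
    (K : Finset ℝ) (hKne : K.Nonempty) (hK : ∀ k ∈ K, 0 ≤ k ∧ k < 1)
    (r : ℝ) (hr : 0 < r)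
    (hrlt : r < γ * Real.log ((insert (1 : ℝ) K).card) - γ - H2 γ) :
    ∃ N₀ : ℕ, ∀ n : ℕ, N₀ ≤ n →
      ∃ (M : Type) (_ : Fintype M) (_ : Nonempty M) (f : M → Fin n → ℝ),
        IsOverlayCode n K r γ f := by
  classical
  set q := K.card with hq
  have hq1 : 1 ≤ q := Finset.card_pos.2 hKne
  have h1K : (1:ℝ) ∉ K := fun h => lt_irrefl 1 (hK 1 h).2
  have hins : (insert (1:ℝ) K).card = q + 1 := Finset.card_insert_of_notMem h1K
  set s := q + 1 with hs
  have hs2 : 2 ≤ s := by omega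
  have hγ0 : (0:ℝ) < γ := lt_trans (by norm_num) hγ1
  have hH2 : 0 ≤ H2 γ := H2_nonneg hγ0.le hγ2.le
  rw [hins] at hrlt
  set r' : ℝ := γ * Real.log ((s:ℕ):ℝ) - γ - H2 γ with hr'
  have hrr' : 0 < r' - r := by linarith
  have hδ : (0:ℝ) < γ / q := by positivity
  obtain ⟨δ₂, hδ₂pos, hball⟩ := Metric.continuousAt_iff.1 (H2_continuousAt hγ0 hγ2) (γ/q) hδ
  set B : ℕ := ⌈(1/δ₂)⌉₊ + ⌈r/(r'-r)⌉₊ + 1 with hB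
  refine ⟨s * (B + 1), fun n hn => ?_⟩
  set ℓ : ℕ := n / s with hℓ
  have hs0 : 0 < s := by omega
  have hsℓ : s * ℓ ≤ n := by
    rw [hℓ, mul_comm]; exact Nat.div_mul_le_self n s
  have hnlt : n < s * ℓ + s := by
    have h1 := Nat.div_add_mod n s
    have h2 := Nat.mod_lt n hs0
    rw [hℓ]
    omega
  have hℓB : B + 1 ≤ ℓ := by
    rw [hℓ, Nat.le_div_iff_mul_le hs0]
    rw [mul_comm] at hn
    exact hn
  have hℓ1 : 1 ≤ ℓ := by omega
  have hℓpos : (0:ℝ) < ℓ := by exact_mod_cast hℓ1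
  set u : ℕ := ⌊γ * ℓ⌋₊ + 1 with hu
  have hu1 : 1 ≤ u := by omega
  have huℓ : u ≤ ℓ := by
    rw [hu]
    have : ⌊γ * ℓ⌋₊ < ℓ := by
      rw [Nat.floor_lt (by positivity)]
      nlinarith
    omega
  have hγℓu : γ * ℓ < u := by
    rw [hu]; push_cast; exact Nat.lt_floor_add_one _
  have huγ : (u:ℝ) ≤ γ * ℓ + 1 := by
    rw [hu]; push_cast
    have := Nat.floor_le (show (0:ℝ) ≤ γ * ℓ by positivity)
    linarith
  -- entropy control
  have hinvℓ : 1/δ₂ < (ℓ:ℝ) := by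
    have h1 : (1/δ₂ : ℝ) ≤ ⌈1/δ₂⌉₊ := Nat.le_ceil _
    have h2 : (⌈1/δ₂⌉₊:ℝ) + 1 ≤ (ℓ:ℝ) := by
      have : ⌈1/δ₂⌉₊ + 1 ≤ ℓ := by omega
      exact_mod_cast this
    linarith
  have hH2u : H2 ((u:ℝ)/ℓ) < H2 γ + γ/q := by
    have hd : dist ((u:ℝ)/ℓ) γ < δ₂ := by
      rw [Real.dist_eq, abs_lt]
      have h1 : γ < (u:ℝ)/ℓ := by
        rw [lt_div_iff₀ hℓpos]; linarith
      have h2 : (u:ℝ)/ℓ ≤ γ + 1/ℓ := by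
        rw [div_le_iff₀ hℓpos]
        have : (γ + 1/ℓ) * ℓ = γ * ℓ + 1 := by field_simp
        linarith
      have h3 : 1/(ℓ:ℝ) < δ₂ := by
        rw [div_lt_iff₀ hℓpos]
        rw [div_lt_iff₀ hδ₂pos] at hinvℓ
        linarith [mul_comm δ₂ (ℓ:ℝ)]
      constructor <;> nlinarith
    have := hball hd
    rw [Real.dist_eq, abs_lt] at this
    linarith [this.1, this.2]
  have hℓr : r ≤ (ℓ:ℝ) * (r' - r) := by
    have h1 : (r/(r'-r) : ℝ) ≤ ⌈r/(r'-r)⌉₊ := Nat.le_ceil _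
    have h2 : (⌈r/(r'-r)⌉₊:ℝ) ≤ (ℓ:ℝ) := by
      have : ⌈r/(r'-r)⌉₊ ≤ ℓ := by omega
      exact_mod_cast this
    have h3 : r/(r'-r) ≤ (ℓ:ℝ) := le_trans h1 h2
    rw [div_le_iff₀ hrr'] at h3
    linarith
  -- get the code
  obtain ⟨M, inst, hMne, f, hmem, hcount, hpair, hcard⟩ :=
    exists_code n K hK hq1 ℓ u hu1 huℓ (by rw [← hs]; exact hsℓ)
  have hdiv : n / (insert (1:ℝ) K).card = ℓ := by rw [hins]
  refine ⟨M, inst, hMne, f, hmem, ?_, ?_, ?_⟩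
  · -- rate
    have hMpos : 0 < Fintype.card M := Fintype.card_pos
    have hcpos : 0 < ℓ.choose u := Nat.choose_pos huℓ
    have hfacpos : 0 < (s.factorial : ℝ) := by exact_mod_cast s.factorial_pos
    have hlog1 : (u:ℝ) * Real.log (s.factorial)
        ≤ Real.log (Fintype.card M) + q * Real.log (ℓ.choose u) := by
      have hcast : ((s.factorial : ℕ) : ℝ) ^ u ≤ (Fintype.card M : ℝ) * ((ℓ.choose u : ℕ):ℝ) ^ q := by
        have := hcard
        rw [← hs] at this
        exact_mod_cast this
      have hlhs : (0:ℝ) < ((s.factorial:ℕ):ℝ) ^ u := by positivity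
      have := Real.log_le_log hlhs hcast
      rw [Real.log_pow, Real.log_mul (by positivity) (by positivity), Real.log_pow] at this
      exact_mod_cast this
    have hlogchoose : Real.log (ℓ.choose u) ≤ (ℓ:ℝ) * H2 ((u:ℝ)/ℓ) := by
      have h1 := choose_le_exp_entropy ℓ u huℓ
      have h2 : (0:ℝ) < (ℓ.choose u : ℝ) := by exact_mod_cast hcpos
      calc Real.log (ℓ.choose u) ≤ Real.log (Real.exp ((ℓ:ℝ) * H2 ((u:ℝ)/ℓ))) :=
            Real.log_le_log h2 h1
        _ = (ℓ:ℝ) * H2 ((u:ℝ)/ℓ) := Real.log_exp _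
    have hLf : ((s:ℕ):ℝ) * Real.log ((s:ℕ):ℝ) - s + 1 ≤ Real.log (s.factorial) :=
      log_factorial_ge s (by omega)
    have hLfnn : 0 ≤ Real.log (s.factorial) :=
      Real.log_nonneg (by exact_mod_cast s.factorial_pos)
    -- main chain
    have hq0 : (0:ℝ) < q := by exact_mod_cast hq1
    have hqs : (q:ℝ) = (s:ℝ) - 1 := by rw [hs]; push_cast; ring
    have hH2unn : H2 ((u:ℝ)/ℓ) ≤ H2 γ + γ/q := hH2u.le
    have step1 : γ * ℓ * Real.log (s.factorial) - (q:ℝ) * (ℓ * H2 ((u:ℝ)/ℓ))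
        ≤ Real.log (Fintype.card M) := by
      have e1 : (γ * ℓ) * Real.log (s.factorial) ≤ (u:ℝ) * Real.log (s.factorial) :=
        mul_le_mul_of_nonneg_right hγℓu.le hLfnn
      have e2 : (q:ℝ) * Real.log (ℓ.choose u) ≤ (q:ℝ) * ((ℓ:ℝ) * H2 ((u:ℝ)/ℓ)) :=
        mul_le_mul_of_nonneg_left hlogchoose hq0.le
      linarith
    have step2 : (ℓ:ℝ) * ((s:ℝ) * r' + H2 γ)
        ≤ γ * ℓ * Real.log (s.factorial) - (q:ℝ) * (ℓ * H2 ((u:ℝ)/ℓ)) := by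
      have e3 : (q:ℝ) * (ℓ * H2 ((u:ℝ)/ℓ)) ≤ (q:ℝ) * (ℓ * (H2 γ + γ/q)) := by
        apply mul_le_mul_of_nonneg_left _ hq0.le
        exact mul_le_mul_of_nonneg_left hH2unn hℓpos.le
      have e4 : γ * ℓ * (((s:ℕ):ℝ) * Real.log ((s:ℕ):ℝ) - s + 1)
          ≤ γ * ℓ * Real.log (s.factorial) :=
        mul_le_mul_of_nonneg_left hLf (by positivity)
      have hqγ : (q:ℝ) * (γ/q) = γ := by
        rw [mul_div_assoc']
        exact mul_div_cancel_left₀ γ hq0.ne'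
      have e5 : (q:ℝ) * (ℓ * (H2 γ + γ/q)) = (ℓ:ℝ) * (q * H2 γ + γ) := by
        rw [show (q:ℝ) * (ℓ * (H2 γ + γ/q)) = (ℓ:ℝ) * ((q:ℝ) * H2 γ + (q:ℝ)*(γ/q)) by ring, hqγ]
      have e6 : γ * ℓ * (((s:ℕ):ℝ) * Real.log ((s:ℕ):ℝ) - s + 1)
          = (ℓ:ℝ) * ((s:ℝ) * (γ * Real.log ((s:ℕ):ℝ) - γ) + γ) := by
        push_cast
        ring
      have e7 : (ℓ:ℝ) * ((s:ℝ) * (γ * Real.log ((s:ℕ):ℝ) - γ) + γ) - (ℓ:ℝ) * (q * H2 γ + γ)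
          = (ℓ:ℝ) * ((s:ℝ) * r' + H2 γ) := by
        rw [hr', hqs]
        ring
      calc (ℓ:ℝ) * ((s:ℝ) * r' + H2 γ)
          = (ℓ:ℝ) * ((s:ℝ) * (γ * Real.log ((s:ℕ):ℝ) - γ) + γ) - (ℓ:ℝ) * (q * H2 γ + γ) :=
            e7.symm
        _ = γ * ℓ * (((s:ℕ):ℝ) * Real.log ((s:ℕ):ℝ) - s + 1) - (ℓ:ℝ) * (q * H2 γ + γ) := by
            rw [e6]
        _ ≤ γ * ℓ * Real.log (s.factorial) - (ℓ:ℝ) * (q * H2 γ + γ) := by linarith [e4]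
        _ = γ * ℓ * Real.log (s.factorial) - (q:ℝ) * (ℓ * (H2 γ + γ/q)) := by rw [e5]
        _ ≤ γ * ℓ * Real.log (s.factorial) - (q:ℝ) * (ℓ * H2 ((u:ℝ)/ℓ)) := by linarith [e3]
    have step3 : ((s:ℝ) * ℓ + s) * r ≤ (ℓ:ℝ) * ((s:ℝ) * r') := by
      have hs0' : (0:ℝ) < s := by exact_mod_cast hs0
      have e8 : (ℓ:ℝ) * ((s:ℝ) * r') = (s:ℝ) * ℓ * r + (s:ℝ) * (ℓ * (r' - r)) := by ring
      have e9 : (s:ℝ) * r ≤ (s:ℝ) * (ℓ * (r' - r)) := mul_le_mul_of_nonneg_left hℓr hs0'.le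
      linarith
    have step4 : (n:ℝ) * r ≤ ((s:ℝ) * ℓ + s) * r := by
      apply mul_le_mul_of_nonneg_right _ hr.le
      have : (n:ℝ) < (s:ℝ) * ℓ + s := by exact_mod_cast hnlt
      linarith
    have e10 : (ℓ:ℝ) * ((s:ℝ) * r') ≤ (ℓ:ℝ) * ((s:ℝ) * r' + H2 γ) :=
      mul_le_mul_of_nonneg_left (by linarith) hℓpos.le
    have hfinal : (n:ℝ) * r ≤ Real.log (Fintype.card M) :=
      le_trans step4 (le_trans step3 (le_trans e10 (le_trans step2 step1)))
    have hn0 : (0:ℝ) < n := by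
      have : 0 < n := lt_of_lt_of_le (Nat.mul_pos hs0 (Nat.succ_pos B)) hn
      exact_mod_cast this
    rw [le_div_iff₀ hn0]
    linarith [hfinal]
  · -- counts
    intro m k hk
    rw [hdiv]
    exact hcount m k hk
  · -- pairwise
    intro m m' hmm'
    obtain ⟨k, hkK, hover, hinv⟩ := hpair m m' hmm'
    refine ⟨k, hkK, ?_, hinv⟩
    rw [hdiv]
    have h1 : ((Finset.univ.filter (fun i => f m i = k ∧ f m' i = k)).card : ℝ) ≤ (⌊γ * ℓ⌋₊ : ℝ) := by
      have : (Finset.univ.filter (fun i => f m i = k ∧ f m' i = k)).card ≤ ⌊γ * (ℓ:ℝ)⌋₊ :=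
        Nat.lt_succ_iff.1 (show _ < Nat.succ _ from hover)
      exact_mod_cast this
    have h2 : (⌊γ * ℓ⌋₊:ℝ) ≤ γ * ℓ := Nat.floor_le (by positivity)
    linarith
end

section
/- Let a, b, c be integers with a > b > c ≥ 1, c ≥ b − (a − b), and a − 2b + c ≥ 1. Then −log( C(b,c)·C(a−b, b−c) / C(a,b) ) ≥ a·I₂(c/b ‖ b/a) − 1/3 − 2·log(a), where C(·,·) denotes the binomial coefficient. -/
open Real

section AuxNat

open Finset

private lemma step_id (n k j : ℕ) (hj : j < n) :
    k * (n - j) * (n.choose j * k ^ j * (n - k) ^ (n - j)) =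
    (j + 1) * (n - k) * (n.choose (j + 1) * k ^ (j + 1) * (n - k) ^ (n - (j + 1))) := by
  have h2 : n.choose (j + 1) * (j + 1) = n.choose j * (n - j) := Nat.choose_succ_right_eq n j
  have h1 : (n - k) ^ (n - j) = (n - k) ^ (n - (j + 1)) * (n - k) := by
    rw [← pow_succ]; congr 1; omega
  rw [h1]
  calc k * (n - j) * (n.choose j * k ^ j * ((n - k) ^ (n - (j + 1)) * (n - k)))
      = (n.choose j * (n - j)) * (k ^ j * k * ((n - k) ^ (n - (j + 1)) * (n - k))) := by ring
    _ = (n.choose (j + 1) * (j + 1)) * (k ^ j * k * ((n - k) ^ (n - (j + 1)) * (n - k))) := by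
        rw [h2]
    _ = (j + 1) * (n - k) * (n.choose (j + 1) * k ^ (j + 1) * (n - k) ^ (n - (j + 1))) := by
        rw [pow_succ]; ring

private lemma t_up (n k j : ℕ) (hkn : k < n) (hj : j < k) :
    n.choose j * k ^ j * (n - k) ^ (n - j) ≤
      n.choose (j + 1) * k ^ (j + 1) * (n - k) ^ (n - (j + 1)) := by
  have hjn : j < n := hj.trans hkn
  have c1 : (j + 1) * (n - k) ≤ k * (n - j) :=
    Nat.mul_le_mul (by omega) (by omega)
  have pos : 0 < (j + 1) * (n - k) := by
    have : 0 < n - k := by omega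
    positivity
  have key := step_id n k j hjn
  have : (j + 1) * (n - k) * (n.choose j * k ^ j * (n - k) ^ (n - j)) ≤
      (j + 1) * (n - k) * (n.choose (j + 1) * k ^ (j + 1) * (n - k) ^ (n - (j + 1))) := by
    rw [← key]
    exact Nat.mul_le_mul_right _ c1
  exact Nat.le_of_mul_le_mul_left this pos

private lemma t_down (n k j : ℕ) (hkj : k ≤ j) (hjn : j < n) :
    n.choose (j + 1) * k ^ (j + 1) * (n - k) ^ (n - (j + 1)) ≤
      n.choose j * k ^ j * (n - k) ^ (n - j) := by
  have c2 : k * (n - j) ≤ (j + 1) * (n - k) :=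
    Nat.mul_le_mul (by omega) (by omega)
  by_cases hk : k = n
  · omega
  have pos : 0 < (j + 1) * (n - k) := by
    have : 0 < n - k := by omega
    positivity
  have key := step_id n k j hjn
  have : (j + 1) * (n - k) * (n.choose (j + 1) * k ^ (j + 1) * (n - k) ^ (n - (j + 1))) ≤
      (j + 1) * (n - k) * (n.choose j * k ^ j * (n - k) ^ (n - j)) := by
    rw [← key]
    exact Nat.mul_le_mul_right _ c2
  exact Nat.le_of_mul_le_mul_left this pos

private lemma t_max (n k : ℕ) (hkn : k < n) : ∀ j, j ≤ n →
    n.choose j * k ^ j * (n - k) ^ (n - j) ≤ n.choose k * k ^ k * (n - k) ^ (n - k) := by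
  have below : ∀ d, d ≤ k → n.choose (k - d) * k ^ (k - d) * (n - k) ^ (n - (k - d)) ≤
      n.choose k * k ^ k * (n - k) ^ (n - k) := by
    intro d
    induction d with
    | zero => simp
    | succ d ih =>
      intro hd
      have h1 : k - (d + 1) < k := by omega
      have h2 : k - (d + 1) + 1 = k - d := by omega
      calc n.choose (k - (d + 1)) * k ^ (k - (d + 1)) * (n - k) ^ (n - (k - (d + 1)))
          ≤ n.choose (k - (d + 1) + 1) * k ^ (k - (d + 1) + 1) *
              (n - k) ^ (n - (k - (d + 1) + 1)) := t_up n k _ hkn h1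
        _ = n.choose (k - d) * k ^ (k - d) * (n - k) ^ (n - (k - d)) := by rw [h2]
        _ ≤ _ := ih (by omega)
  have above : ∀ d, k + d ≤ n → n.choose (k + d) * k ^ (k + d) * (n - k) ^ (n - (k + d)) ≤
      n.choose k * k ^ k * (n - k) ^ (n - k) := by
    intro d
    induction d with
    | zero => simp
    | succ d ih =>
      intro hd
      have : k + (d + 1) = (k + d) + 1 := by omega
      rw [this]
      calc n.choose ((k + d) + 1) * k ^ ((k + d) + 1) * (n - k) ^ (n - ((k + d) + 1))
          ≤ n.choose (k + d) * k ^ (k + d) * (n - k) ^ (n - (k + d)) :=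
            t_down n k _ (by omega) (by omega)
        _ ≤ _ := ih (by omega)
  intro j hj
  rcases le_or_gt j k with h | h
  · have := below (k - j) (by omega)
    rwa [show k - (k - j) = j by omega] at this
  · have := above (j - k) (by omega)
    rwa [show k + (j - k) = j by omega] at this

private lemma sum_eq (n k : ℕ) (hk : k ≤ n) :
    ∑ j ∈ range (n + 1), n.choose j * k ^ j * (n - k) ^ (n - j) = n ^ n := by
  have : n ^ n = (k + (n - k)) ^ n := by rw [Nat.add_sub_cancel' hk]
  rw [this, add_pow]
  exact Finset.sum_congr rfl fun j _ => by push_cast; ring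

private lemma choose_upper (n k : ℕ) (hk : k ≤ n) :
    n.choose k * k ^ k * (n - k) ^ (n - k) ≤ n ^ n := by
  rw [← sum_eq n k hk]
  exact Finset.single_le_sum (f := fun j => n.choose j * k ^ j * (n - k) ^ (n - j))
    (fun j _ => Nat.zero_le _) (Finset.mem_range.mpr (Nat.lt_succ_of_le hk))

private lemma choose_lower (n k : ℕ) (hkn : k < n) :
    n ^ n ≤ (n + 1) * (n.choose k * k ^ k * (n - k) ^ (n - k)) := by
  rw [← sum_eq n k hkn.le]
  calc ∑ j ∈ range (n + 1), n.choose j * k ^ j * (n - k) ^ (n - j)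
      ≤ ∑ _j ∈ range (n + 1), n.choose k * k ^ k * (n - k) ^ (n - k) :=
        Finset.sum_le_sum fun j hj => t_max n k hkn j (Nat.lt_succ_iff.mp (mem_range.mp hj))
    _ = (n + 1) * (n.choose k * k ^ k * (n - k) ^ (n - k)) := by
        rw [Finset.sum_const, card_range, smul_eq_mul]

end AuxNat

private lemma log_choose_ub (n k : ℕ) (hk0 : 0 < k) (hkn : k < n) :
    Real.log (n.choose k) ≤ n * Real.log n - k * Real.log k
      - ((n : ℝ) - k) * Real.log ((n : ℝ) - k) := by
  have hch : 0 < n.choose k := Nat.choose_pos hkn.le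
  have h' := (Nat.cast_le (α := ℝ)).mpr (choose_upper n k hkn.le)
  push_cast at h'
  rw [Nat.cast_sub hkn.le] at h'
  have hk' : (0 : ℝ) < k := by exact_mod_cast hk0
  have hnk : (0 : ℝ) < (n : ℝ) - k := by
    have : (k : ℝ) < n := by exact_mod_cast hkn
    linarith
  have hchR : (0 : ℝ) < (n.choose k : ℝ) := by exact_mod_cast hch
  have hlog := Real.log_le_log (by positivity) h'
  rw [Real.log_mul (by positivity) (by positivity),
    Real.log_mul (by positivity) (by positivity),
    Real.log_pow, Real.log_pow, Real.log_pow, Nat.cast_sub hkn.le] at hlog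
  linarith

private lemma log_choose_lb (n k : ℕ) (hk0 : 0 < k) (hkn : k < n) :
    n * Real.log n - k * Real.log k - ((n : ℝ) - k) * Real.log ((n : ℝ) - k)
      - Real.log ((n : ℝ) + 1) ≤ Real.log (n.choose k) := by
  have hch : 0 < n.choose k := Nat.choose_pos hkn.le
  have h' := (Nat.cast_le (α := ℝ)).mpr (choose_lower n k hkn)
  push_cast at h'
  rw [Nat.cast_sub hkn.le] at h'
  have hk' : (0 : ℝ) < k := by exact_mod_cast hk0
  have hn' : (0 : ℝ) < n := by exact_mod_cast hk0.trans hkn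
  have hnk : (0 : ℝ) < (n : ℝ) - k := by
    have : (k : ℝ) < n := by exact_mod_cast hkn
    linarith
  have hchR : (0 : ℝ) < (n.choose k : ℝ) := by exact_mod_cast hch
  have hlog := Real.log_le_log (by positivity) h'
  rw [Real.log_pow, Real.log_mul (by positivity) (by positivity),
    Real.log_mul (by positivity) (by positivity),
    Real.log_mul (by positivity) (by positivity),
    Real.log_pow, Real.log_pow, Nat.cast_sub hkn.le] at hlog
  linarith

private lemma I2_identity (A B C : ℝ) (hC : 0 < C) (hCB : C < B) (hBA : B < A)
    (hD : 0 < A - 2 * B + C) :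
    A * I2 (C / B) (B / A) =
      A * Real.log A - 2 * B * Real.log B - 2 * (A - B) * Real.log (A - B)
        + C * Real.log C + 2 * (B - C) * Real.log (B - C)
        + (A - 2 * B + C) * Real.log (A - 2 * B + C) := by
  have hB : 0 < B := hC.trans hCB
  have hA : 0 < A := hB.trans hBA
  have hAB : 0 < A - B := by linarith
  have hBC : 0 < B - C := by linarith
  have hB' : B ≠ 0 := ne_of_gt hB
  have hA' : A ≠ 0 := ne_of_gt hA
  have hAB' : A - B ≠ 0 := ne_of_gt hAB
  have hr : (B / A) * (1 - C / B) / (1 - B / A) = (B - C) / (A - B) := by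
    rw [show (1 : ℝ) - C / B = (B - C) / B by field_simp,
        show (1 : ℝ) - B / A = (A - B) / A by field_simp]
    field_simp
  have l1 : Real.log ((C / B) / (B / A)) = Real.log C + Real.log A - 2 * Real.log B := by
    rw [show (C / B) / (B / A) = (C * A) / (B * B) by field_simp,
        Real.log_div (by positivity) (by positivity),
        Real.log_mul (by positivity) (by positivity),
        Real.log_mul (by positivity) (by positivity)]
    ring
  have l2 : Real.log ((1 - C / B) / (1 - B / A)) =
      Real.log (B - C) + Real.log A - Real.log B - Real.log (A - B) := by
    rw [show (1 : ℝ) - C / B = (B - C) / B by field_simp,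
        show (1 : ℝ) - B / A = (A - B) / A by field_simp,
        show ((B - C) / B) / ((A - B) / A) = ((B - C) * A) / (B * (A - B)) by
          field_simp,
        Real.log_div (by positivity) (by positivity),
        Real.log_mul (by positivity) (by positivity),
        Real.log_mul (by positivity) (by positivity)]
    ring
  have l3 : Real.log (((B - C) / (A - B)) / (B / A)) =
      Real.log (B - C) + Real.log A - Real.log (A - B) - Real.log B := by
    rw [show ((B - C) / (A - B)) / (B / A) = ((B - C) * A) / ((A - B) * B) by
          field_simp,
        Real.log_div (by positivity) (by positivity),
        Real.log_mul (by positivity) (by positivity),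
        Real.log_mul (by positivity) (by positivity)]
    ring
  have l4 : Real.log ((1 - (B - C) / (A - B)) / (1 - B / A)) =
      Real.log (A - 2 * B + C) + Real.log A - 2 * Real.log (A - B) := by
    rw [show (1 : ℝ) - (B - C) / (A - B) = (A - 2 * B + C) / (A - B) by field_simp; ring,
        show (1 : ℝ) - B / A = (A - B) / A by field_simp,
        show ((A - 2 * B + C) / (A - B)) / ((A - B) / A) =
            ((A - 2 * B + C) * A) / ((A - B) * (A - B)) by field_simp,
        Real.log_div (by positivity) (by positivity),
        Real.log_mul (by positivity) (by positivity),
        Real.log_mul (by positivity) (by positivity)]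
    ring
  simp only [I2, D2]
  rw [hr, l1, l2, l3, l4]
  field_simp
  ring

/-- For integers `a > b > c ≥ 1` with `c ≥ b − (a − b)` and `a − 2b + c ≥ 1`,
`−log( C(b,c)·C(a−b,b−c) / C(a,b) ) ≥ a·I₂(c/b ‖ b/a) − 1/3 − 2·log a`. -/
theorem binom_ratio_log_bound (a b c : ℕ)
    (hba : b < a) (hcb : c < b) (hc : 1 ≤ c)
    (h1 : 2 * b ≤ a + c) (h2 : 2 * b + 1 ≤ a + c) :
    (a : ℝ) * I2 ((c : ℝ) / b) ((b : ℝ) / a) - 1 / 3 - 2 * Real.log a ≤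
      -Real.log (((b.choose c * (a - b).choose (b - c) : ℕ) : ℝ) / (a.choose b : ℝ)) := by
  have hb : 0 < b := by omega
  have ha : 0 < a := hb.trans hba
  have hA : (0 : ℝ) < a := by exact_mod_cast ha
  have hB : (0 : ℝ) < b := by exact_mod_cast hb
  have hC : (0 : ℝ) < c := by exact_mod_cast hc
  have hCB : (c : ℝ) < b := by exact_mod_cast hcb
  have hBA : (b : ℝ) < a := by exact_mod_cast hba
  have hD : (0 : ℝ) < (a : ℝ) - 2 * b + c := by
    have : (2 * b + 1 : ℝ) ≤ (a : ℝ) + c := by exact_mod_cast h2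
    linarith
  -- positivity of the binomial coefficients involved
  have hcb' : c ≤ b := hcb.le
  have hbc_le : b - c ≤ a - b := by omega
  have hbc_lt : b - c < a - b := by omega
  have hbc_pos : 0 < b - c := by omega
  have ch1 : 0 < b.choose c := Nat.choose_pos hcb'
  have ch2 : 0 < (a - b).choose (b - c) := Nat.choose_pos hbc_le
  have ch3 : 0 < a.choose b := Nat.choose_pos hba.le
  have ch1R : (0 : ℝ) < (b.choose c : ℝ) := by exact_mod_cast ch1
  have ch2R : (0 : ℝ) < ((a - b).choose (b - c) : ℝ) := by exact_mod_cast ch2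
  have ch3R : (0 : ℝ) < (a.choose b : ℝ) := by exact_mod_cast ch3
  -- rewrite the RHS
  have hRHS : -Real.log (((b.choose c * (a - b).choose (b - c) : ℕ) : ℝ) / (a.choose b : ℝ)) =
      Real.log (a.choose b) - Real.log (b.choose c) - Real.log ((a - b).choose (b - c)) := by
    push_cast
    rw [Real.log_div (by positivity) (by positivity),
      Real.log_mul (by positivity) (by positivity)]
    ring
  rw [hRHS]
  -- bounds on binomial coefficients
  have u1 := log_choose_ub b c hc hcb
  have u2 := log_choose_ub (a - b) (b - c) hbc_pos hbc_lt
  have l1 := log_choose_lb a b hb hba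
  rw [Nat.cast_sub hba.le, Nat.cast_sub hcb'] at u2
  rw [show ((a : ℝ) - b) - ((b : ℝ) - c) = (a : ℝ) - 2 * b + c by ring] at u2
  -- identity for a * I2
  have hid := I2_identity (a : ℝ) (b : ℝ) (c : ℝ) hC hCB hBA hD
  -- log (a + 1) ≤ 2 log a
  have ha3 : 3 ≤ a := by omega
  have hA3 : (3 : ℝ) ≤ (a : ℝ) := by exact_mod_cast ha3
  have hsq : (a : ℝ) + 1 ≤ (a : ℝ) * a := by nlinarith
  have hlog1 : Real.log ((a : ℝ) + 1) ≤ Real.log a + Real.log a := by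
    calc Real.log ((a : ℝ) + 1) ≤ Real.log ((a : ℝ) * a) :=
          Real.log_le_log (by positivity) hsq
      _ = Real.log a + Real.log a := Real.log_mul (by positivity) (by positivity)
  linarith
end

section
/- Let n and ℓ be positive integers with 2ℓ ≤ n and let γ ∈ (1/2,1). Then Σ_{i=⌈γℓ⌉}^{ℓ} C(ℓ,i)·C(n−ℓ, ℓ−i) / C(n,ℓ) ≤ exp( −n·| I₂(γ ‖ ℓ/n) − 1/(3n) − (2/n)·log(n·√ℓ) |⁺ ). Equivalently, if S and S' are independent uniformly random ℓ-element subsets of an n-element set, then the probability that |S ∩ S'| ≥ ⌈γℓ⌉ is at most exp( −n·| I₂(γ ‖ ℓ/n) − 1/(3n) − (2/n)·log(n·√ℓ) |⁺ ). -/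
open Real Finset

lemma choose_mul_pow_le {x : ℝ} (hx0 : 0 ≤ x) (hx1 : x ≤ 1) (N k : ℕ) (hk : k ≤ N) :
    x ^ k * (1 - x) ^ (N - k) * (N.choose k : ℝ) ≤ 1 := by
  have h1 : (0:ℝ) ≤ 1 - x := by linarith
  calc x ^ k * (1 - x) ^ (N - k) * (N.choose k : ℝ)
      ≤ ∑ m ∈ range (N + 1), x ^ m * (1 - x) ^ (N - m) * (N.choose m : ℝ) := by
        apply Finset.single_le_sum (f := fun m => x ^ m * (1 - x) ^ (N - m) * (N.choose m : ℝ))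
        · intro i _; positivity
        · exact Finset.mem_range.2 (Nat.lt_succ_of_le hk)
    _ = (x + (1 - x)) ^ N := (add_pow x (1-x) N).symm
    _ = 1 := by norm_num

lemma choose_le_exp_ent {x : ℝ} (hx0 : 0 < x) (hx1 : x < 1) (N k : ℕ) (hk : k ≤ N)
    (h : 0 ≤ ((k:ℝ) - x * N) * (log x - log (1 - x))) :
    (N.choose k : ℝ) ≤ exp (-(N:ℝ) * (x * log x + (1 - x) * log (1 - x))) := by
  have h1 : (0:ℝ) < 1 - x := by linarith
  have hpow : x ^ k * (1 - x) ^ (N - k) = exp ((k:ℝ) * log x + ((N:ℝ) - k) * log (1 - x)) := by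
    rw [← Real.exp_log (x := x ^ k * (1 - x) ^ (N - k)) (by positivity),
      Real.log_mul (by positivity) (by positivity), Real.log_pow, Real.log_pow,
      Nat.cast_sub hk]
  have hb := choose_mul_pow_le hx0.le hx1.le N k hk
  rw [hpow] at hb
  set E := exp ((k:ℝ) * log x + ((N:ℝ) - k) * log (1 - x)) with hE
  have hepos : (0:ℝ) < E := Real.exp_pos _
  have h2 : (N.choose k : ℝ) ≤ E⁻¹ := by
    calc (N.choose k : ℝ) = E⁻¹ * (E * (N.choose k : ℝ)) := by field_simp
      _ ≤ E⁻¹ * 1 := by gcongr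
      _ = E⁻¹ := mul_one _
  rw [hE, ← Real.exp_neg] at h2
  refine h2.trans (Real.exp_le_exp.2 ?_)
  nlinarith [h]

lemma max_term (n ℓ : ℕ) (h1 : 0 < ℓ) (h2 : 2 * ℓ ≤ n) :
    n ^ n ≤ (n + 1) * (n.choose ℓ * (ℓ ^ ℓ * (n - ℓ) ^ (n - ℓ))) := by
  set g : ℕ → ℕ := fun k => n.choose k * (ℓ ^ k * (n - ℓ) ^ (n - k)) with hg
  have hln : ℓ < n := by omega
  have hmlpos : 0 < n - ℓ := by omega
  have hratio : ∀ k, k < n → g (k+1) * ((k+1) * (n - ℓ)) = g k * ((n - k) * ℓ) := by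
    intro k hk
    have e1 : (n-ℓ)^(n-(k+1)) * (n-ℓ) = (n-ℓ)^(n-k) := by
      rw [← pow_succ]; congr 1; omega
    calc g (k+1) * ((k+1) * (n - ℓ))
        = (n.choose (k+1) * (k+1)) * (ℓ^(k+1) * ((n-ℓ)^(n-(k+1)) * (n-ℓ))) := by
          simp only [hg]; ring
      _ = (n.choose k * (n - k)) * (ℓ^(k+1) * (n-ℓ)^(n-k)) := by
          rw [Nat.choose_succ_right_eq, e1]
      _ = g k * ((n - k) * ℓ) := by simp only [hg]; ring
  have hup : ∀ k, k < ℓ → g k ≤ g (k+1) := by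
    intro k hk
    have hr := hratio k (by omega)
    have hmul : (k+1) * (n - ℓ) ≤ (n - k) * ℓ := by
      calc (k+1) * (n - ℓ) ≤ ℓ * (n - k) := Nat.mul_le_mul hk (by omega)
        _ = (n - k) * ℓ := Nat.mul_comm _ _
    have hX : 0 < (k+1) * (n - ℓ) := by positivity
    refine Nat.le_of_mul_le_mul_right ?_ hX
    calc g k * ((k+1) * (n - ℓ)) ≤ g k * ((n - k) * ℓ) := Nat.mul_le_mul_left _ hmul
      _ = g (k+1) * ((k+1) * (n - ℓ)) := hr.symm
  have hdown : ∀ k, ℓ ≤ k → k < n → g (k+1) ≤ g k := by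
    intro k hk hkn
    have hr := hratio k hkn
    have hmul : (n - k) * ℓ ≤ (k+1) * (n - ℓ) := by
      calc (n - k) * ℓ ≤ (n - ℓ) * (k+1) := Nat.mul_le_mul (by omega) (by omega)
        _ = (k+1) * (n - ℓ) := Nat.mul_comm _ _
    have hX : 0 < (k+1) * (n - ℓ) := by positivity
    refine Nat.le_of_mul_le_mul_right ?_ hX
    calc g (k+1) * ((k+1) * (n - ℓ)) = g k * ((n - k) * ℓ) := hr
      _ ≤ g k * ((k+1) * (n - ℓ)) := Nat.mul_le_mul_left _ hmul
  have hupall : ∀ d, d ≤ ℓ → g (ℓ - d) ≤ g ℓ := by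
    intro d
    induction d with
    | zero => simp
    | succ d ih =>
      intro hd
      have h3 : ℓ - (d+1) + 1 = ℓ - d := by omega
      calc g (ℓ - (d+1)) ≤ g (ℓ - (d+1) + 1) := hup _ (by omega)
        _ = g (ℓ - d) := by rw [h3]
        _ ≤ g ℓ := ih (by omega)
  have hdownall : ∀ d, ℓ + d ≤ n → g (ℓ + d) ≤ g ℓ := by
    intro d
    induction d with
    | zero => simp
    | succ d ih =>
      intro hd
      calc g (ℓ + (d+1)) = g ((ℓ + d) + 1) := by ring_nf
        _ ≤ g (ℓ + d) := hdown _ (by omega) (by omega)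
        _ ≤ g ℓ := ih (by omega)
  have hall : ∀ k ∈ range (n+1), g k ≤ g ℓ := by
    intro k hk
    rw [Finset.mem_range] at hk
    rcases le_or_gt k ℓ with h | h
    · have : k = ℓ - (ℓ - k) := by omega
      rw [this]; exact hupall _ (by omega)
    · have : k = ℓ + (k - ℓ) := by omega
      rw [this]; exact hdownall _ (by omega)
  calc n ^ n = (ℓ + (n - ℓ)) ^ n := by congr 1; omega
    _ = ∑ m ∈ range (n+1), ℓ ^ m * (n - ℓ) ^ (n - m) * n.choose m := add_pow ℓ (n-ℓ) n
    _ = ∑ m ∈ range (n+1), g m := by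
        apply Finset.sum_congr rfl; intro m _; simp only [hg]; ring
    _ ≤ (n+1) * g ℓ := by
        have := Finset.sum_le_card_nsmul (range (n+1)) g (g ℓ) hall
        simpa [smul_eq_mul] using this

set_option maxHeartbeats 1000000 in
/-- Hypergeometric tail bound: for `0 < ℓ`, `2ℓ ≤ n` and `γ ∈ (1/2,1)`,
`Σ_{i=⌈γℓ⌉}^{ℓ} C(ℓ,i)·C(n−ℓ,ℓ−i)/C(n,ℓ)
  ≤ exp(−n·|I₂(γ‖ℓ/n) − 1/(3n) − (2/n)·log(n√ℓ)|⁺)`. -/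
theorem hypergeom_tail_bound (n ℓ : ℕ) (hℓ : 0 < ℓ) (hn : 2 * ℓ ≤ n)
    (γ : ℝ) (hγ1 : 1 / 2 < γ) (hγ2 : γ < 1) :
    ∑ i ∈ Finset.Icc ⌈γ * ℓ⌉₊ ℓ,
        ((ℓ.choose i * (n - ℓ).choose (ℓ - i) : ℕ) : ℝ) / (n.choose ℓ : ℝ)
      ≤ Real.exp (-(n : ℝ) *
          max (I2 γ ((ℓ : ℝ) / n) - 1 / (3 * n) - (2 / n) * Real.log (n * Real.sqrt ℓ)) 0) := by
  have hℓn : ℓ < n := by omega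
  have hnR : (0:ℝ) < n := by exact_mod_cast (by omega : 0 < n)
  have hn2R : (2:ℝ) ≤ n := by exact_mod_cast (by omega : 2 ≤ n)
  have hℓR : (0:ℝ) < ℓ := by exact_mod_cast hℓ
  have hℓnR : (ℓ:ℝ) < n := by exact_mod_cast hℓn
  have hmR : (0:ℝ) < (n:ℝ) - ℓ := by linarith
  have hcast : ((n - ℓ : ℕ):ℝ) = (n:ℝ) - ℓ := by
    rw [Nat.cast_sub (by omega)]
  have h2ℓ : 2*(ℓ:ℝ) ≤ n := by exact_mod_cast hn
  set b : ℝ := (ℓ:ℝ)/n with hbdef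
  clear_value b
  have hb0 : 0 < b := by rw [hbdef]; positivity
  have hb2 : b ≤ 1/2 := by rw [hbdef, div_le_iff₀ hnR]; linarith
  have h1b : (0:ℝ) < 1 - b := by linarith
  have hγ0 : (0:ℝ) < γ := by linarith
  have h1γ0 : (0:ℝ) < 1 - γ := by linarith
  set c : ℝ := b * (1-γ)/(1-b) with hcdef
  clear_value c
  have hc0 : 0 < c := by rw [hcdef]; exact div_pos (mul_pos hb0 h1γ0) h1b
  have h1beq : 1 - b = ((n:ℝ) - ℓ)/n := by rw [hbdef]; field_simp
  have hceq : c * ((n:ℝ) - ℓ) = (1-γ)*(ℓ:ℝ) := by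
    rw [hcdef, h1beq, hbdef]; field_simp
  have hc12 : c < 1/2 := by nlinarith
  have h1c : (0:ℝ) < 1 - c := by linarith
  -- key entropy identity
  have hkey : (n:ℝ) * I2 γ b =
      -((ℓ:ℝ)*Real.log b + ((n:ℝ)-ℓ)*Real.log (1-b))
      + (ℓ:ℝ)*(γ*Real.log γ + (1-γ)*Real.log (1-γ))
      + ((n:ℝ)-ℓ)*(c*Real.log c + (1-c)*Real.log (1-c)) := by
    simp only [I2, D2, ← hcdef]
    rw [Real.log_div hγ0.ne' hb0.ne', Real.log_div h1γ0.ne' h1b.ne',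
      Real.log_div hc0.ne' hb0.ne', Real.log_div h1c.ne' h1b.ne']
    rw [hcdef, hbdef]
    have hne1 : (1:ℝ) - (ℓ:ℝ)/n ≠ 0 := by rw [← hbdef]; exact h1b.ne'
    field_simp
    ring
  have hCpos : (0:ℝ) < (n.choose ℓ : ℝ) := by
    exact_mod_cast Nat.choose_pos hℓn.le
  have hlogγ : Real.log (1-γ) ≤ Real.log γ :=
    Real.log_le_log h1γ0 (by linarith)
  have hlogc : Real.log c ≤ Real.log (1-c) :=
    Real.log_le_log hc0 (by linarith)
  -- lower bound on the central binomial coefficient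
  have hnn : (0:ℝ) < (n:ℝ)^n := by positivity
  have hexpD : Real.exp ((ℓ:ℝ)*Real.log b + ((n:ℝ)-ℓ)*Real.log (1-b))
      = (ℓ:ℝ)^ℓ * ((n:ℝ)-(ℓ:ℝ))^(n-ℓ) / (n:ℝ)^n := by
    have e1 : Real.exp ((ℓ:ℝ)*Real.log b) = b ^ ℓ := by
      rw [← Real.log_pow, Real.exp_log (pow_pos hb0 ℓ)]
    have e2 : Real.exp (((n:ℝ)-(ℓ:ℝ))*Real.log (1-b)) = (1-b) ^ (n-ℓ) := by
      rw [← hcast, ← Real.log_pow, Real.exp_log (pow_pos h1b (n-ℓ))]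
    rw [Real.exp_add, e1, e2, h1beq, hbdef, div_pow, div_pow, div_mul_div_comm, ← pow_add]
    have e3 : ℓ + (n - ℓ) = n := by omega
    rw [e3]
  have hmtR : (n:ℝ)^n ≤ ((n:ℝ)+1) * ((n.choose ℓ:ℝ) * ((ℓ:ℝ)^ℓ * ((n:ℝ)-(ℓ:ℝ))^(n-ℓ))) := by
    have h : ((n^n : ℕ):ℝ) ≤ (((n+1) * (n.choose ℓ * (ℓ^ℓ * (n-ℓ)^(n-ℓ))) : ℕ):ℝ) :=
      Nat.cast_le.2 (max_term n ℓ hℓ hn)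
    push_cast at h
    rwa [hcast] at h
  have hC : 1/(n.choose ℓ:ℝ) ≤ ((n:ℝ)+1) * Real.exp ((ℓ:ℝ)*Real.log b + ((n:ℝ)-ℓ)*Real.log (1-b)) := by
    rw [hexpD, mul_div_assoc', div_le_div_iff₀ hCpos hnn]
    nlinarith [hmtR]
  -- per-term bound
  have hterm : ∀ i ∈ Finset.Icc ⌈γ*ℓ⌉₊ ℓ,
      ((ℓ.choose i * (n - ℓ).choose (ℓ - i) : ℕ) : ℝ) / (n.choose ℓ : ℝ)
      ≤ ((n:ℝ)+1) * Real.exp (-((n:ℝ) * I2 γ b)) := by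
    intro i hi
    rw [Finset.mem_Icc] at hi
    have hiℓ : i ≤ ℓ := hi.2
    have hγi : γ*(ℓ:ℝ) ≤ i := le_trans (Nat.le_ceil _) (by exact_mod_cast hi.1)
    have hA : (ℓ.choose i:ℝ) ≤ Real.exp (-(ℓ:ℝ)*(γ*Real.log γ + (1-γ)*Real.log (1-γ))) := by
      apply choose_le_exp_ent hγ0 hγ2 ℓ i hiℓ
      apply mul_nonneg (by linarith) (by linarith)
    have hjm : ℓ - i ≤ n - ℓ := by omega
    have hjcast : ((ℓ-i:ℕ):ℝ) = (ℓ:ℝ) - i := by rw [Nat.cast_sub hiℓ]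
    have hB : ((n-ℓ).choose (ℓ-i):ℝ)
        ≤ Real.exp (-((n:ℝ)-ℓ)*(c*Real.log c + (1-c)*Real.log (1-c))) := by
      have h := choose_le_exp_ent hc0 (by linarith : c < 1) (n-ℓ) (ℓ-i) hjm ?side
      · rwa [hcast] at h
      case side =>
        rw [hcast, hjcast]
        have hA' : (ℓ:ℝ) - (i:ℝ) - c * ((n:ℝ)-(ℓ:ℝ)) ≤ 0 := by nlinarith [hceq]
        have hB' : Real.log c - Real.log (1-c) ≤ 0 := by linarith
        nlinarith [mul_nonneg (neg_nonneg.2 hA') (neg_nonneg.2 hB')]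
    have h1 : ((ℓ.choose i * (n - ℓ).choose (ℓ - i) : ℕ) : ℝ)
        = (ℓ.choose i:ℝ) * ((n-ℓ).choose (ℓ-i):ℝ) := by push_cast; ring
    rw [h1, div_eq_mul_one_div]
    set T1 : ℝ := -(ℓ:ℝ)*(γ*Real.log γ + (1-γ)*Real.log (1-γ)) with hT1
    set T2 : ℝ := -((n:ℝ)-(ℓ:ℝ))*(c*Real.log c + (1-c)*Real.log (1-c)) with hT2
    set T3 : ℝ := (ℓ:ℝ)*Real.log b + ((n:ℝ)-(ℓ:ℝ))*Real.log (1-b) with hT3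
    have harg : T1 + T2 + T3 = -((n:ℝ) * I2 γ b) := by
      rw [hT1, hT2, hT3, hkey]; ring
    calc (ℓ.choose i:ℝ) * ((n-ℓ).choose (ℓ-i):ℝ) * (1/(n.choose ℓ:ℝ))
        ≤ Real.exp T1 * Real.exp T2 * (((n:ℝ)+1) * Real.exp T3) := by
          refine mul_le_mul (mul_le_mul hA hB (Nat.cast_nonneg _) (Real.exp_pos _).le) hC
            (by positivity) (by positivity)
      _ = ((n:ℝ)+1) * (Real.exp T1 * Real.exp T2 * Real.exp T3) := by ring
      _ = ((n:ℝ)+1) * Real.exp (T1 + T2 + T3) := by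
          rw [← Real.exp_add, ← Real.exp_add]
      _ = ((n:ℝ)+1) * Real.exp (-((n:ℝ) * I2 γ b)) := by rw [harg]
  -- sum of the tail
  have hsum : ∑ i ∈ Finset.Icc ⌈γ*ℓ⌉₊ ℓ,
      ((ℓ.choose i * (n - ℓ).choose (ℓ - i) : ℕ) : ℝ) / (n.choose ℓ : ℝ)
      ≤ (ℓ:ℝ) * (((n:ℝ)+1) * Real.exp (-((n:ℝ) * I2 γ b))) := by
    have hcard : ((Finset.Icc ⌈γ*ℓ⌉₊ ℓ).card : ℝ) ≤ (ℓ:ℝ) := by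
      have h1 : 1 ≤ ⌈γ*(ℓ:ℝ)⌉₊ := Nat.ceil_pos.2 (mul_pos hγ0 hℓR)
      rw [Nat.card_Icc]
      exact_mod_cast (by omega : ℓ + 1 - ⌈γ*(ℓ:ℝ)⌉₊ ≤ ℓ)
    calc ∑ i ∈ Finset.Icc ⌈γ*ℓ⌉₊ ℓ,
          ((ℓ.choose i * (n - ℓ).choose (ℓ - i) : ℕ) : ℝ) / (n.choose ℓ : ℝ)
        ≤ (Finset.Icc ⌈γ*ℓ⌉₊ ℓ).card • (((n:ℝ)+1) * Real.exp (-((n:ℝ) * I2 γ b))) :=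
          Finset.sum_le_card_nsmul _ _ _ hterm
      _ = ((Finset.Icc ⌈γ*ℓ⌉₊ ℓ).card : ℝ) * (((n:ℝ)+1) * Real.exp (-((n:ℝ) * I2 γ b))) :=
          nsmul_eq_mul _ _
      _ ≤ (ℓ:ℝ) * (((n:ℝ)+1) * Real.exp (-((n:ℝ) * I2 γ b))) := by
          apply mul_le_mul_of_nonneg_right hcard (by positivity)
  -- bound by 1 (Vandermonde)
  have hsum1 : ∑ i ∈ Finset.Icc ⌈γ*ℓ⌉₊ ℓ,
      ((ℓ.choose i * (n - ℓ).choose (ℓ - i) : ℕ) : ℝ) / (n.choose ℓ : ℝ) ≤ 1 := by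
    have hv : ∑ i ∈ range (ℓ+1), ℓ.choose i * (n-ℓ).choose (ℓ-i) = n.choose ℓ := by
      have h := Nat.add_choose_eq ℓ (n-ℓ) ℓ
      rw [Finset.Nat.sum_antidiagonal_eq_sum_range_succ_mk] at h
      rw [show ℓ + (n-ℓ) = n by omega] at h
      exact h.symm
    calc ∑ i ∈ Finset.Icc ⌈γ*ℓ⌉₊ ℓ,
          ((ℓ.choose i * (n - ℓ).choose (ℓ - i) : ℕ) : ℝ) / (n.choose ℓ : ℝ)
        ≤ ∑ i ∈ range (ℓ+1),
          ((ℓ.choose i * (n - ℓ).choose (ℓ - i) : ℕ) : ℝ) / (n.choose ℓ : ℝ) := by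
          apply Finset.sum_le_sum_of_subset_of_nonneg
          · intro x hx
            rw [Finset.mem_Icc] at hx
            exact Finset.mem_range.2 (by omega)
          · intros; positivity
      _ = 1 := by
          rw [← Finset.sum_div, div_eq_one_iff_eq hCpos.ne']
          norm_cast
  -- conclusion
  rcases le_or_gt (I2 γ b - 1/(3*(n:ℝ)) - (2/(n:ℝ))*Real.log ((n:ℝ)*Real.sqrt ℓ)) 0 with hX | hX
  · rw [max_eq_right hX, mul_zero, Real.exp_zero]
    exact hsum1
  · rw [max_eq_left hX.le]
    refine hsum.trans ?_
    have hs : (0:ℝ) < Real.sqrt ℓ := Real.sqrt_pos.2 hℓR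
    have hexp2 : Real.exp (2 * Real.log ((n:ℝ)*Real.sqrt ℓ)) = (n:ℝ)^2 * (ℓ:ℝ) := by
      rw [show (2:ℝ) * Real.log ((n:ℝ)*Real.sqrt ℓ) = Real.log (((n:ℝ)*Real.sqrt ℓ)^2) by
        rw [Real.log_pow]; push_cast; ring]
      rw [Real.exp_log (by positivity), mul_pow, Real.sq_sqrt hℓR.le]
    have hXexp : Real.exp (-(n:ℝ) * (I2 γ b - 1/(3*(n:ℝ)) - 2/(n:ℝ)*Real.log ((n:ℝ)*Real.sqrt ℓ)))
        = Real.exp (-((n:ℝ) * I2 γ b)) * (Real.exp (1/3) * ((n:ℝ)^2 * (ℓ:ℝ))) := by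
      rw [← hexp2, ← Real.exp_add, ← Real.exp_add]
      congr 1
      field_simp
      ring
    rw [hXexp]
    have hone : (1:ℝ) ≤ Real.exp (1/3) := Real.one_le_exp (by norm_num)
    have hfac : (ℓ:ℝ) * ((n:ℝ)+1) ≤ Real.exp (1/3) * ((n:ℝ)^2 * (ℓ:ℝ)) := by
      have h1 : (n:ℝ)+1 ≤ (n:ℝ)^2 := by nlinarith [hn2R]
      calc (ℓ:ℝ) * ((n:ℝ)+1) ≤ (ℓ:ℝ) * (n:ℝ)^2 :=
            mul_le_mul_of_nonneg_left h1 hℓR.le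
        _ = 1 * ((n:ℝ)^2 * (ℓ:ℝ)) := by ring
        _ ≤ Real.exp (1/3) * ((n:ℝ)^2 * (ℓ:ℝ)) :=
            mul_le_mul_of_nonneg_right hone (by positivity)
    calc (ℓ:ℝ) * (((n:ℝ)+1) * Real.exp (-((n:ℝ) * I2 γ b)))
        = ((ℓ:ℝ) * ((n:ℝ)+1)) * Real.exp (-((n:ℝ) * I2 γ b)) := by ring
      _ ≤ (Real.exp (1/3) * ((n:ℝ)^2 * (ℓ:ℝ))) * Real.exp (-((n:ℝ) * I2 γ b)) :=
          mul_le_mul_of_nonneg_right hfac (Real.exp_pos _).le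
      _ = Real.exp (-((n:ℝ) * I2 γ b)) * (Real.exp (1/3) * ((n:ℝ)^2 * (ℓ:ℝ))) := by ring
end

section
/- Let n and ℓ be positive integers with 2ℓ ≤ n, let γ ∈ (1/2,1), and let N = ⌊ exp( n·| I₂(γ ‖ ℓ/n) − 4/(3n) − (2/n)·log(n·√ℓ) |⁺ ) ⌋. Then there exist ℓ-element subsets S₁, ..., S_N of {1, ..., n} such that |S_a ∩ S_b| ≤ γℓ for all a ≠ b. -/
open Real Finset

lemma termA (m k : ℕ) (h : k ≤ m) : m.choose k * (k^k * (m-k)^(m-k)) ≤ m^m := by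
  have hb : (k + (m - k))^m = ∑ i ∈ range (m+1), k ^ i * (m-k) ^ (m - i) * m.choose i :=
    add_pow k (m-k) m
  rw [Nat.add_sub_cancel' h] at hb
  rw [hb]
  calc m.choose k * (k^k * (m-k)^(m-k)) = k ^ k * (m-k) ^ (m - k) * m.choose k := by ring
  _ ≤ _ := Finset.single_le_sum (f := fun i => k ^ i * (m-k) ^ (m - i) * m.choose i)
      (fun i _ => Nat.zero_le _) (by simp [Nat.lt_succ_iff, h])

private def trm (n ℓ k : ℕ) : ℕ := n.choose k * ℓ^k * (n-ℓ)^(n-k)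

lemma trm_up (n ℓ k : ℕ) (hk : k < ℓ) (hl : ℓ ≤ n) : trm n ℓ k ≤ trm n ℓ (k+1) := by
  have hkn : k < n := lt_of_lt_of_le hk hl
  apply Nat.le_of_mul_le_mul_right _ (Nat.succ_pos k)
  have hrec : n.choose (k+1) * (k+1) = n.choose k * (n - k) := Nat.choose_succ_right_eq n k
  have hpow : (n - ℓ)^(n-k) = (n-ℓ)^(n-(k+1)) * (n-ℓ) := by
    rw [← pow_succ]
    congr 1
    omega
  calc trm n ℓ k * (k+1) = n.choose k * ℓ^k * ((n-ℓ)^(n-(k+1)) * (n-ℓ)) * (k+1) := by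
        rw [trm, hpow]
  _ = n.choose k * ℓ^k * (n-ℓ)^(n-(k+1)) * ((n-ℓ) * (k+1)) := by ring
  _ ≤ n.choose k * ℓ^k * (n-ℓ)^(n-(k+1)) * (ℓ * (n - k)) := by
        apply Nat.mul_le_mul_left
        calc (n-ℓ)*(k+1) ≤ (n-k) * ℓ := Nat.mul_le_mul (by omega) (by omega)
        _ = ℓ * (n-k) := Nat.mul_comm _ _
  _ = n.choose k * (n-k) * ℓ^(k+1) * (n-ℓ)^(n-(k+1)) := by ring
  _ = trm n ℓ (k+1) * (k+1) := by rw [trm, ← hrec]; ring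

lemma trm_down (n ℓ k : ℕ) (hk : ℓ ≤ k) : trm n ℓ (k+1) ≤ trm n ℓ k := by
  rcases Nat.lt_or_ge k n with hkn | hkn
  · apply Nat.le_of_mul_le_mul_right _ (Nat.succ_pos k)
    have hrec : n.choose (k+1) * (k+1) = n.choose k * (n - k) := Nat.choose_succ_right_eq n k
    have hpow : (n - ℓ)^(n-k) = (n-ℓ)^(n-(k+1)) * (n-ℓ) := by
      rw [← pow_succ]; congr 1; omega
    calc trm n ℓ (k+1) * (k+1) = n.choose (k+1) * (k+1) * ℓ^(k+1) * (n-ℓ)^(n-(k+1)) := by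
          rw [trm]; ring
    _ = n.choose k * ℓ^k * (n-ℓ)^(n-(k+1)) * ((n-k) * ℓ) := by rw [hrec]; ring
    _ ≤ n.choose k * ℓ^k * (n-ℓ)^(n-(k+1)) * ((n-ℓ) * (k+1)) := by
          apply Nat.mul_le_mul_left
          exact Nat.mul_le_mul (by omega) (by omega)
    _ = trm n ℓ k * (k+1) := by rw [trm, hpow]; ring
  · have : n.choose (k+1) = 0 := Nat.choose_eq_zero_of_lt (by omega)
    simp [trm, this]

lemma trm_le_max (n ℓ k : ℕ) (hl : ℓ ≤ n) : trm n ℓ k ≤ trm n ℓ ℓ := by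
  rcases Nat.le_total k ℓ with hk | hk
  · obtain ⟨d, hd⟩ := Nat.le.dest hk
    induction d generalizing k with
    | zero => simp only [Nat.add_zero] at hd; subst hd; exact le_refl _
    | succ d ih =>
        calc trm n ℓ k ≤ trm n ℓ (k+1) := trm_up n ℓ k (by omega) hl
        _ ≤ trm n ℓ ℓ := ih (k+1) (by omega) (by omega)
  · obtain ⟨d, hd⟩ := Nat.le.dest hk
    subst hd
    induction d with
    | zero => exact le_refl _
    | succ d ih =>
        calc trm n ℓ (ℓ + (d+1)) = trm n ℓ ((ℓ + d) + 1) := by ring_nf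
        _ ≤ trm n ℓ (ℓ + d) := trm_down n ℓ (ℓ+d) (by omega)
        _ ≤ trm n ℓ ℓ := ih (by omega)

lemma lowerB (n ℓ : ℕ) (hl : ℓ ≤ n) : n^n ≤ (n+1) * (n.choose ℓ * ℓ^ℓ * (n-ℓ)^(n-ℓ)) := by
  have hb : (ℓ + (n - ℓ))^n = ∑ i ∈ range (n+1), ℓ ^ i * (n-ℓ) ^ (n - i) * n.choose i :=
    add_pow ℓ (n-ℓ) n
  rw [Nat.add_sub_cancel' hl] at hb
  rw [hb]
  calc ∑ i ∈ range (n+1), ℓ ^ i * (n-ℓ) ^ (n - i) * n.choose i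
      ≤ ∑ _i ∈ range (n+1), trm n ℓ ℓ := by
        apply Finset.sum_le_sum
        intro i _
        calc ℓ ^ i * (n-ℓ) ^ (n - i) * n.choose i = trm n ℓ i := by rw [trm]; ring
        _ ≤ trm n ℓ ℓ := trm_le_max n ℓ i hl
  _ = (n+1) * trm n ℓ ℓ := by simp [Finset.sum_const, mul_comm]
  _ = (n+1) * (n.choose ℓ * ℓ^ℓ * (n-ℓ)^(n-ℓ)) := by rw [trm]

lemma exp_ent (m k : ℕ) (h0 : 0 < k) (h1 : k < m) :
    Real.exp (m * Real.binEntropy ((k : ℝ) / m)) =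
      (m:ℝ)^m / ((k:ℝ)^k * ((m-k : ℕ):ℝ)^(m-k)) := by
  have hm : (0:ℝ) < m := by exact_mod_cast (by omega : 0 < m)
  have hk : (0:ℝ) < k := by exact_mod_cast h0
  have hmk : (0:ℝ) < ((m-k:ℕ):ℝ) := by exact_mod_cast (by omega : 0 < m - k)
  have hcast : ((m-k:ℕ):ℝ) = (m:ℝ) - k := Nat.cast_sub (le_of_lt h1)
  have h1s : 1 - (k:ℝ)/m = ((m-k:ℕ):ℝ)/m := by rw [hcast]; field_simp
  rw [Real.binEntropy, h1s]
  have e1 : (m:ℝ) * ((k:ℝ)/m * Real.log ((k:ℝ)/m)⁻¹ + ((m-k:ℕ):ℝ)/m * Real.log (((m-k:ℕ):ℝ)/m)⁻¹)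
      = (k:ℝ) * Real.log ((m:ℝ)/k) + ((m-k:ℕ):ℝ) * Real.log ((m:ℝ)/((m-k:ℕ):ℝ)) := by
    rw [inv_div, inv_div]; field_simp
  rw [e1, Real.exp_add, Real.exp_nat_mul, Real.exp_nat_mul,
    Real.exp_log (by positivity), Real.exp_log (by positivity), div_pow, div_pow]
  rw [div_mul_div_comm, ← pow_add, Nat.add_sub_cancel' (le_of_lt h1)]

lemma choose_le_exp_ent_s4 (m k : ℕ) (h : k ≤ m) :
    (m.choose k : ℝ) ≤ Real.exp (m * Real.binEntropy ((k : ℝ) / m)) := by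
  rcases Nat.eq_zero_or_pos k with rfl | hk0
  · simp
  rcases eq_or_lt_of_le h with rfl | hkm
  · have hm : (0:ℝ) < k := by exact_mod_cast hk0
    rw [div_self (ne_of_gt hm)]
    simp
  · have hk : (0:ℝ) < k := by exact_mod_cast hk0
    have hmk : (0:ℝ) < ((m-k:ℕ):ℝ) := by exact_mod_cast (by omega : 0 < m - k)
    rw [exp_ent m k hk0 hkm]
    rw [le_div_iff₀ (by positivity)]
    have := termA m k (le_of_lt hkm)
    calc (m.choose k : ℝ) * ((k:ℝ)^k * ((m-k:ℕ):ℝ)^(m-k))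
        = ((m.choose k * (k^k * (m-k)^(m-k)) : ℕ) : ℝ) := by push_cast; ring
    _ ≤ ((m^m : ℕ):ℝ) := by exact_mod_cast this
    _ = (m:ℝ)^m := by push_cast; ring

lemma exp_ent_le (n ℓ : ℕ) (h0 : 0 < ℓ) (h1 : ℓ < n) :
    Real.exp (n * Real.binEntropy ((ℓ : ℝ) / n)) ≤ (n+1 : ℝ) * (n.choose ℓ : ℝ) := by
  rw [exp_ent n ℓ h0 h1]
  have hl : (0:ℝ) < ℓ := by exact_mod_cast h0
  have hnl : (0:ℝ) < ((n-ℓ:ℕ):ℝ) := by exact_mod_cast (by omega : 0 < n - ℓ)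
  rw [div_le_iff₀ (by positivity)]
  have := lowerB n ℓ (le_of_lt h1)
  calc (n:ℝ)^n = ((n^n : ℕ):ℝ) := by push_cast; ring
  _ ≤ (((n+1) * (n.choose ℓ * ℓ^ℓ * (n-ℓ)^(n-ℓ)) : ℕ):ℝ) := by exact_mod_cast this
  _ = (n+1:ℝ) * (n.choose ℓ:ℝ) * ((ℓ:ℝ)^ℓ * ((n-ℓ:ℕ):ℝ)^(n-ℓ)) := by push_cast; ring

lemma card_bad_le (n ℓ t : ℕ) (A : Finset (Fin n)) (hA : A.card = ℓ) :
    ((((univ : Finset (Fin n)).powersetCard ℓ)).filter (fun B => t ≤ (A ∩ B).card)).card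
      ≤ ∑ j ∈ Icc t ℓ, ℓ.choose j * (n-ℓ).choose (ℓ-j) := by
  classical
  have hstep : ((((univ : Finset (Fin n)).powersetCard ℓ)).filter (fun B => t ≤ (A ∩ B).card)).card
      ≤ ((Icc t ℓ).sigma (fun j => (A.powersetCard j) ×ˢ ((Aᶜ).powersetCard (ℓ-j)))).card := by
    apply Finset.card_le_card_of_injOn (fun B => ⟨(A ∩ B).card, (A ∩ B, B \ A)⟩)
    · intro B hB
      simp only [Finset.mem_coe, Finset.mem_filter, Finset.mem_powersetCard] at hB
      obtain ⟨⟨_, hBcard⟩, ht⟩ := hB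
      have hj : (A ∩ B).card ≤ ℓ := hA ▸ Finset.card_le_card Finset.inter_subset_left
      have hsd : (B \ A).card + (B ∩ A).card = B.card := Finset.card_sdiff_add_card_inter B A
      have hIC : (B ∩ A).card = (A ∩ B).card := by rw [Finset.inter_comm]
      refine Finset.mem_sigma.2 ⟨Finset.mem_Icc.2 ⟨ht, hj⟩, Finset.mem_product.2
        ⟨Finset.mem_powersetCard.2 ⟨Finset.inter_subset_left, rfl⟩,
         Finset.mem_powersetCard.2 ⟨?_, ?_⟩⟩⟩
      · intro x hx
        simp only [Finset.mem_sdiff] at hx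
        simp [Finset.mem_compl, hx.2]
      · show (B \ A).card = ℓ - (A ∩ B).card
        omega
    · intro B1 h1 B2 h2 heq
      have e1 : A ∩ B1 = A ∩ B2 := by
        have := congrArg (fun s : Σ _ : ℕ, Finset (Fin n) × Finset (Fin n) => s.2.1) heq
        simpa using this
      have e2 : B1 \ A = B2 \ A := by
        have := congrArg (fun s : Σ _ : ℕ, Finset (Fin n) × Finset (Fin n) => s.2.2) heq
        simpa using this
      have : ∀ B : Finset (Fin n), (A ∩ B) ∪ (B \ A) = B := by
        intro B
        ext x
        simp only [Finset.mem_union, Finset.mem_inter, Finset.mem_sdiff]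
        tauto
      rw [← this B1, ← this B2, e1, e2]
  refine hstep.trans ?_
  rw [Finset.card_sigma]
  apply le_of_eq
  apply Finset.sum_congr rfl
  intro j hj
  rw [Finset.card_product, Finset.card_powersetCard, Finset.card_powersetCard, hA,
    Finset.card_compl, hA, Fintype.card_fin]

lemma I2_eq (γ p : ℝ) (hp0 : 0 < p) (hp1 : p < 1) (hγ0 : 0 < γ) (hγ1 : γ < 1)
    (hq1 : p * (1 - γ) / (1 - p) < 1) :
    I2 γ p = Real.binEntropy p - p * Real.binEntropy γ
      - (1 - p) * Real.binEntropy (p * (1 - γ) / (1 - p)) := by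
  have h1p : (0:ℝ) < 1 - p := by linarith
  have h1γ : (0:ℝ) < 1 - γ := by linarith
  have hq0 : 0 < p * (1 - γ) / (1 - p) := by positivity
  have h1q : (0:ℝ) < 1 - p * (1 - γ) / (1 - p) := by linarith
  have hlq : Real.log (p * (1 - γ) / (1 - p)) = Real.log p + Real.log (1 - γ) - Real.log (1 - p) := by
    rw [Real.log_div (by positivity) h1p.ne', Real.log_mul hp0.ne' h1γ.ne']
  simp only [I2, D2, Real.binEntropy, Real.log_inv,
    Real.log_div hγ0.ne' hp0.ne', Real.log_div h1γ.ne' h1p.ne',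
    Real.log_div hq0.ne' hp0.ne', Real.log_div h1q.ne' h1p.ne', hlq]
  field_simp
  ring

set_option maxHeartbeats 2000000 in
/-- There exist `N = ⌊exp(n·|I₂(γ‖ℓ/n) − 4/(3n) − (2/n)log(n√ℓ)|⁺)⌋` many `ℓ`-element
subsets of an `n`-element set with pairwise intersections of size at most `γℓ`. -/
theorem exists_small_intersection_family (n ℓ : ℕ) (hℓ : 0 < ℓ) (hn : 2 * ℓ ≤ n)
    (γ : ℝ) (hγ1 : 1 / 2 < γ) (hγ2 : γ < 1)
    (N : ℕ) (hN : N = ⌊Real.exp ((n : ℝ) *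
      max (I2 γ ((ℓ : ℝ) / n) - 4 / (3 * n) - (2 / n) * Real.log (n * Real.sqrt ℓ)) 0)⌋₊) :
    ∃ S : Fin N → Finset (Fin n),
      (∀ a, (S a).card = ℓ) ∧
      (∀ a b, a ≠ b → ((S a ∩ S b).card : ℝ) ≤ γ * ℓ) := by
  classical
  have hℓn : ℓ < n := by omega
  have hn0 : 0 < n := by omega
  have hnR : (0:ℝ) < n := by exact_mod_cast hn0
  have hℓR : (0:ℝ) < ℓ := by exact_mod_cast hℓ
  have hℓn2 : (2:ℝ) * ℓ ≤ n := by exact_mod_cast hn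
  have hnlR : (0:ℝ) < (n:ℝ) - ℓ := by
    have : (ℓ:ℝ) < n := by exact_mod_cast hℓn
    linarith
  have hnlcast : ((n - ℓ : ℕ):ℝ) = (n:ℝ) - ℓ := Nat.cast_sub (le_of_lt hℓn)
  -- the threshold
  set t : ℕ := ⌊γ * ℓ⌋₊ + 1 with ht_def
  have hγℓ0 : (0:ℝ) ≤ γ * ℓ := by positivity
  have ht_gt : γ * ℓ < t := by
    have := Nat.lt_floor_add_one (γ * ℓ)
    push_cast
    exact_mod_cast this
  have ht_le : t ≤ ℓ := by
    have h1 : γ * ℓ < ℓ := by nlinarith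
    have : ⌊γ * ℓ⌋₊ < ℓ := (Nat.floor_lt hγℓ0).2 (by exact_mod_cast h1)
    omega
  have ht1 : 1 ≤ t := by omega
  -- bad-set characterization
  have hbadiff : ∀ c : ℕ, ¬ (t ≤ c) ↔ ((c:ℝ) ≤ γ * ℓ) := by
    intro c
    rw [not_le, ht_def, Nat.lt_add_one_iff, Nat.le_floor_iff hγℓ0]
  -- q
  set q : ℝ := (ℓ:ℝ) * (1 - γ) / ((n:ℝ) - ℓ) with hq_def
  have hq0 : 0 < q := by
    apply div_pos (by nlinarith) hnlR
  have hqhalf : q ≤ 2⁻¹ := by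
    rw [hq_def, div_le_iff₀ hnlR]
    nlinarith
  -- the M bound
  set E : ℝ := Real.exp ((ℓ:ℝ) * Real.binEntropy γ + ((n:ℝ) - ℓ) * Real.binEntropy q) with hE_def
  set boundM : ℝ := (ℓ:ℝ) * E with hbM_def
  have hE0 : 0 < E := Real.exp_pos _
  have hbM0 : 0 < boundM := by positivity
  have hMb : ∀ A : Finset (Fin n), A.card = ℓ →
      (((((univ : Finset (Fin n)).powersetCard ℓ)).filter
        (fun B => t ≤ (A ∩ B).card)).card : ℝ) ≤ boundM := by
    intro A hA
    have h1 := card_bad_le n ℓ t A hA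
    have h2 : ((∑ j ∈ Icc t ℓ, ℓ.choose j * (n-ℓ).choose (ℓ-j) : ℕ) : ℝ)
        ≤ ∑ j ∈ Icc t ℓ, E := by
      push_cast
      apply Finset.sum_le_sum
      intro j hj
      rw [Finset.mem_Icc] at hj
      obtain ⟨hjt, hjl⟩ := hj
      have hjR : (γ * ℓ) < (j:ℝ) := by
        calc γ * ℓ < (t:ℕ) := ht_gt
        _ ≤ (j:ℝ) := by exact_mod_cast hjt
      have c1 : (ℓ.choose j : ℝ) ≤ Real.exp ((ℓ:ℝ) * Real.binEntropy ((j:ℝ)/ℓ)) :=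
        choose_le_exp_ent_s4 ℓ j hjl
      have m1 : Real.binEntropy ((j:ℝ)/ℓ) ≤ Real.binEntropy γ := by
        have hmem1 : γ ∈ Set.Icc (2⁻¹:ℝ) 1 := ⟨by norm_num; linarith, hγ2.le⟩
        have hj1 : (j:ℝ)/ℓ ≤ 1 := by
          rw [div_le_one hℓR]; exact_mod_cast hjl
        have hjγ : γ ≤ (j:ℝ)/ℓ := by
          rw [le_div_iff₀ hℓR]; linarith
        have hmem2 : (j:ℝ)/ℓ ∈ Set.Icc (2⁻¹:ℝ) 1 := ⟨by norm_num; linarith, hj1⟩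
        exact Real.binEntropy_strictAntiOn.antitoneOn hmem1 hmem2 hjγ
      have hnll : ℓ - j ≤ n - ℓ := by omega
      have c2 : ((n-ℓ).choose (ℓ-j) : ℝ) ≤
          Real.exp (((n-ℓ:ℕ):ℝ) * Real.binEntropy (((ℓ-j:ℕ):ℝ)/((n-ℓ:ℕ):ℝ))) :=
        choose_le_exp_ent_s4 (n-ℓ) (ℓ-j) hnll
      have hljcast : ((ℓ - j : ℕ):ℝ) = (ℓ:ℝ) - j := Nat.cast_sub hjl
      have m2 : Real.binEntropy (((ℓ-j:ℕ):ℝ)/((n-ℓ:ℕ):ℝ)) ≤ Real.binEntropy q := by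
        have hx0 : (0:ℝ) ≤ ((ℓ-j:ℕ):ℝ)/((n-ℓ:ℕ):ℝ) := by positivity
        have hxq : ((ℓ-j:ℕ):ℝ)/((n-ℓ:ℕ):ℝ) ≤ q := by
          rw [hnlcast, hljcast, hq_def, div_le_div_iff_of_pos_right hnlR]
          nlinarith
        have hmem1 : ((ℓ-j:ℕ):ℝ)/((n-ℓ:ℕ):ℝ) ∈ Set.Icc (0:ℝ) 2⁻¹ := ⟨hx0, le_trans hxq hqhalf⟩
        have hmem2 : q ∈ Set.Icc (0:ℝ) 2⁻¹ := ⟨hq0.le, hqhalf⟩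
        exact Real.binEntropy_strictMonoOn.monotoneOn hmem1 hmem2 hxq
      calc (ℓ.choose j : ℝ) * ((n-ℓ).choose (ℓ-j) : ℝ)
          ≤ Real.exp ((ℓ:ℝ) * Real.binEntropy ((j:ℝ)/ℓ)) *
            Real.exp (((n-ℓ:ℕ):ℝ) * Real.binEntropy (((ℓ-j:ℕ):ℝ)/((n-ℓ:ℕ):ℝ))) :=
            mul_le_mul c1 c2 (by positivity) (by positivity)
      _ ≤ Real.exp ((ℓ:ℝ) * Real.binEntropy γ) * Real.exp (((n:ℝ)-ℓ) * Real.binEntropy q) := by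
            rw [hnlcast] at m2 ⊢
            apply mul_le_mul _ _ (by positivity) (by positivity) <;>
              apply Real.exp_le_exp.2
            · exact mul_le_mul_of_nonneg_left m1 hℓR.le
            · exact mul_le_mul_of_nonneg_left m2 hnlR.le
      _ = E := by rw [hE_def, ← Real.exp_add]
    have h3 : ∑ j ∈ Icc t ℓ, E = ((ℓ - t + 1 : ℕ):ℝ) * E := by
      rw [Finset.sum_const, Nat.card_Icc, nsmul_eq_mul]
      congr 2
      omega
    calc (((((univ : Finset (Fin n)).powersetCard ℓ)).filter
        (fun B => t ≤ (A ∩ B).card)).card : ℝ)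
        ≤ ((∑ j ∈ Icc t ℓ, ℓ.choose j * (n-ℓ).choose (ℓ-j) : ℕ) : ℝ) := by exact_mod_cast h1
    _ ≤ ∑ j ∈ Icc t ℓ, E := h2
    _ = ((ℓ - t + 1 : ℕ):ℝ) * E := h3
    _ ≤ (ℓ:ℝ) * E := by
        apply mul_le_mul_of_nonneg_right _ hE0.le
        exact_mod_cast (by omega : ℓ - t + 1 ≤ ℓ)
  -- KEY inequality
  have hchoose0 : (0:ℝ) < (n.choose ℓ : ℝ) := by
    exact_mod_cast Nat.choose_pos (le_of_lt hℓn)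
  have hKEY : ∀ k : ℕ, k < N → (k:ℝ) * boundM < (n.choose ℓ : ℝ) := by
    intro k hk
    rcases Nat.lt_or_ge N 2 with hN2 | hN2
    · have hk0 : k = 0 := by omega
      subst hk0
      simpa using hchoose0
    · set x : ℝ := I2 γ ((ℓ : ℝ) / n) - 4 / (3 * n) - (2 / n) * Real.log (n * Real.sqrt ℓ)
        with hx_def
      have hmax : max x 0 = x := by
        rcases max_choice x 0 with h | h
        · exact h
        · exfalso
          rw [h, mul_zero, Real.exp_zero] at hN
          simp at hN
          omega
      have hNle : (N:ℝ) ≤ Real.exp ((n:ℝ) * x) := by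
        rw [hN, hmax]
        exact Nat.floor_le (Real.exp_pos _).le
      have hp0 : (0:ℝ) < (ℓ:ℝ)/n := by positivity
      have hp1 : (ℓ:ℝ)/n < 1 := by
        rw [div_lt_one hnR]; exact_mod_cast hℓn
      have hqq : ((ℓ:ℝ)/n) * (1 - γ) / (1 - (ℓ:ℝ)/n) = q := by
        rw [hq_def]
        rw [div_eq_div_iff (by linarith : (0:ℝ) < 1 - (ℓ:ℝ)/n).ne' hnlR.ne']
        field_simp
      have hq1 : ((ℓ:ℝ)/n) * (1 - γ) / (1 - (ℓ:ℝ)/n) < 1 := by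
        rw [hqq]; linarith [hqhalf]
      have hI := I2_eq γ ((ℓ:ℝ)/n) hp0 hp1 (by linarith) hγ2 hq1
      rw [hqq] at hI
      have hnx : (n:ℝ) * x = (n:ℝ) * Real.binEntropy ((ℓ:ℝ)/n)
          - ((ℓ:ℝ) * Real.binEntropy γ + ((n:ℝ) - ℓ) * Real.binEntropy q)
          - 4/3 - 2 * Real.log ((n:ℝ) * Real.sqrt ℓ) := by
        rw [hx_def, hI]
        field_simp
        ring
      have hsq : Real.exp (2 * Real.log ((n:ℝ) * Real.sqrt ℓ)) = (n:ℝ)^2 * ℓ := by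
        rw [show (2:ℝ) * Real.log ((n:ℝ) * Real.sqrt ℓ)
            = Real.log (((n:ℝ) * Real.sqrt ℓ)^(2:ℕ)) by rw [Real.log_pow]; push_cast; ring]
        rw [Real.exp_log (by positivity)]
        rw [mul_pow, sq (Real.sqrt (ℓ:ℝ)), Real.mul_self_sqrt hℓR.le]
      have hNbM : (N:ℝ) * boundM ≤ (n.choose ℓ : ℝ) := by
        have step1 : (N:ℝ) * boundM ≤ Real.exp ((n:ℝ) * x) * boundM :=
          mul_le_mul_of_nonneg_right hNle hbM0.le
        have step2 : Real.exp ((n:ℝ) * x) * boundM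
            = Real.exp ((n:ℝ) * Real.binEntropy ((ℓ:ℝ)/n)) * Real.exp (-(4/3)) *
              ((ℓ:ℝ) / ((n:ℝ)^2 * ℓ)) := by
          rw [hbM_def, hE_def, hnx]
          rw [show (n:ℝ) * Real.binEntropy ((ℓ:ℝ)/n)
              - ((ℓ:ℝ) * Real.binEntropy γ + ((n:ℝ) - ℓ) * Real.binEntropy q)
              - 4/3 - 2 * Real.log ((n:ℝ) * Real.sqrt ℓ)
              = (n:ℝ) * Real.binEntropy ((ℓ:ℝ)/n) + (-(4/3))
                + (-((ℓ:ℝ) * Real.binEntropy γ + ((n:ℝ) - ℓ) * Real.binEntropy q))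
                + (-(2 * Real.log ((n:ℝ) * Real.sqrt ℓ))) by ring]
          rw [Real.exp_add, Real.exp_add, Real.exp_add, Real.exp_neg, Real.exp_neg,
            Real.exp_neg, hsq]
          field_simp
        have step3 : Real.exp ((n:ℝ) * Real.binEntropy ((ℓ:ℝ)/n)) * Real.exp (-(4/3)) *
              ((ℓ:ℝ) / ((n:ℝ)^2 * ℓ)) ≤ ((n:ℝ)+1) * (n.choose ℓ : ℝ) * 1 * (1 / (n:ℝ)^2) := by
          have e1 := exp_ent_le n ℓ hℓ hℓn
          have e2 : Real.exp (-(4/3:ℝ)) ≤ 1 := by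
            rw [Real.exp_le_one_iff]; norm_num
          have e3 : (ℓ:ℝ) / ((n:ℝ)^2 * ℓ) = 1 / (n:ℝ)^2 := by
            field_simp
          rw [e3]
          apply mul_le_mul _ (le_refl _) (by positivity) (by positivity)
          calc Real.exp ((n:ℝ) * Real.binEntropy ((ℓ:ℝ)/n)) * Real.exp (-(4/3))
              ≤ (((n:ℝ)+1) * (n.choose ℓ : ℝ)) * 1 :=
              mul_le_mul e1 e2 (Real.exp_pos _).le (by positivity)
          _ = ((n:ℝ)+1) * (n.choose ℓ : ℝ) * 1 := by ring
        have step4 : ((n:ℝ)+1) * (n.choose ℓ : ℝ) * 1 * (1 / (n:ℝ)^2) ≤ (n.choose ℓ : ℝ) := by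
          have hn2 : (2:ℝ) ≤ n := by exact_mod_cast (by omega : 2 ≤ n)
          have h1 : ((n:ℝ)+1) ≤ (n:ℝ)^2 := by nlinarith
          rw [mul_one]
          rw [div_eq_mul_inv, one_mul]
          calc ((n:ℝ)+1) * (n.choose ℓ : ℝ) * ((n:ℝ)^2)⁻¹
              ≤ (n:ℝ)^2 * (n.choose ℓ : ℝ) * ((n:ℝ)^2)⁻¹ := by
                apply mul_le_mul_of_nonneg_right (mul_le_mul_of_nonneg_right h1 hchoose0.le)
                  (by positivity)
          _ = (n.choose ℓ : ℝ) := by field_simp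
        calc (N:ℝ) * boundM ≤ Real.exp ((n:ℝ) * x) * boundM := step1
        _ = _ := step2
        _ ≤ _ := step3
        _ ≤ _ := step4
      have hkN : (k:ℝ) ≤ (N:ℝ) - 1 := by
        have h1 : k + 1 ≤ N := hk
        have h2 : ((k+1:ℕ):ℝ) ≤ N := by exact_mod_cast h1
        push_cast at h2
        linarith
      calc (k:ℝ) * boundM ≤ ((N:ℝ) - 1) * boundM :=
            mul_le_mul_of_nonneg_right hkN hbM0.le
      _ = (N:ℝ) * boundM - boundM := by ring
      _ ≤ (n.choose ℓ : ℝ) - boundM := by linarith [hNbM]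
      _ < (n.choose ℓ : ℝ) := by linarith [hbM0]
  -- greedy construction
  set 𝒜 : Finset (Finset (Fin n)) := (univ : Finset (Fin n)).powersetCard ℓ with h𝒜
  have h𝒜card : 𝒜.card = n.choose ℓ := by
    rw [h𝒜, Finset.card_powersetCard, Finset.card_univ, Fintype.card_fin]
  have claim : ∀ k : ℕ, k ≤ N → ∃ S : Fin k → Finset (Fin n),
      (∀ a, S a ∈ 𝒜) ∧ (∀ a b, a ≠ b → ((S a ∩ S b).card : ℝ) ≤ γ * ℓ) := by
    intro k
    induction k with
    | zero => exact fun _ => ⟨Fin.elim0, fun a => a.elim0, fun a => a.elim0⟩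
    | succ k ih =>
      intro hkN
      obtain ⟨S, hSmem, hSgood⟩ := ih (by omega)
      set U : Finset (Finset (Fin n)) :=
        Finset.biUnion Finset.univ
          (fun i : Fin k => 𝒜.filter (fun B => t ≤ (S i ∩ B).card)) with hU
      have hUcard : (U.card : ℝ) < (𝒜.card : ℝ) := by
        have h1 : U.card ≤ ∑ i : Fin k,
            (𝒜.filter (fun B => t ≤ (S i ∩ B).card)).card := Finset.card_biUnion_le
        have h2 : (∑ i : Fin k,
            ((𝒜.filter (fun B => t ≤ (S i ∩ B).card)).card : ℝ)) ≤ (k:ℝ) * boundM := by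
          calc ∑ i : Fin k, ((𝒜.filter (fun B => t ≤ (S i ∩ B).card)).card : ℝ)
              ≤ ∑ _i : Fin k, boundM := by
                apply Finset.sum_le_sum
                intro i _
                have hcard : (S i).card = ℓ := (Finset.mem_powersetCard.1 (hSmem i)).2
                exact hMb (S i) hcard
          _ = (k:ℝ) * boundM := by
                rw [Finset.sum_const, Finset.card_univ, Fintype.card_fin, nsmul_eq_mul]
        rw [h𝒜card]
        calc (U.card : ℝ) ≤ ∑ i : Fin k,
            ((𝒜.filter (fun B => t ≤ (S i ∩ B).card)).card : ℝ) := by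
              push_cast
              exact_mod_cast h1
        _ ≤ (k:ℝ) * boundM := h2
        _ < (n.choose ℓ : ℝ) := hKEY k (by omega)
      have hUlt : U.card < 𝒜.card := by exact_mod_cast hUcard
      have hex : ∃ B ∈ 𝒜, B ∉ U := by
        by_contra hcon
        push_neg at hcon
        exact absurd (Finset.card_le_card hcon) (Nat.not_le.2 hUlt)
      obtain ⟨B, hB𝒜, hBU⟩ := hex
      have hBgood : ∀ i : Fin k, ((S i ∩ B).card : ℝ) ≤ γ * ℓ := by
        intro i
        have hnm : B ∉ 𝒜.filter (fun B => t ≤ (S i ∩ B).card) := by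
          intro hmem
          exact hBU (Finset.mem_biUnion.2 ⟨i, Finset.mem_univ i, hmem⟩)
        rw [Finset.mem_filter] at hnm
        push_neg at hnm
        exact (hbadiff _).1 (Nat.not_le.2 (hnm hB𝒜))
      refine ⟨Fin.snoc S B, ?_, ?_⟩
      · intro a
        induction a using Fin.lastCases with
        | last => simpa using hB𝒜
        | cast i => simpa using hSmem i
      · intro a b hab
        induction a using Fin.lastCases with
        | last =>
          induction b using Fin.lastCases with
          | last => exact absurd rfl hab
          | cast j =>
            rw [Fin.snoc_last, Fin.snoc_castSucc, Finset.inter_comm]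
            exact hBgood j
        | cast i =>
          induction b using Fin.lastCases with
          | last =>
            rw [Fin.snoc_last, Fin.snoc_castSucc]
            exact hBgood i
          | cast j =>
            rw [Fin.snoc_castSucc, Fin.snoc_castSucc]
            exact hSgood i j (fun h => hab (congrArg Fin.castSucc h))
  obtain ⟨S, hSmem, hSgood⟩ := claim N (le_refl N)
  exact ⟨S, fun a => (Finset.mem_powersetCard.1 (hSmem a)).2, hSgood⟩
end

section
/- Let ρ > 0 and a > 0, and let X and W be independent real random variables with X distributed as N(0,ρ) and W distributed as N(0,a). Then a regular conditional distribution of X given X + W is the Gaussian kernel z ↦ N( (ρ/(ρ+a))·z , ρ·a/(ρ+a) ); that is, the conditional distribution of X given X + W = z is Gaussian with mean ρ·z/(ρ+a) and variance ρ·a/(ρ+a), for almost every z with respect to the law of X + W. -/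
open MeasureTheory ProbabilityTheory Real
open scoped NNReal ENNReal

namespace CondGaussAux

lemma measurable_pdf_param (c : ℝ) (v : ℝ≥0) :
    Measurable fun p : ℝ × ℝ => gaussianPDF (c * p.1) v p.2 := by
  refine Measurable.ennreal_ofReal ?_
  unfold gaussianPDFReal
  fun_prop

lemma measurable_pdf_sub (v : ℝ≥0) :
    Measurable fun p : ℝ × ℝ => gaussianPDF 0 v (p.2 - p.1) := by
  refine Measurable.ennreal_ofReal ?_
  unfold gaussianPDFReal
  fun_prop

lemma pdf_identity (ρ a : ℝ≥0) (hρ : 0 < ρ) (ha : 0 < a) (z x : ℝ) :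
    gaussianPDFReal 0 ρ x * gaussianPDFReal 0 a (z - x)
      = gaussianPDFReal 0 (ρ + a) z
        * gaussianPDFReal ((ρ : ℝ) / ((ρ : ℝ) + a) * z) (ρ * a / (ρ + a)) x := by
  have hρ' : (0:ℝ) < ρ := hρ
  have ha' : (0:ℝ) < a := ha
  have hs : (0:ℝ) < (ρ:ℝ) + a := by linarith
  have hv : ((ρ * a / (ρ + a) : ℝ≥0) : ℝ) = (ρ:ℝ) * a / ((ρ:ℝ) + a) := by push_cast; ring
  simp only [gaussianPDFReal, NNReal.coe_add, hv, sub_zero]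
  rw [mul_mul_mul_comm, mul_mul_mul_comm (√(2 * π * ((ρ:ℝ) + a)))⁻¹]
  congr 1
  · rw [← mul_inv, ← mul_inv, ← Real.sqrt_mul (by positivity), ← Real.sqrt_mul (by positivity)]
    congr 2
    field_simp
  · rw [← Real.exp_add, ← Real.exp_add]
    congr 1
    field_simp
    ring

lemma ennpdf_identity (ρ a : ℝ≥0) (hρ : 0 < ρ) (ha : 0 < a) (z x : ℝ) :
    gaussianPDF 0 ρ x * gaussianPDF 0 a (z - x)
      = gaussianPDF 0 (ρ + a) z
        * gaussianPDF ((ρ : ℝ) / ((ρ : ℝ) + a) * z) (ρ * a / (ρ + a)) x := by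
  simp only [gaussianPDF]
  rw [← ENNReal.ofReal_mul (gaussianPDFReal_nonneg _ _ _),
    ← ENNReal.ofReal_mul (gaussianPDFReal_nonneg _ _ _), pdf_identity ρ a hρ ha z x]

lemma gaussianPDF_sub (x : ℝ) (v : ℝ≥0) (z : ℝ) :
    gaussianPDF x v z = gaussianPDF 0 v (z - x) := by
  rw [gaussianPDF, gaussianPDF, gaussianPDFReal_sub, zero_add]

lemma gaussianPDF_ne_top (m : ℝ) (v : ℝ≥0) (x : ℝ) : gaussianPDF m v x ≠ ⊤ :=
  ENNReal.ofReal_ne_top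

/-- The central double-integral computation. -/
lemma aux_double (ρ a : ℝ≥0) (hρ : 0 < ρ) (ha : 0 < a) (f : ℝ → ℝ → ℝ≥0∞)
    (hf : Measurable (Function.uncurry f)) :
    ∫⁻ x, ∫⁻ z, f z x ∂(gaussianReal x a) ∂(gaussianReal 0 ρ)
      = ∫⁻ z, gaussianPDF 0 (ρ + a) z *
          ∫⁻ x, gaussianPDF ((ρ:ℝ)/((ρ:ℝ)+a) * z) (ρ * a / (ρ + a)) x * f z x := by
  have hρ0 : ρ ≠ 0 := hρ.ne'
  have ha0 : a ≠ 0 := ha.ne'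
  set c : ℝ := (ρ:ℝ)/((ρ:ℝ)+a) with hc
  set v : ℝ≥0 := ρ * a / (ρ + a) with hvdef
  have h1 : ∀ x : ℝ, ∫⁻ z, f z x ∂(gaussianReal x a)
      = ∫⁻ z, gaussianPDF 0 a (z - x) * f z x := by
    intro x
    have hgx : Measurable fun z => f z x := hf.comp measurable_prodMk_right
    rw [gaussianReal_of_var_ne_zero _ ha0,
      lintegral_withDensity_eq_lintegral_mul _ (measurable_gaussianPDF _ _) hgx]
    simp only [Pi.mul_apply]
    refine lintegral_congr fun z => ?_
    rw [gaussianPDF_sub x a z]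
  simp_rw [h1]
  have hg2 : Measurable fun x => ∫⁻ z, gaussianPDF 0 a (z - x) * f z x := by
    refine Measurable.lintegral_prod_right'
      (f := fun p : ℝ × ℝ => gaussianPDF 0 a (p.2 - p.1) * f p.2 p.1) ?_
    exact (measurable_pdf_sub a).mul (hf.comp measurable_swap)
  rw [gaussianReal_of_var_ne_zero _ hρ0,
    lintegral_withDensity_eq_lintegral_mul _ (measurable_gaussianPDF _ _) hg2]
  simp only [Pi.mul_apply]
  calc ∫⁻ x, gaussianPDF 0 ρ x * ∫⁻ z, gaussianPDF 0 a (z - x) * f z x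
      = ∫⁻ x, ∫⁻ z, gaussianPDF 0 (ρ + a) z * (gaussianPDF (c * z) v x * f z x) := by
        refine lintegral_congr fun x => ?_
        rw [← lintegral_const_mul' _ _ (gaussianPDF_ne_top 0 ρ x)]
        refine lintegral_congr fun z => ?_
        rw [← mul_assoc, ennpdf_identity ρ a hρ ha z x, mul_assoc]
    _ = ∫⁻ z, ∫⁻ x, gaussianPDF 0 (ρ + a) z * (gaussianPDF (c * z) v x * f z x) := by
        refine lintegral_lintegral_swap ?_
        refine Measurable.aemeasurable ?_
        exact ((measurable_gaussianPDF 0 (ρ + a)).comp measurable_snd).mul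
          (((measurable_pdf_param c v).comp measurable_swap).mul (hf.comp measurable_swap))
    _ = ∫⁻ z, gaussianPDF 0 (ρ + a) z * ∫⁻ x, gaussianPDF (c * z) v x * f z x := by
        exact lintegral_congr fun z => lintegral_const_mul' _ _ (gaussianPDF_ne_top _ _ _)


noncomputable def gaussKer (c : ℝ) (v : ℝ≥0) : Kernel ℝ ℝ where
  toFun z := gaussianReal (c * z) v
  measurable' := by
    by_cases hv : v = 0
    · simp only [hv, gaussianReal_zero_var]
      exact Measure.measurable_dirac.comp (measurable_const_mul c)
    refine Measure.measurable_of_measurable_coe _ fun s hs => ?_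
    simp_rw [gaussianReal_apply _ hv, ← lintegral_indicator hs]
    have h : Measurable (Function.uncurry fun (z x : ℝ) =>
        s.indicator (gaussianPDF (c * z) v) x) := by
      have he : (Function.uncurry fun (z x : ℝ) => s.indicator (gaussianPDF (c * z) v) x)
          = fun p : ℝ × ℝ => s.indicator (fun _ => (1 : ℝ≥0∞)) p.2
              * ENNReal.ofReal (gaussianPDFReal (c * p.1) v p.2) := by
        ext p
        simp only [Function.uncurry, Set.indicator, gaussianPDF]
        by_cases hp : p.2 ∈ s <;> simp [hp]
      rw [he]
      refine Measurable.mul ((measurable_one.indicator hs).comp measurable_snd) ?_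
      refine Measurable.ennreal_ofReal ?_
      unfold gaussianPDFReal
      fun_prop
    exact h.lintegral_prod_right'

lemma gaussKer_apply (c : ℝ) (v : ℝ≥0) (z : ℝ) : gaussKer c v z = gaussianReal (c * z) v := rfl

instance (c : ℝ) (v : ℝ≥0) : IsMarkovKernel (gaussKer c v) :=
  ⟨fun z => by rw [gaussKer_apply]; infer_instance⟩

lemma map_eq_compProd (ρ a : ℝ≥0) (hρ : 0 < ρ) (ha : 0 < a) :
    (((gaussianReal 0 ρ).prod (gaussianReal 0 a)).map (fun ω : ℝ × ℝ => (ω.1 + ω.2, ω.1)))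
      = (((gaussianReal 0 ρ).prod (gaussianReal 0 a)).map (fun ω : ℝ × ℝ => ω.1 + ω.2))
        ⊗ₘ gaussKer ((ρ:ℝ)/((ρ:ℝ)+a)) (ρ * a / (ρ + a)) := by
  have hv : (ρ * a / (ρ + a) : ℝ≥0) ≠ 0 := by simp [div_eq_zero_iff, hρ.ne', ha.ne']
  set c : ℝ := (ρ:ℝ)/((ρ:ℝ)+a) with hc
  set v : ℝ≥0 := ρ * a / (ρ + a) with hvdef
  have hT : Measurable (fun ω : ℝ × ℝ => (ω.1 + ω.2, ω.1)) := by fun_prop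
  have hS : Measurable (fun ω : ℝ × ℝ => ω.1 + ω.2) := by fun_prop
  ext s hs
  have hind : Measurable (s.indicator (1 : ℝ × ℝ → ℝ≥0∞)) := measurable_one.indicator hs
  -- LHS
  have hmapmx : ∀ (x : ℝ) (g : ℝ → ℝ≥0∞), Measurable g →
      ∫⁻ w, g (x + w) ∂(gaussianReal 0 a) = ∫⁻ z, g z ∂(gaussianReal x a) := by
    intro x g hg
    rw [← zero_add x, ← gaussianReal_map_const_add (μ := 0) (v := a) x,
      lintegral_map hg (measurable_const_add x), zero_add]
  have hlhs : (((gaussianReal 0 ρ).prod (gaussianReal 0 a)).map (fun ω : ℝ × ℝ => (ω.1 + ω.2, ω.1))) s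
      = ∫⁻ x, ∫⁻ z, s.indicator 1 (z, x) ∂(gaussianReal x a) ∂(gaussianReal 0 ρ) := by
    rw [Measure.map_apply hT hs, ← lintegral_indicator_one (hT hs)]
    have : ∫⁻ p, ((fun ω : ℝ × ℝ => (ω.1 + ω.2, ω.1)) ⁻¹' s).indicator 1 p ∂((gaussianReal 0 ρ).prod (gaussianReal 0 a))
        = ∫⁻ p : ℝ × ℝ, s.indicator 1 (p.1 + p.2, p.1) ∂((gaussianReal 0 ρ).prod (gaussianReal 0 a)) := by
      refine lintegral_congr fun p => ?_
      by_cases h : (p.1 + p.2, p.1) ∈ s <;> simp [Set.indicator, h]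
    have hfm : AEMeasurable (fun p : ℝ × ℝ => s.indicator 1 (p.1 + p.2, p.1)) ((gaussianReal 0 ρ).prod (gaussianReal 0 a)) :=
      (hind.comp hT).aemeasurable
    rw [this, lintegral_prod (fun p : ℝ × ℝ => s.indicator 1 (p.1 + p.2, p.1)) hfm]
    refine lintegral_congr fun x => ?_
    exact hmapmx x (fun z => s.indicator 1 (z, x))
      (hind.comp (measurable_id.prodMk measurable_const))
  have mG : Measurable fun z => gaussKer c v z (Prod.mk z ⁻¹' s) :=
    Kernel.measurable_kernel_prodMk_left hs
  have hrhs : ((((gaussianReal 0 ρ).prod (gaussianReal 0 a)).map (fun ω : ℝ × ℝ => ω.1 + ω.2)) ⊗ₘ gaussKer c v) s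
      = ∫⁻ x, ∫⁻ z, gaussKer c v z (Prod.mk z ⁻¹' s) ∂(gaussianReal x a)
          ∂(gaussianReal 0 ρ) := by
    have hGm : AEMeasurable
        (fun p : ℝ × ℝ => gaussKer c v (p.1 + p.2) (Prod.mk (p.1 + p.2) ⁻¹' s)) ((gaussianReal 0 ρ).prod (gaussianReal 0 a)) :=
      (mG.comp hS).aemeasurable
    rw [Measure.compProd_apply hs, lintegral_map mG hS, lintegral_prod (fun p : ℝ × ℝ => gaussKer c v (p.1 + p.2) (Prod.mk (p.1 + p.2) ⁻¹' s)) hGm]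
    exact lintegral_congr fun x => hmapmx x _ mG
  have hu1 : Measurable (Function.uncurry fun (z x : ℝ) => s.indicator 1 (z, x)) :=
    hind.comp (measurable_fst.prodMk measurable_snd)
  have hu2 : Measurable
      (Function.uncurry fun (z _ : ℝ) => gaussKer c v z (Prod.mk z ⁻¹' s)) :=
    mG.comp measurable_fst
  rw [hlhs, hrhs, aux_double ρ a hρ ha _ hu1, aux_double ρ a hρ ha _ hu2]
  refine lintegral_congr fun z => ?_
  congr 1
  -- inner integrals agree
  have h1 : ∫⁻ x, gaussianPDF (c * z) v x * s.indicator 1 (z, x)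
      = gaussKer c v z (Prod.mk z ⁻¹' s) := by
    have : ∀ x, gaussianPDF (c * z) v x * s.indicator 1 (z, x)
        = (Prod.mk z ⁻¹' s).indicator (gaussianPDF (c * z) v) x := by
      intro x
      by_cases h : (z, x) ∈ s <;> simp [Set.indicator, h]
    simp_rw [this]
    rw [lintegral_indicator (measurable_prodMk_left hs), gaussKer_apply,
      gaussianReal_apply _ hv]
  have h2 : ∫⁻ x, gaussianPDF (c * z) v x * gaussKer c v z (Prod.mk z ⁻¹' s)
      = gaussKer c v z (Prod.mk z ⁻¹' s) := by
    rw [lintegral_mul_const' _ _ (measure_ne_top _ _), lintegral_gaussianPDF_eq_one _ hv,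
      one_mul]
  rw [h1, h2]


end CondGaussAux

/-- Let `X ~ N(0,ρ)` and `W ~ N(0,a)` be independent (modeled as the two coordinates of the
product measure on `ℝ × ℝ`). Then the regular conditional distribution of `X` given `X + W`
is the Gaussian kernel `z ↦ N(ρz/(ρ+a), ρa/(ρ+a))`, for almost every `z` with respect to the
law of `X + W`. -/
theorem condDistrib_gaussian_given_sum (ρ a : ℝ≥0) (hρ : 0 < ρ) (ha : 0 < a) :
    ∀ᵐ z ∂(((gaussianReal 0 ρ).prod (gaussianReal 0 a)).map (fun ω : ℝ × ℝ => ω.1 + ω.2)),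
      condDistrib (fun ω : ℝ × ℝ => ω.1) (fun ω : ℝ × ℝ => ω.1 + ω.2)
          ((gaussianReal 0 ρ).prod (gaussianReal 0 a)) z
        = gaussianReal (((ρ : ℝ) / ((ρ : ℝ) + (a : ℝ))) * z) (ρ * a / (ρ + a)) := by
  have h := condDistrib_ae_eq_of_measure_eq_compProd_of_measurable
    (μ := (gaussianReal 0 ρ).prod (gaussianReal 0 a))
    (X := fun ω : ℝ × ℝ => ω.1 + ω.2) (Y := fun ω : ℝ × ℝ => ω.1)
    (by fun_prop) measurable_fst
    (κ := CondGaussAux.gaussKer ((ρ:ℝ)/((ρ:ℝ)+a)) (ρ * a / (ρ + a)))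
    (CondGaussAux.map_eq_compProd ρ a hρ ha)
  filter_upwards [h] with z hz
  rw [hz, CondGaussAux.gaussKer_apply]
end

section
/- Let n be a positive integer, let ρ₁, ..., ρ_n > 0, and let G₁, ..., G_n be independent random variables with G_i distributed as N(0, ρ_i). Then for every fixed μ ∈ ℝⁿ and every a > 0, Pr( Σ_{i=1}^n (G_i + μ_i)² ≤ a ) ≤ Pr( Σ_{i=1}^n G_i² ≤ a ). -/
open MeasureTheory ProbabilityTheory Real
open scoped NNReal

set_option maxHeartbeats 1000000

lemma pdf_anti (v : ℝ≥0) {x y : ℝ} (h : |y| ≤ |x|) :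
    gaussianPDFReal 0 v x ≤ gaussianPDFReal 0 v y := by
  unfold gaussianPDFReal
  simp only [sub_zero]
  by_cases hv : (v : ℝ) = 0
  · simp [hv]
  have hv' : (0:ℝ) < v := lt_of_le_of_ne v.coe_nonneg (Ne.symm hv)
  have hsq : y ^ 2 ≤ x ^ 2 := by
    rw [← sq_abs y, ← sq_abs x]
    exact pow_le_pow_left₀ (abs_nonneg y) h 2
  have h2v : (0:ℝ) < 2 * v := by positivity
  have hdiv : -x ^ 2 / (2 * v) ≤ -y ^ 2 / (2 * v) :=
    (div_le_div_iff_of_pos_right h2v).2 (neg_le_neg hsq)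
  exact mul_le_mul_of_nonneg_left (Real.exp_le_exp.2 hdiv)
    (inv_nonneg.2 (Real.sqrt_nonneg _))

lemma interval_shift_le_aux (v : ℝ≥0) {b s : ℝ} (hb : 0 ≤ b) (hs : 0 ≤ s) :
    (∫ x in (b - s)..(b + s), gaussianPDFReal 0 v x)
      ≤ ∫ x in (-s)..s, gaussianPDFReal 0 v x := by
  have hint : ∀ a c : ℝ, IntervalIntegrable (gaussianPDFReal 0 v) volume a c :=
    fun a c => (integrable_gaussianPDFReal 0 v).intervalIntegrable
  have h1 : (∫ x in (-s)..(b + s), gaussianPDFReal 0 v x)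
      = (∫ x in (-s)..s, gaussianPDFReal 0 v x)
        + ∫ x in s..(b + s), gaussianPDFReal 0 v x :=
    (intervalIntegral.integral_add_adjacent_intervals (hint _ _) (hint _ _)).symm
  have h2 : (∫ x in (-s)..(b + s), gaussianPDFReal 0 v x)
      = (∫ x in (-s)..(b - s), gaussianPDFReal 0 v x)
        + ∫ x in (b - s)..(b + s), gaussianPDFReal 0 v x :=
    (intervalIntegral.integral_add_adjacent_intervals (hint _ _) (hint _ _)).symm
  have key : (∫ x in s..(b + s), gaussianPDFReal 0 v x)
      ≤ ∫ x in (-s)..(b - s), gaussianPDFReal 0 v x := by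
    have ht : (∫ x in s..(b + s), gaussianPDFReal 0 v (x - 2 * s))
        = ∫ x in (-s)..(b - s), gaussianPDFReal 0 v x := by
      rw [intervalIntegral.integral_comp_sub_right]
      congr 1 <;> ring
    rw [← ht]
    refine intervalIntegral.integral_mono_on (by linarith) (hint _ _)
      (((integrable_gaussianPDFReal 0 v).comp_sub_right (2 * s)).intervalIntegrable) ?_
    intro x hx
    refine pdf_anti v ?_
    have hx1 : s ≤ x := hx.1
    have hx0 : 0 ≤ x := le_trans hs hx1
    rw [abs_of_nonneg hx0, abs_le]
    constructor <;> linarith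
  linarith

lemma interval_shift_le (v : ℝ≥0) (b : ℝ) {s : ℝ} (hs : 0 ≤ s) :
    (∫ x in (b - s)..(b + s), gaussianPDFReal 0 v x)
      ≤ ∫ x in (-s)..s, gaussianPDFReal 0 v x := by
  rcases le_or_gt 0 b with hb | hb
  · exact interval_shift_le_aux v hb hs
  · have heven : ∀ x : ℝ, gaussianPDFReal 0 v (-x) = gaussianPDFReal 0 v x := by
      intro x; unfold gaussianPDFReal; ring_nf
    have h := intervalIntegral.integral_comp_neg (a := b - s) (b := b + s)
      (f := gaussianPDFReal 0 v)
    simp_rw [heven] at h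
    have hEq : (∫ x in (b - s)..(b + s), gaussianPDFReal 0 v x)
        = ∫ x in (-b - s)..(-b + s), gaussianPDFReal 0 v x := by
      rw [h]; congr 1 <;> ring
    rw [hEq]
    exact interval_shift_le_aux v (by linarith) hs

/-- 1D: gaussian measure of shifted sublevel set of the square is at most centered one. -/
lemma gauss_shift_le (v : ℝ≥0) (hv : v ≠ 0) (c t : ℝ) :
    gaussianReal 0 v {x | (x + c) ^ 2 ≤ t} ≤ gaussianReal 0 v {x | x ^ 2 ≤ t} := by
  rcases lt_or_ge t 0 with ht | ht
  · have : {x : ℝ | (x + c) ^ 2 ≤ t} = ∅ := by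
      ext x; simp only [Set.mem_setOf_eq, Set.mem_empty_iff_false, iff_false, not_le]
      exact lt_of_lt_of_le ht (sq_nonneg _)
    rw [this]; simp
  · set s := Real.sqrt t with hsdef
    have hs : 0 ≤ s := Real.sqrt_nonneg t
    have hss : s ^ 2 = t := Real.sq_sqrt ht
    have habs : ∀ x : ℝ, x ^ 2 ≤ t ↔ -s ≤ x ∧ x ≤ s := by
      intro x
      rw [← hss]
      exact ⟨fun h => abs_le_of_sq_le_sq' h hs, fun h => sq_le_sq' h.1 h.2⟩
    have hset1 : {x : ℝ | (x + c) ^ 2 ≤ t} = Set.Icc (-c - s) (-c + s) := by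
      ext x; rw [Set.mem_setOf_eq, habs, Set.mem_Icc]
      constructor <;> intro h <;> exact ⟨by linarith [h.1], by linarith [h.2]⟩
    have hset2 : {x : ℝ | x ^ 2 ≤ t} = Set.Icc (-s) s := by
      ext x; rw [Set.mem_setOf_eq, habs, Set.mem_Icc]
    rw [hset1, hset2, gaussianReal_apply_eq_integral 0 hv, gaussianReal_apply_eq_integral 0 hv]
    refine ENNReal.ofReal_le_ofReal ?_
    have hicc : ∀ l u : ℝ, l ≤ u → (∫ x in Set.Icc l u, gaussianPDFReal 0 v x)
        = ∫ x in l..u, gaussianPDFReal 0 v x := by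
      intro l u hlu
      rw [intervalIntegral.integral_of_le hlu, integral_Icc_eq_integral_Ioc]
    rw [hicc _ _ (by linarith), hicc _ _ (by linarith)]
    have h := interval_shift_le v (-c) hs
    have e1 : -c - s = -c - s := rfl
    simpa using h

lemma step_lemma (m : ℕ) (ρ : Fin (m + 1) → ℝ≥0) (hρ : ∀ i, ρ i ≠ 0)
    (ν : Fin (m + 1) → ℝ) (j : Fin (m + 1)) (a : ℝ) :
    (Measure.pi fun i => gaussianReal 0 (ρ i)) {x | ∑ i, (x i + ν i) ^ 2 ≤ a}
      ≤ (Measure.pi fun i => gaussianReal 0 (ρ i))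
          {x | ∑ i, (x i + Function.update ν j 0 i) ^ 2 ≤ a} := by
  classical
  set e := MeasurableEquiv.piFinSuccAbove (fun _ : Fin (m + 1) => ℝ) j with he
  have hmp := measurePreserving_piFinSuccAbove (fun i => gaussianReal 0 (ρ i)) j
  -- sets in the product space
  set T : (Fin (m + 1) → ℝ) → Set (ℝ × (Fin m → ℝ)) := fun κ =>
    {p | (p.1 + κ j) ^ 2 + ∑ k, (p.2 k + κ (j.succAbove k)) ^ 2 ≤ a} with hT
  have hTmeas : ∀ κ, MeasurableSet (T κ) := by
    intro κ
    apply measurableSet_le _ measurable_const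
    apply Measurable.add
    · exact ((measurable_fst.add_const _).pow_const 2)
    · exact Finset.measurable_sum _ fun k _ =>
        ((measurable_snd.comp measurable_id).eval.add_const _).pow_const 2
  have hSeq : ∀ κ : Fin (m + 1) → ℝ,
      {x : Fin (m + 1) → ℝ | ∑ i, (x i + κ i) ^ 2 ≤ a} = e ⁻¹' (T κ) := by
    intro κ
    ext x
    simp only [Set.mem_setOf_eq, Set.mem_preimage, hT]
    rw [Fin.sum_univ_succAbove (fun i => (x i + κ i) ^ 2) j]
    rfl
  have hμ : ∀ κ : Fin (m + 1) → ℝ,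
      (Measure.pi fun i => gaussianReal 0 (ρ i)) {x | ∑ i, (x i + κ i) ^ 2 ≤ a}
        = ((gaussianReal 0 (ρ j)).prod
            (Measure.pi fun k => gaussianReal 0 (ρ (j.succAbove k)))) (T κ) := by
    intro κ
    rw [hSeq κ]
    exact hmp.measure_preimage (hTmeas κ).nullMeasurableSet
  rw [hμ ν, hμ (Function.update ν j 0)]
  rw [Measure.prod_apply_symm (hTmeas _), Measure.prod_apply_symm (hTmeas _)]
  refine lintegral_mono fun z => ?_
  have hs1 : ((fun y => (y, z)) ⁻¹' T ν)
      = {y : ℝ | (y + ν j) ^ 2 ≤ a - ∑ k, (z k + ν (j.succAbove k)) ^ 2} := by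
    ext y
    simp only [Set.mem_preimage, Set.mem_setOf_eq, hT]
    constructor <;> intro h <;> linarith
  have hupd_j : Function.update ν j 0 j = 0 := Function.update_self j 0 ν
  have hupd_k : ∀ k, Function.update ν j 0 (j.succAbove k) = ν (j.succAbove k) :=
    fun k => Function.update_of_ne (Fin.succAbove_ne j k) 0 ν
  have hs2 : ((fun y => (y, z)) ⁻¹' T (Function.update ν j 0))
      = {y : ℝ | y ^ 2 ≤ a - ∑ k, (z k + ν (j.succAbove k)) ^ 2} := by
    ext y
    simp only [Set.mem_preimage, Set.mem_setOf_eq, hT, hupd_j, hupd_k, add_zero]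
    constructor <;> intro h <;> linarith
  rw [hs1, hs2]
  exact gauss_shift_le (ρ j) (hρ j) (ν j) _

/-- For independent `G_i ~ N(0,ρ_i)` (modeled by the product measure on `ℝⁿ`), any fixed shift
`μ ∈ ℝⁿ` and any `a > 0`: `Pr(Σ (G_i + μ_i)² ≤ a) ≤ Pr(Σ G_i² ≤ a)`. -/
theorem shifted_gaussian_ball_le (n : ℕ) (hn : 0 < n) (ρ : Fin n → ℝ≥0)
    (hρ : ∀ i, 0 < ρ i) (μ : Fin n → ℝ) (a : ℝ) (ha : 0 < a) :
    (Measure.pi fun i => gaussianReal 0 (ρ i)) {x | ∑ i, (x i + μ i) ^ 2 ≤ a}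
      ≤ (Measure.pi fun i => gaussianReal 0 (ρ i)) {x | ∑ i, (x i) ^ 2 ≤ a} := by
  classical
  obtain ⟨m, rfl⟩ : ∃ m, n = m + 1 := ⟨n - 1, (Nat.succ_pred_eq_of_pos hn).symm⟩
  have hρ' : ∀ i, ρ i ≠ 0 := fun i => (hρ i).ne'
  have main : ∀ s : Finset (Fin (m + 1)), ∀ ν : Fin (m + 1) → ℝ,
      (∀ i ∉ s, ν i = 0) →
      (Measure.pi fun i => gaussianReal 0 (ρ i)) {x | ∑ i, (x i + ν i) ^ 2 ≤ a}
        ≤ (Measure.pi fun i => gaussianReal 0 (ρ i)) {x | ∑ i, (x i) ^ 2 ≤ a} := by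
    intro s
    induction s using Finset.induction_on with
    | empty =>
      intro ν hν
      have hν0 : ∀ i, ν i = 0 := fun i => hν i (Finset.notMem_empty i)
      have : {x : Fin (m + 1) → ℝ | ∑ i, (x i + ν i) ^ 2 ≤ a}
          = {x | ∑ i, (x i) ^ 2 ≤ a} := by
        ext x; simp [hν0]
      rw [this]
    | @insert j s' hj ih =>
      intro ν hν
      refine (step_lemma m ρ hρ' ν j a).trans (ih (Function.update ν j 0) ?_)
      intro i hi
      by_cases hij : i = j
      · subst hij; exact Function.update_self i 0 ν
      · rw [Function.update_of_ne hij]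
        exact hν i (by simp [hij, hi])
  exact main Finset.univ μ (fun i hi => absurd (Finset.mem_univ i) hi)
end
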